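/- arXiv:math/0301252 — 10 statements merged into one kernel-verified Lean document; each statement's English description precedes it below -/
import Mathlib

section
/- For any prime p ≥ 5, the sum H(1; p-1) = ∑_{k=1}^{p-1} 1/k is congruent to 0 modulo p² (as a rational number whose numerator in lowest terms is divisible by p²). -/
/-- Multiple harmonic sum helper: exponent list, exclusive lower bound, upper bound. -/
def Haux : List ℕ → ℕ → ℕ → ℚ
  | [], _, _ => 1
  | a :: t, m, n => ∑ k ∈ Finset.Ioc m n, (1 / (k : ℚ) ^ a) * Haux t k n

/-- Multiple harmonic sum `H(s₁,…,s_l; n) = ∑_{1 ≤ k₁ < ⋯ < k_l ≤ n} k₁^{-s₁}⋯k_l^{-s_l}`. -/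
def H (s : List ℕ) (n : ℕ) : ℚ := Haux s 0 n
open Finset Nat

private lemma prod_Ioc_id_eq_factorial (n : ℕ) : (∏ i ∈ Finset.Ioc 0 n, i) = n ! := by
  have : Finset.Ioc 0 n = Finset.Ico 1 (n+1) := by ext x; simp [Nat.lt_succ_iff]; omega
  rw [this]; exact Finset.prod_Ico_id_eq_factorial n

private lemma pair_dvd_factorial {p k : ℕ} (hodd : p % 2 = 1) (h1 : 0 < k) (h2 : k ≤ p - 1) :
    k * (p - k) ∣ (p - 1)! := by
  have hne : k ≠ p - k := by omega
  have hsub : ({k, p - k} : Finset ℕ) ⊆ Finset.Ioc 0 (p - 1) := by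
    intro x hx
    simp only [Finset.mem_insert, Finset.mem_singleton] at hx
    rcases hx with rfl | rfl <;> simp [Finset.mem_Ioc] <;> omega
  calc k * (p - k) = ∏ i ∈ ({k, p - k} : Finset ℕ), i := (Finset.prod_pair (f:=id) hne).symm
    _ ∣ ∏ i ∈ Finset.Ioc 0 (p - 1), i := Finset.prod_dvd_prod_of_subset _ _ _ hsub
    _ = (p - 1)! := prod_Ioc_id_eq_factorial _

private lemma key_term {p k : ℕ} (hodd : p % 2 = 1) (h1 : 0 < k) (h2 : k ≤ p - 1) :
    (p - 1)! / k + (p - 1)! / (p - k) = p * ((p - 1)! / (k * (p - k))) := by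
  have hk : k ∣ (p - 1)! := Nat.dvd_factorial h1 h2
  have hq : (p - k) ∣ (p - 1)! := Nat.dvd_factorial (by omega) (by omega)
  have hkq : k * (p - k) ∣ (p - 1)! := pair_dvd_factorial hodd h1 h2
  have hpos : 0 < k * (p - k) := by
    have : 0 < p - k := by omega
    positivity
  apply Nat.eq_of_mul_eq_mul_right hpos
  rw [add_mul]
  have e1 : (p - 1)! / k * (k * (p - k)) = (p - 1)! * (p - k) := by
    rw [← mul_assoc, Nat.div_mul_cancel hk]
  have e2 : (p - 1)! / (p - k) * (k * (p - k)) = (p - 1)! * k := by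
    rw [mul_comm k (p - k), ← mul_assoc, Nat.div_mul_cancel hq]
  rw [e1, e2, mul_assoc, Nat.div_mul_cancel hkq, ← Nat.mul_add, mul_comm p _]
  have h4 : p - k + k = p := by omega
  rw [h4]
/-- Wolstenholme's theorem: for a prime p ≥ 5, p² divides the numerator of
H(1; p−1) = ∑_{k=1}^{p-1} 1/k in lowest terms. -/
theorem wolstenholme (p : ℕ) (hp : p.Prime) (h5 : 5 ≤ p) :
    (p : ℤ) ^ 2 ∣ (H [1] (p - 1)).num := by
  haveI : Fact p.Prime := ⟨hp⟩
  have hodd : p % 2 = 1 := Nat.Prime.eq_two_or_odd hp |>.resolve_left (by omega)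
  set n := p - 1 with hn
  set A : ℕ := ∑ k ∈ Finset.Ioc 0 n, (p - 1)! / k with hAdef
  have hrev : A = ∑ k ∈ Finset.Ioc 0 n, (p - 1)! / (p - k) := by
    rw [hAdef]
    refine Finset.sum_nbij' (fun k => p - k) (fun k => p - k) ?_ ?_ ?_ ?_ ?_
    · intro a ha; simp only [Finset.mem_Ioc] at ha ⊢; omega
    · intro a ha; simp only [Finset.mem_Ioc] at ha ⊢; omega
    · intro a ha; simp only [Finset.mem_Ioc] at ha; show p - (p - a) = a; omega
    · intro a ha; simp only [Finset.mem_Ioc] at ha; show p - (p - a) = a; omega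
    · intro a ha; simp only [Finset.mem_Ioc] at ha
      show (p - 1)! / a = (p - 1)! / (p - (p - a))
      congr 1; omega
  set B : ℕ := ∑ k ∈ Finset.Ioc 0 n, (p - 1)! / (k * (p - k)) with hBdef
  have h2A : 2 * A = p * B := by
    have h2 : 2 * A = A + A := by ring
    rw [h2, hBdef]
    nth_rewrite 2 [hrev]
    rw [hAdef, ← Finset.sum_add_distrib, Finset.mul_sum]
    apply Finset.sum_congr rfl
    intro k hk
    simp only [Finset.mem_Ioc] at hk
    exact key_term hodd hk.1 (by omega)
  -- p ∣ B
  have hBmod : (B : ZMod p) = 0 := by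
    rw [hBdef]
    rw [Nat.cast_sum]
    have step : ∀ k ∈ Finset.Ioc 0 n, (((p - 1)! / (k * (p - k)) : ℕ) : ZMod p)
        = -(((p - 1)! : ℕ) : ZMod p) * ((k : ZMod p)⁻¹) ^ 2 := by
      intro k hk
      simp only [Finset.mem_Ioc] at hk
      have hk2 : k ≤ p - 1 := by omega
      have hkd : k * (p - k) ∣ (p - 1)! := pair_dvd_factorial hodd hk.1 hk2
      have hk0 : ((k : ℕ) : ZMod p) ≠ 0 := by
        rw [Ne, ZMod.natCast_eq_zero_iff]
        intro h; have := Nat.le_of_dvd hk.1 h; omega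
      have hpk : (((p - k : ℕ)) : ZMod p) = -(k : ZMod p) := by
        have h3 : ((p - k : ℕ) : ZMod p) + (k : ZMod p) = ((p : ℕ) : ZMod p) := by
          rw [← Nat.cast_add]; congr 1; omega
        rw [ZMod.natCast_self] at h3
        exact eq_neg_of_add_eq_zero_left h3
      have hd0 : (((k * (p - k) : ℕ)) : ZMod p) ≠ 0 := by
        push_cast
        rw [hpk, mul_neg, neg_ne_zero]
        exact mul_ne_zero hk0 hk0
      rw [Nat.cast_div hkd hd0]
      push_cast
      rw [hpk]
      field_simp
    rw [Finset.sum_congr rfl step, ← Finset.mul_sum]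
    have hsum : ∑ k ∈ Finset.Ioc 0 n, ((k : ZMod p)⁻¹) ^ 2 = 0 := by
      have e1 : ∑ k ∈ Finset.Ioc 0 n, ((k : ZMod p)⁻¹) ^ 2
          = ∑ x ∈ Finset.univ.erase (0 : ZMod p), (x⁻¹) ^ 2 := by
        refine Finset.sum_nbij' (fun k => ((k : ℕ) : ZMod p)) (fun x => x.val) ?_ ?_ ?_ ?_ ?_
        · intro a ha
          simp only [Finset.mem_Ioc] at ha
          simp only [Finset.mem_erase, Finset.mem_univ, and_true]
          rw [Ne, ZMod.natCast_eq_zero_iff]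
          intro h; have := Nat.le_of_dvd ha.1 h; omega
        · intro x hx
          simp only [Finset.mem_erase, Finset.mem_univ, and_true] at hx
          simp only [Finset.mem_Ioc]
          have hv : x.val < p := ZMod.val_lt x
          have hv0 : x.val ≠ 0 := fun h => hx ((ZMod.val_eq_zero x).mp h)
          omega
        · intro a ha
          simp only [Finset.mem_Ioc] at ha
          exact ZMod.val_cast_of_lt (by omega)
        · intro x _
          exact ZMod.natCast_zmod_val x
        · intro a _
          rfl
      have e2 : ∑ x ∈ Finset.univ.erase (0 : ZMod p), (x⁻¹) ^ 2
          = ∑ x : ZMod p, (x⁻¹) ^ 2 := by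
        rw [← Finset.add_sum_erase _ _ (Finset.mem_univ (0 : ZMod p))]
        simp
      have e3 : ∑ x : ZMod p, ((x⁻¹ : ZMod p)) ^ 2 = ∑ x : ZMod p, x ^ 2 := by
        refine (Fintype.sum_bijective (fun x : ZMod p => x⁻¹)
          (Function.Involutive.bijective (fun a => inv_inv a)) _ _ (fun x => ?_)).symm
        rw [inv_inv]
      have e4 : ∑ x : ZMod p, (x : ZMod p) ^ 2 = 0 := by
        apply FiniteField.sum_pow_lt_card_sub_one
        rw [ZMod.card]; omega
      rw [e1, e2, e3, e4]
    rw [hsum, mul_zero]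
  have hB : p ∣ B := (ZMod.natCast_eq_zero_iff B p).mp hBmod
  have hp2A : p ^ 2 ∣ 2 * A := by
    obtain ⟨c, hc⟩ := hB
    exact ⟨c, by rw [h2A, hc]; ring⟩
  have hpA : p ^ 2 ∣ A := by
    refine Nat.Coprime.dvd_of_dvd_mul_left ?_ hp2A
    exact Nat.Coprime.pow_left _ ((Nat.coprime_primes hp Nat.prime_two).mpr (by omega))
  -- rational part
  have hH : H [1] n = ∑ k ∈ Finset.Ioc 0 n, 1 / (k : ℚ) := by simp [H, Haux]
  have hfa : ((p - 1)! : ℚ) * H [1] n = (A : ℚ) := by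
    rw [hH, Finset.mul_sum, hAdef, Nat.cast_sum]
    apply Finset.sum_congr rfl
    intro k hk
    simp only [Finset.mem_Ioc] at hk
    have hd : k ∣ (p - 1)! := Nat.dvd_factorial hk.1 (by omega)
    rw [Nat.cast_div hd (by exact_mod_cast Nat.pos_iff_ne_zero.mp hk.1), mul_one_div]
  set q : ℚ := H [1] n with hq
  have hint : ((p - 1)! : ℤ) * q.num = (A : ℤ) * q.den := by
    have h1 : ((p - 1)! : ℚ) * q * q.den = (A : ℚ) * q.den := by rw [hfa]
    rw [mul_assoc, Rat.mul_den_eq_num] at h1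
    exact_mod_cast h1
  have hdvd : (p : ℤ) ^ 2 ∣ ((p - 1)! : ℤ) * q.num := by
    rw [hint]
    exact Dvd.dvd.mul_right (by exact_mod_cast hpA) _
  have hcop : Nat.Coprime (p ^ 2) ((p - 1)!) := by
    refine Nat.Coprime.pow_left _ ((Nat.Prime.coprime_iff_not_dvd hp).mpr ?_)
    intro hdvd'
    have := (Nat.Prime.dvd_factorial hp).mp hdvd'
    omega
  have hnat : p ^ 2 ∣ (p - 1)! * q.num.natAbs := by
    have h6 := Int.natAbs_dvd_natAbs.mpr hdvd
    simpa [Int.natAbs_mul, Int.natAbs_pow] using h6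
  have hfin : p ^ 2 ∣ q.num.natAbs := Nat.Coprime.dvd_of_dvd_mul_left hcop hnat
  have : ((p ^ 2 : ℕ) : ℤ) ∣ (q.num.natAbs : ℤ) := Int.natCast_dvd_natCast.mpr hfin
  rw [Int.dvd_natAbs] at this
  exact_mod_cast this
end

section
/- For any odd prime p and odd positive integer s such that (p-1) ∤ s and (p-1) ∤ (s+1), the sum H(s; p-1) = ∑_{k=1}^{p-1} 1/k^s has p-adic valuation at least 2. -/
open Finset


/-- Binomial expansion mod c² for odd exponent. -/
lemma pow_sub_of_sq_zero {R : Type*} [CommRing R] (a c : R) (hc : c ^ 2 = 0)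
    {s : ℕ} (hsodd : Odd s) :
    (c - a) ^ s = (s : R) * c * a ^ (s - 1) - a ^ s := by
  obtain ⟨m, rfl⟩ := hsodd
  have h : c - a = c + (-a) := by ring
  rw [h, add_pow]
  have h1 : 2 * m + 1 + 1 = (2 * m) + 1 + 1 := by ring
  rw [h1, Finset.sum_range_succ', Finset.sum_range_succ']
  have hz : ∀ i ∈ Finset.range (2 * m), c ^ (i + 1 + 1) * (-a) ^ (2 * m + 1 - (i + 1 + 1)) *
      ((2 * m + 1).choose (i + 1 + 1) : R) = 0 := by
    intro i _
    have : c ^ (i + 1 + 1) = c ^ 2 * c ^ i := by ring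
    rw [this, hc]; ring
  rw [Finset.sum_eq_zero hz]
  have hodd : Odd (2 * m + 1) := ⟨m, by ring⟩
  have heven : Even (2 * m) := ⟨m, by ring⟩
  simp [hodd.neg_pow, heven.neg_pow, Nat.choose_one_right]
  push_cast
  ring


lemma sum_pow_eq_zero {K : Type*} [Field K] [Fintype K] [DecidableEq K] {i : ℕ} (hi : i ≠ 0)
    (h : ¬ (Fintype.card K - 1) ∣ i) : ∑ x : K, x ^ i = 0 := by
  let φ : Kˣ ↪ K := ⟨fun x ↦ x, Units.val_injective⟩
  have huniv : (univ.map φ) = univ \ {0} := by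
    ext x
    simpa only [mem_map, mem_univ, Function.Embedding.coeFn_mk, true_and, mem_sdiff,
      mem_singleton, φ] using (show (∃ a : Kˣ, (a : K) = x) ↔ ¬x = 0 from isUnit_iff_ne_zero)
  calc ∑ x : K, x ^ i
      = ∑ x ∈ univ \ {(0 : K)}, x ^ i := by
        rw [← Finset.sum_sdiff ({0} : Finset K).subset_univ, Finset.sum_singleton,
          zero_pow hi, add_zero]
    _ = ∑ x : Kˣ, ((x : K)) ^ i := by rw [← huniv, Finset.sum_map]; rfl
    _ = 0 := by rw [FiniteField.sum_pow_units K i, if_neg h]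

lemma pmul_eq_zero (p : ℕ) [NeZero p] (x : ZMod (p ^ 2))
    (h : ZMod.castHom (dvd_pow_self p two_ne_zero) (ZMod p) x = 0) :
    (p : ZMod (p ^ 2)) * x = 0 := by
  have hx : ((x.val : ℕ) : ZMod (p ^ 2)) = x := ZMod.natCast_rightInverse x
  rw [← hx] at h ⊢
  rw [map_natCast] at h
  rw [ZMod.natCast_eq_zero_iff] at h
  obtain ⟨t, ht⟩ := h
  have hpp : ((p ^ 2 : ℕ) : ZMod (p ^ 2)) = 0 := ZMod.natCast_self _
  rw [ht]
  push_cast at hpp ⊢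
  calc (p : ZMod (p ^ 2)) * ((p : ZMod (p^2)) * t) = (p : ZMod (p^2)) ^ 2 * t := by ring
    _ = 0 := by rw [hpp]; ring

lemma key_sum_zero (p s : ℕ) (hp : p.Prime) (hpodd : Odd p) (hsodd : Odd s)
    (h2 : ¬ (p - 1) ∣ (s + 1)) :
    ∑ k ∈ Finset.Ioc 0 (p - 1), ((k : ZMod (p ^ 2))⁻¹) ^ s = 0 := by
  haveI : Fact p.Prime := ⟨hp⟩
  haveI : NeZero (p ^ 2) := ⟨pow_ne_zero 2 hp.ne_zero⟩
  have hp2 : 2 ≤ p := hp.two_le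
  have hp2R : ((p : ZMod (p ^ 2))) ^ 2 = 0 := by
    have := ZMod.natCast_self (p ^ 2)
    push_cast at this
    exact this
  -- units
  have hunit : ∀ k, k ∈ Finset.Ioc 0 (p - 1) → IsUnit ((k : ZMod (p ^ 2))) := by
    intro k hk
    rw [Finset.mem_Ioc] at hk
    rw [ZMod.isUnit_iff_coprime]
    have hpk : ¬ p ∣ k := fun hd => by
      have := Nat.le_of_dvd hk.1 hd; omega
    exact (Nat.coprime_comm.mp ((hp.coprime_iff_not_dvd).mpr hpk)).pow_right _
  set S := ∑ k ∈ Finset.Ioc 0 (p - 1), ((k : ZMod (p ^ 2))⁻¹) ^ s with hS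
  set T := ∑ k ∈ Finset.Ioc 0 (p - 1), ((k : ZMod (p ^ 2))⁻¹) ^ (s + 1) with hT
  -- pairing identity
  have hpair : ∀ k ∈ Finset.Ioc 0 (p - 1),
      ((k : ZMod (p ^ 2))⁻¹) ^ s + (((p - k : ℕ) : ZMod (p ^ 2))⁻¹) ^ s
      = -((s : ZMod (p ^ 2)) * p * ((k : ZMod (p ^ 2))⁻¹) ^ (s + 1)) := by
    intro k hk
    have hkm := Finset.mem_Ioc.mp hk
    have hk' : p - k ∈ Finset.Ioc 0 (p - 1) := by rw [Finset.mem_Ioc]; omega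
    set a : ZMod (p ^ 2) := (k : ZMod (p ^ 2)) with ha
    set u : ZMod (p ^ 2) := a⁻¹ with huu
    have hu : a * u = 1 := ZMod.mul_inv_of_unit a (hunit k hk)
    have hcast : ((p - k : ℕ) : ZMod (p ^ 2)) = (p : ZMod (p ^ 2)) - a := by
      have hkp : k ≤ p := by omega
      push_cast [hkp]
      rfl
    set v : ZMod (p ^ 2) := ((p - k : ℕ) : ZMod (p ^ 2))⁻¹ with hvv
    have hv : ((p : ZMod (p ^ 2)) - a) * v = 1 := by
      rw [← hcast]; exact ZMod.mul_inv_of_unit _ (hunit _ hk')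
    have hps : ((p : ZMod (p ^ 2)) - a) ^ s
        = (s : ZMod (p ^ 2)) * p * a ^ (s - 1) - a ^ s :=
      pow_sub_of_sq_zero a p hp2R hsodd
    have hvs : ((p : ZMod (p ^ 2)) - a) ^ s * v ^ s = 1 := by
      rw [← mul_pow, hv, one_pow]
    have hX : ((p : ZMod (p ^ 2)) - a) ^ s *
        (-(u ^ s) - (s : ZMod (p ^ 2)) * p * u ^ (s + 1)) = 1 := by
      obtain ⟨m, hm⟩ := hsodd
      subst hm
      rw [hps]
      have e1 : a ^ (2 * m + 1) * u ^ (2 * m + 1) = 1 := by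
        rw [← mul_pow, hu, one_pow]
      have e2 : a ^ (2 * m) * u ^ (2 * m + 1) = u := by
        rw [pow_succ u, ← mul_assoc, ← mul_pow, hu, one_pow, one_mul]
      have e3 : a ^ (2 * m + 1) * u ^ (2 * m + 1 + 1) = u := by
        rw [pow_succ u, ← mul_assoc, ← mul_pow, hu, one_pow, one_mul]
      have hsm : 2 * m + 1 - 1 = 2 * m := by omega
      rw [hsm]
      push_cast
      linear_combination (-(((2:ZMod (p^2)) * m + 1) * p)) * e2 + e1
        + (((2:ZMod (p^2)) * m + 1) * p) * e3
        - (((2:ZMod (p^2)) * m + 1) ^ 2 * a ^ (2 * m) * u ^ (2 * m + 1 + 1)) * hp2R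
    have h4 : v ^ s = -(u ^ s) - (s : ZMod (p ^ 2)) * p * u ^ (s + 1) := by
      calc v ^ s = (((p : ZMod (p ^ 2)) - a) ^ s *
            (-(u ^ s) - (s : ZMod (p ^ 2)) * p * u ^ (s + 1))) * v ^ s := by
              rw [hX, one_mul]
        _ = (((p : ZMod (p ^ 2)) - a) ^ s * v ^ s) *
            (-(u ^ s) - (s : ZMod (p ^ 2)) * p * u ^ (s + 1)) := by ring
        _ = -(u ^ s) - (s : ZMod (p ^ 2)) * p * u ^ (s + 1) := by rw [hvs, one_mul]
    rw [h4]; ring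
  -- double sum
  have hSS : S + S = -((s : ZMod (p ^ 2)) * ((p : ZMod (p ^ 2)) * T)) := by
    have hrev : S = ∑ k ∈ Finset.Ioc 0 (p - 1), (((p - k : ℕ) : ZMod (p ^ 2))⁻¹) ^ s := by
      rw [hS]
      refine Finset.sum_nbij' (fun k => p - k) (fun k => p - k) ?_ ?_ ?_ ?_ ?_
      · intro a ha; simp only [Finset.mem_Ioc] at ha ⊢; omega
      · intro a ha; simp only [Finset.mem_Ioc] at ha ⊢; omega
      · intro a ha; rw [Finset.mem_Ioc] at ha; show p - (p - a) = a; omega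
      · intro a ha; rw [Finset.mem_Ioc] at ha; show p - (p - a) = a; omega
      · intro a ha
        rw [Finset.mem_Ioc] at ha
        have h3 : p - (p - a) = a := by omega
        rw [h3]
    calc S + S = ∑ k ∈ Finset.Ioc 0 (p - 1),
          (((k : ZMod (p ^ 2))⁻¹) ^ s + (((p - k : ℕ) : ZMod (p ^ 2))⁻¹) ^ s) := by
            rw [Finset.sum_add_distrib, ← hS, ← hrev]
      _ = ∑ k ∈ Finset.Ioc 0 (p - 1),
          -((s : ZMod (p ^ 2)) * p * ((k : ZMod (p ^ 2))⁻¹) ^ (s + 1)) :=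
            Finset.sum_congr rfl hpair
      _ = -((s : ZMod (p ^ 2)) * ((p : ZMod (p ^ 2)) * T)) := by
            rw [hT, Finset.mul_sum, Finset.mul_sum, ← Finset.sum_neg_distrib]
            apply Finset.sum_congr rfl
            intro x _; ring
  -- p * T = 0
  have hpT : (p : ZMod (p ^ 2)) * T = 0 := by
    apply pmul_eq_zero
    rw [hT, map_sum]
    have hterm : ∀ k ∈ Finset.Ioc 0 (p - 1),
        ZMod.castHom (dvd_pow_self p two_ne_zero) (ZMod p) (((k : ZMod (p ^ 2))⁻¹) ^ (s + 1))
        = ((k : ZMod p)⁻¹) ^ (s + 1) := by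
      intro k hk
      rw [map_pow]
      congr 1
      have hu : (k : ZMod (p ^ 2)) * ((k : ZMod (p ^ 2))⁻¹) = 1 :=
        ZMod.mul_inv_of_unit _ (hunit k hk)
      have := congrArg (ZMod.castHom (dvd_pow_self p two_ne_zero) (ZMod p)) hu
      rw [map_mul, map_one, map_natCast] at this
      rw [mul_comm] at this
      exact eq_inv_of_mul_eq_one_left this
    rw [Finset.sum_congr rfl hterm]
    -- now sum over ZMod p
    have hIoc : Finset.Ioc 0 (p - 1) = (Finset.range p).erase 0 := by
      ext x; simp only [Finset.mem_Ioc, Finset.mem_erase, Finset.mem_range]; omega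
    rw [hIoc, Finset.sum_erase _ (by simp [zero_pow (Nat.succ_ne_zero s)])]
    have hbij : ∑ k ∈ Finset.range p, ((k : ZMod p)⁻¹) ^ (s + 1)
        = ∑ x : ZMod p, (x⁻¹) ^ (s + 1) := by
      refine Finset.sum_nbij' (fun k => (k : ZMod p)) (fun x => x.val) ?_ ?_ ?_ ?_ ?_
      · intro a _; exact Finset.mem_univ _
      · intro a _; exact Finset.mem_range.mpr (ZMod.val_lt a)
      · intro a ha; exact ZMod.val_cast_of_lt (Finset.mem_range.mp ha)
      · intro a _; exact ZMod.natCast_rightInverse a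
      · intro a _; rfl
    rw [hbij]
    have hinv : ∑ x : ZMod p, (x⁻¹) ^ (s + 1) = ∑ x : ZMod p, x ^ (s + 1) :=
      Fintype.sum_bijective Inv.inv inv_involutive.bijective _ _ (fun x => rfl)
    rw [hinv]
    apply sum_pow_eq_zero (Nat.succ_ne_zero s)
    rwa [ZMod.card]
  -- finish: 2 is a unit
  have h2S : (2 : ZMod (p ^ 2)) * S = 0 := by
    rw [two_mul, hSS, hpT]; ring
  have hu2 : IsUnit (2 : ZMod (p ^ 2)) := by
    have h22 : ((2 : ℕ) : ZMod (p ^ 2)) = 2 := by norm_num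
    rw [← h22, ZMod.isUnit_iff_coprime]
    have hnd : ¬ (2 : ℕ) ∣ p := by
      have := Nat.odd_iff.mp hpodd; omega
    exact ((Nat.prime_two.coprime_iff_not_dvd).mpr hnd).pow_right _
  obtain ⟨w, hw⟩ := hu2
  have := congrArg (fun x => (↑w⁻¹ : ZMod (p ^ 2)) * x) h2S
  simpa [← hw, ← mul_assoc] using this

/-- For an odd prime p and odd s ≥ 1 with (p−1) ∤ s and (p−1) ∤ (s+1),
H(s; p−1) ≡ 0 (mod p²). -/
theorem H_s_odd_cong_zero_mod_p_sq (p s : ℕ) (hp : p.Prime) (hpodd : Odd p)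
    (hs : 1 ≤ s) (hsodd : Odd s) (h1 : ¬ (p - 1) ∣ s) (h2 : ¬ (p - 1) ∣ (s + 1)) :
    (p : ℤ) ^ 2 ∣ (H [s] (p - 1)).num := by
  haveI : Fact p.Prime := ⟨hp⟩
  haveI : NeZero (p ^ 2) := ⟨pow_ne_zero 2 hp.ne_zero⟩
  set M := Nat.factorial (p - 1) with hM
  set q := H [s] (p - 1) with hq
  have hHq : q = ∑ k ∈ Finset.Ioc 0 (p - 1), 1 / (k : ℚ) ^ s := by
    simp [hq, H, Haux]
  have hdvdM : ∀ k ∈ Finset.Ioc 0 (p - 1), k ∣ M := by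
    intro k hk; rw [Finset.mem_Ioc] at hk; exact Nat.dvd_factorial hk.1 hk.2
  set A := ∑ k ∈ Finset.Ioc 0 (p - 1), (M / k) ^ s with hA
  have hMq : (M : ℚ) ^ s * q = (A : ℚ) := by
    rw [hHq, Finset.mul_sum, hA, Nat.cast_sum]
    apply Finset.sum_congr rfl
    intro k hk
    have hk0 : (k : ℚ) ≠ 0 := by
      rw [Finset.mem_Ioc] at hk
      exact Nat.cast_ne_zero.mpr (by omega)
    rw [Nat.cast_pow, Nat.cast_div (hdvdM k hk) hk0, div_pow, mul_one_div]
  -- integer identity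
  have hden : ((q.den : ℚ)) ≠ 0 := Nat.cast_ne_zero.mpr q.den_pos.ne'
  have hnum : (q.num : ℚ) = q * q.den := (div_eq_iff hden).mp (Rat.num_div_den q)
  have key : (q.num : ℚ) * (M : ℚ) ^ s = (A : ℚ) * q.den := by
    rw [hnum, ← hMq]; ring
  have keyZ : q.num * (M : ℤ) ^ s = (A : ℤ) * (q.den : ℤ) := by exact_mod_cast key
  -- p^2 divides A
  have hAz : ((A : ZMod (p ^ 2))) = 0 := by
    rw [hA, Nat.cast_sum]
    have hterm : ∀ k ∈ Finset.Ioc 0 (p - 1),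
        (((M / k) ^ s : ℕ) : ZMod (p ^ 2)) =
        (M : ZMod (p ^ 2)) ^ s * ((k : ZMod (p ^ 2))⁻¹) ^ s := by
      intro k hk
      have hkm := Finset.mem_Ioc.mp hk
      have hunit : IsUnit ((k : ZMod (p ^ 2))) := by
        rw [ZMod.isUnit_iff_coprime]
        have hpk : ¬ p ∣ k := fun hd => by have := Nat.le_of_dvd hkm.1 hd; omega
        exact (Nat.coprime_comm.mp ((hp.coprime_iff_not_dvd).mpr hpk)).pow_right _
      have hu : (k : ZMod (p ^ 2)) * ((k : ZMod (p ^ 2))⁻¹) = 1 :=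
        ZMod.mul_inv_of_unit _ hunit
      have hm : (k : ZMod (p ^ 2)) * ((M / k : ℕ) : ZMod (p ^ 2)) = (M : ZMod (p ^ 2)) := by
        rw [← Nat.cast_mul, Nat.mul_div_cancel' (hdvdM k hk)]
      have hmk : ((M / k : ℕ) : ZMod (p ^ 2)) =
          (M : ZMod (p ^ 2)) * ((k : ZMod (p ^ 2))⁻¹) := by
        calc ((M / k : ℕ) : ZMod (p ^ 2))
            = ((k : ZMod (p ^ 2)) * ((k : ZMod (p ^ 2))⁻¹)) * ((M / k : ℕ) : ZMod (p ^ 2)) := by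
              rw [hu, one_mul]
          _ = ((k : ZMod (p ^ 2)) * ((M / k : ℕ) : ZMod (p ^ 2))) * ((k : ZMod (p ^ 2))⁻¹) := by
              ring
          _ = (M : ZMod (p ^ 2)) * ((k : ZMod (p ^ 2))⁻¹) := by rw [hm]
      rw [Nat.cast_pow, hmk, mul_pow]
    rw [Finset.sum_congr rfl hterm, ← Finset.mul_sum,
      key_sum_zero p s hp hpodd hsodd h2, mul_zero]
  have hdvdA : (p ^ 2 : ℕ) ∣ A := (ZMod.natCast_eq_zero_iff A (p ^ 2)).mp hAz
  have hdvdAZ : (p : ℤ) ^ 2 ∣ (A : ℤ) := by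
    have := Int.natCast_dvd_natCast.mpr hdvdA
    push_cast at this
    exact this
  have hdvdNum : (p : ℤ) ^ 2 ∣ q.num * (M : ℤ) ^ s := by
    rw [keyZ]; exact hdvdAZ.mul_right _
  have hcopN : Nat.Coprime p M := by
    rw [hp.coprime_iff_not_dvd, hM, Nat.Prime.dvd_factorial hp]
    have := hp.two_le
    omega
  have hcop : IsCoprime ((p : ℤ) ^ 2) ((M : ℤ) ^ s) :=
    (Nat.isCoprime_iff_coprime.mpr hcopN).pow
  exact hcop.dvd_of_dvd_mul_right hdvdNum
end

section
/- For any odd prime p and odd positive integer s with s+1 = n(p-1) for some positive integer n, the sum H(s; p-1) = ∑_{k=1}^{p-1} 1/k^s is congruent to -p(n+1)/2 modulo p². -/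
open Finset

lemma binom_aux (a b : ℤ) : ∀ t : ℕ, (a + b)^(t+1) ≡ a^(t+1) + (t+1) * a^t * b [ZMOD b^2] := by
  intro t
  induction t with
  | zero => simp [Int.ModEq.refl]
  | succ t ih =>
    have h : (a + b)^(t+1+1) = (a+b)^(t+1) * (a+b) := by ring
    rw [h]
    calc (a+b)^(t+1) * (a+b)
        ≡ (a^(t+1) + (t+1) * a^t * b) * (a+b) [ZMOD b^2] := ih.mul_right _
      _ ≡ a^(t+2) + (t+2) * a^(t+1) * b [ZMOD b^2] := by
          have : (a^(t+1) + (t+1) * a^t * b) * (a+b)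
              = a^(t+2) + (t+2) * a^(t+1) * b + ((t:ℤ)+1) * a^t * b^2 := by ring
          rw [this]
          exact (Int.ModEq.add_right_cancel' _ (by simpa using (Int.modEq_iff_dvd.mpr ⟨-((t:ℤ)+1)*a^t, by ring⟩)))
      _ = a^(t+1+1) + ((t:ℕ)+1+1) * a^(t+1) * b := by ring

lemma fermat_aux (p k e : ℕ) (hp : p.Prime) (hk0 : 0 < k) (hkp : k < p)
    (he : (p-1) ∣ e) : (p:ℤ) ∣ (k:ℤ)^e - 1 := by
  haveI : Fact p.Prime := ⟨hp⟩
  rw [← ZMod.intCast_zmod_eq_zero_iff_dvd]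
  push_cast
  obtain ⟨m, rfl⟩ := he
  have hk : (k : ZMod p) ≠ 0 := by
    rw [Ne, ZMod.natCast_eq_zero_iff]
    exact fun h => absurd (Nat.le_of_dvd hk0 h) (not_le.mpr hkp)
  rw [pow_mul, ZMod.pow_card_sub_one_eq_one hk, one_pow, sub_self]

lemma core (p n s t : ℕ) (hp : p.Prime) (ht : Odd t)
    (hst : p*(p-1) ∣ s + t) (hsn : s + 1 = n * (p - 1)) :
    (p:ℤ)^2 ∣ 2 * (∑ k ∈ Finset.Ioc 0 (p-1), (k:ℤ)^t) + p*(n+1) := by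
  have hp1 : 1 < p := hp.one_lt
  obtain ⟨t', rfl⟩ : ∃ t', t = t' + 1 := ⟨t - 1, (Nat.succ_pred_eq_of_pos ht.pos).symm⟩
  have ht' : Even t' := by
    rcases ht with ⟨m, hm⟩; exact ⟨m, by omega⟩
  have hpt' : (p-1) ∣ t' := by
    have h1 : (p-1) ∣ s + (t'+1) := dvd_trans (dvd_mul_left (p-1) p) hst
    have h2 : (p-1) ∣ s + 1 := hsn ▸ dvd_mul_left (p-1) n
    have h3 := Nat.dvd_sub h1 h2
    have e : s + (t'+1) - (s+1) = t' := by omega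
    rwa [e] at h3
  have hptn : (p:ℤ) ∣ (t':ℤ) - n := by
    have h1 : (p:ℤ) ∣ (s:ℤ) + (t'+1) := by
      have : (p:ℕ) ∣ s + (t'+1) := dvd_trans (dvd_mul_right p (p-1)) hst
      exact_mod_cast Int.natCast_dvd_natCast.mpr this
    have h2 : (s:ℤ) + 1 + n = n * p := by
      have := congrArg (Nat.cast : ℕ → ℤ) hsn
      push_cast [Nat.cast_sub hp1.le] at this
      linarith
    have h3 : (p:ℤ) ∣ (s:ℤ) + 1 + n := h2 ▸ dvd_mul_left (p:ℤ) n
    have h4 := dvd_sub h1 h3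
    rw [show (t':ℤ) - n = (s:ℤ) + (t'+1) - ((s:ℤ) + 1 + n) by ring]
    exact h4
  have key : ((2 * (∑ k ∈ Finset.Ioc 0 (p-1), (k:ℤ)^(t'+1)) + p*(n+1) : ℤ) : ZMod (p^2)) = 0 := by
    push_cast
    set q := p^2 with hqdef
    set S' : ZMod q := ∑ k ∈ Finset.Ioc 0 (p-1), (k:ZMod q)^(t'+1) with hS'
    have hq0 : (p : ZMod q) * p = 0 := by
      have : ((p^2 : ℕ) : ZMod q) = 0 := by rw [hqdef]; exact ZMod.natCast_self _
      push_cast at this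
      linear_combination this
    have hterm : ∀ k ∈ Finset.Ioc 0 (p-1),
        ((p:ZMod q) - k)^(t'+1) = -((k:ZMod q)^(t'+1)) + ((t':ZMod q)+1) * p := by
      intro k hk
      simp only [Finset.mem_Ioc] at hk
      have hkp : k < p := lt_of_le_of_lt hk.2 (by omega)
      have hb : ((((-(k:ℤ) + p)^(t'+1)) : ℤ) : ZMod q)
          = ((((-(k:ℤ))^(t'+1) + ((t':ℤ)+1) * (-(k:ℤ))^t' * p) : ℤ) : ZMod q) := by
        rw [ZMod.intCast_eq_intCast_iff]
        have hmod := binom_aux (-(k:ℤ)) p t'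
        have hcast : ((q:ℕ):ℤ) = (p:ℤ)^2 := by rw [hqdef]; push_cast; ring
        rw [hcast]
        exact hmod
      have hferm : (p : ZMod q) * (k : ZMod q)^t' = p := by
        have hd : (p:ℤ)^2 ∣ (p:ℤ) * ((k:ℤ)^t' - 1) := by
          obtain ⟨c, hc⟩ := fermat_aux p k t' hp hk.1 hkp hpt'
          exact ⟨c, by rw [hc]; ring⟩
        have hz : (((p:ℤ) * ((k:ℤ)^t' - 1) : ℤ) : ZMod q) = 0 := by
          rw [ZMod.intCast_zmod_eq_zero_iff_dvd]
          rw [hqdef]; exact_mod_cast hd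
        push_cast at hz
        linear_combination hz
      push_cast at hb
      rw [ht'.neg_pow, ht.neg_pow] at hb
      linear_combination hb + ((t':ZMod q)+1) * hferm
    -- reflection
    have hrefl : S' = ∑ k ∈ Finset.Ioc 0 (p-1), ((p:ZMod q) - k)^(t'+1) := by
      rw [hS']
      refine Finset.sum_nbij' (fun k => p - k) (fun k => p - k) ?_ ?_ ?_ ?_ ?_ <;>
        intro a ha <;> simp only [Finset.mem_Ioc] at ha ⊢
      · omega
      · omega
      · omega
      · omega
      · have hle : a ≤ p := by omega
        rw [Nat.cast_sub hle]
        ring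
    have h2 : ∑ k ∈ Finset.Ioc 0 (p-1), ((p:ZMod q) - k)^(t'+1)
        = -S' + ((p-1 : ℕ) : ZMod q) * (((t':ZMod q)+1) * p) := by
      rw [Finset.sum_congr rfl hterm, Finset.sum_add_distrib, Finset.sum_neg_distrib,
        Finset.sum_const, Nat.card_Ioc, Nat.sub_zero, nsmul_eq_mul]
    have hsum : S' = -S' + ((p-1 : ℕ) : ZMod q) * (((t':ZMod q)+1) * p) := hrefl.trans h2
    have hpn : (p : ZMod q) * t' = p * n := by
      obtain ⟨c, hc⟩ := hptn
      have hz : (((t':ℤ) - n : ℤ) : ZMod q) = ((p * c : ℤ) : ZMod q) := by rw [hc]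
      push_cast at hz
      have hc2 : (p : ZMod q) * ((t':ZMod q) - n) = p * (p * c) := by rw [hz]
      rw [← mul_assoc] at hc2
      rw [hq0, zero_mul] at hc2
      linear_combination hc2
    have hcs : ((p-1 : ℕ) : ZMod q) = (p : ZMod q) - 1 := by
      rw [Nat.cast_sub hp1.le]; simp
    rw [hcs] at hsum
    show 2 * S' + (p:ZMod q) * ((n:ZMod q)+1) = 0
    linear_combination hsum + ((t':ZMod q)+1) * hq0 - hpn
  have hkey := (ZMod.intCast_zmod_eq_zero_iff_dvd _ (p^2)).mp key
  convert hkey using 1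
  simp


/-- For an odd prime p and odd s ≥ 1 with s + 1 = n(p−1), n ≥ 1, we have
H(s; p−1) ≡ −p(n+1)/2 (mod p²). -/
theorem H_s_cong_mod_p_sq (p s n : ℕ) (hp : p.Prime) (hpodd : Odd p)
    (hs : 1 ≤ s) (hsodd : Odd s) (hn : 1 ≤ n) (hsn : s + 1 = n * (p - 1)) :
    (p : ℤ) ^ 2 ∣ (H [s] (p - 1) + (p : ℚ) * (n + 1) / 2).num := by
  have hp1 : 1 < p := hp.one_lt
  have hpZ : Prime (p:ℤ) := Nat.prime_iff_prime_int.mp hp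
  haveI : Fact p.Prime := ⟨hp⟩
  -- choose t
  set m := p * (p - 1) with hm
  have hmpos : 0 < m := by
    have : 0 < p - 1 := by omega
    positivity
  have hmeven : 2 ∣ m := by
    obtain ⟨a, ha⟩ := hpodd
    have h2 : p - 1 = 2*a := by omega
    exact ⟨p*a, by rw [hm, h2]; ring⟩
  set r := s % m with hr
  have hrodd : r % 2 = 1 := by
    rw [hr, Nat.mod_mod_of_dvd s hmeven]
    exact Nat.odd_iff.mp hsodd
  have hrlt : r < m := Nat.mod_lt s hmpos
  set t := m - r with htdef
  have htodd : Odd t := by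
    rw [Nat.odd_iff]
    obtain ⟨b, hb⟩ := hmeven
    omega
  have hst : m ∣ s + t := by
    have h1 : m ∣ s - r := Nat.dvd_sub_mod s
    have h2 : r ≤ s := Nat.mod_le s m
    have : s + t = (s - r) + m := by omega
    rw [this]
    exact Nat.dvd_add h1 dvd_rfl
  -- core divisibility
  have hcore := core p n s t hp htodd (hm ▸ hst) hsn
  -- rational bookkeeping
  set c₀ : ℤ := ∏ k ∈ Finset.Ioc 0 (p-1), (k:ℤ)^s with hc₀
  set P : ℕ → ℤ := fun k => ∏ j ∈ (Finset.Ioc 0 (p-1)).erase k, (j:ℤ)^s with hP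
  set M : ℤ := 2 * ∑ k ∈ Finset.Ioc 0 (p-1), P k + p*(n+1)*c₀ with hM
  have hHs : H [s] (p-1) = ∑ k ∈ Finset.Ioc 0 (p-1), 1 / (k:ℚ)^s := by
    simp [H, Haux]
  have hprodk : ∀ k ∈ Finset.Ioc 0 (p-1), P k * (k:ℤ)^s = c₀ := by
    intro k hk
    exact Finset.prod_erase_mul _ _ hk
  have hPk : ∀ k ∈ Finset.Ioc 0 (p-1), ((P k : ℚ)) = 1/(k:ℚ)^s * (c₀:ℚ) := by
    intro k hk
    have hk' := Finset.mem_Ioc.mp hk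
    have hkne : ((k:ℚ))^s ≠ 0 := by
      apply pow_ne_zero
      exact_mod_cast (Nat.cast_ne_zero (R := ℚ)).mpr (by omega)
    have := hprodk k hk
    have hq : (P k : ℚ) * (k:ℚ)^s = (c₀:ℚ) := by exact_mod_cast congrArg (Int.cast : ℤ → ℚ) this
    field_simp
    linarith [hq]
  have hXc : (H [s] (p-1) + (p:ℚ)*(n+1)/2) * (2*(c₀:ℚ)) = (M:ℚ) := by
    rw [hHs]
    have hsum : ∑ k ∈ Finset.Ioc 0 (p-1), (1/(k:ℚ)^s) = (∑ k ∈ Finset.Ioc 0 (p-1), (P k:ℚ)) / (c₀:ℚ) → True := fun _ => trivial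
    clear hsum
    have e1 : (∑ k ∈ Finset.Ioc 0 (p-1), 1/(k:ℚ)^s) * (c₀:ℚ)
        = ∑ k ∈ Finset.Ioc 0 (p-1), (P k : ℚ) := by
      rw [Finset.sum_mul]
      exact Finset.sum_congr rfl (fun k hk => ((hPk k hk).symm))
    have e2 : ((M:ℤ):ℚ) = 2 * ∑ k ∈ Finset.Ioc 0 (p-1), (P k:ℚ) + p*(n+1)*(c₀:ℚ) := by
      rw [hM]
      push_cast
      ring
    rw [e2, ← e1]
    ring
  -- p^2 ∣ M
  have hM2 : (p:ℤ)^2 ∣ M := by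
    have hzero : ((M:ℤ) : ZMod (p^2)) = 0 := by
      have hPkz : ∀ k ∈ Finset.Ioc 0 (p-1),
          ((P k : ℤ) : ZMod (p^2)) = ((c₀:ℤ) : ZMod (p^2)) * ((k:ℕ) : ZMod (p^2))^t := by
        intro k hk
        have hk' := Finset.mem_Ioc.mp hk
        have hkp : k < p := lt_of_le_of_lt hk'.2 (by omega)
        have hcop : Nat.Coprime k (p^2) := by
          apply Nat.Coprime.pow_right
          have : ¬ p ∣ k := fun h => absurd (Nat.le_of_dvd hk'.1 h) (not_le.mpr hkp)
          exact (Nat.coprime_comm.mp ((hp.coprime_iff_not_dvd).mpr this))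
        have hu : IsUnit ((k:ℕ) : ZMod (p^2)) := (ZMod.isUnit_iff_coprime k (p^2)).mpr hcop
        have heuler : ((k:ℕ) : ZMod (p^2))^(s+t) = 1 := by
          obtain ⟨u, hu'⟩ := hu
          obtain ⟨d, hd⟩ := hst
          have htot : Nat.totient (p^2) = m := by
            rw [Nat.totient_prime_pow hp (by norm_num)]
            simp [hm]
          have : u^(s+t) = 1 := by
            rw [hd, pow_mul, ← htot, ZMod.pow_totient, one_pow]
          calc ((k:ℕ) : ZMod (p^2))^(s+t) = (u:ZMod (p^2))^(s+t) := by rw [hu']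
            _ = ((u^(s+t) : (ZMod (p^2))ˣ) : ZMod (p^2)) := by push_cast; ring
            _ = 1 := by rw [this]; rfl
        have hcast : ((P k : ℤ) : ZMod (p^2)) * ((k:ℕ):ZMod (p^2))^s = ((c₀:ℤ):ZMod (p^2)) := by
          have := congrArg (Int.cast : ℤ → ZMod (p^2)) (hprodk k hk)
          push_cast at this
          exact_mod_cast this
        have hrhs : (((c₀:ℤ):ZMod (p^2)) * ((k:ℕ):ZMod (p^2))^t) * ((k:ℕ):ZMod (p^2))^s
            = ((c₀:ℤ):ZMod (p^2)) := by
          rw [mul_assoc, ← pow_add]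
          rw [add_comm t s, heuler, mul_one]
        exact (hu.pow s).mul_right_cancel (by rw [hcast, hrhs])
      have hcorez : ((2 * (∑ k ∈ Finset.Ioc 0 (p-1), (k:ℤ)^t) + p*(n+1) : ℤ) : ZMod (p^2)) = 0 := by
        rw [ZMod.intCast_zmod_eq_zero_iff_dvd]
        exact_mod_cast hcore
      rw [hM]
      push_cast
      push_cast at hcorez
      calc (2:ZMod (p^2)) * (∑ k ∈ Finset.Ioc 0 (p-1), ((P k : ℤ) : ZMod (p^2))) + p*(n+1)*((c₀:ℤ):ZMod (p^2))
          = 2 * (∑ k ∈ Finset.Ioc 0 (p-1), ((c₀:ℤ):ZMod (p^2)) * ((k:ℕ):ZMod (p^2))^t) + p*(n+1)*((c₀:ℤ):ZMod (p^2)) := by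
            rw [Finset.sum_congr rfl hPkz]
        _ = ((c₀:ℤ):ZMod (p^2)) * (2 * (∑ k ∈ Finset.Ioc 0 (p-1), ((k:ℕ):ZMod (p^2))^t) + p*(n+1)) := by
            rw [← Finset.mul_sum]
            ring
        _ = 0 := by linear_combination ((c₀:ℤ):ZMod (p^2)) * hcorez
    have := (ZMod.intCast_zmod_eq_zero_iff_dvd M (p^2)).mp hzero
    exact_mod_cast this
  -- coprimality
  have hndvd : ¬ (p:ℤ) ∣ 2*c₀ := by
    intro h
    rcases (hpZ.dvd_mul).mp h with h2 | hc
    · have : (p:ℕ) ∣ 2 := by exact_mod_cast h2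
      have := Nat.le_of_dvd (by norm_num) this
      interval_cases p
      · exact absurd hpodd (by decide)
    · rw [hc₀] at hc
      rw [Prime.dvd_finset_prod_iff hpZ] at hc
      obtain ⟨k, hk, hdk⟩ := hc
      have hk' := Finset.mem_Ioc.mp hk
      have : (p:ℤ) ∣ (k:ℤ) := hpZ.dvd_of_dvd_pow hdk
      have : (p:ℕ) ∣ k := by exact_mod_cast this
      have := Nat.le_of_dvd hk'.1 this
      omega
  have hcop : IsCoprime ((p:ℤ)^2) (2*c₀) := ((hpZ.coprime_iff_not_dvd).mpr hndvd).pow_left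
  -- numerator conclusion
  set X : ℚ := H [s] (p-1) + (p:ℚ)*(n+1)/2 with hX
  have hdenne : ((X.den:ℚ)) ≠ 0 := Nat.cast_ne_zero.mpr X.den_nz
  have h5 : (X.num : ℚ) * (2*(c₀:ℚ)) = (M:ℚ) * (X.den:ℚ) := by
    have hXn : (X.num : ℚ) = X * X.den := by
      nth_rewrite 2 [← Rat.num_div_den X]
      field_simp
    rw [hXn, ← hXc]
    ring
  have h6 : X.num * (2*c₀) = M * (X.den:ℤ) := by exact_mod_cast h5
  have h7 : (p:ℤ)^2 ∣ X.num * (2*c₀) := h6 ▸ Dvd.dvd.mul_right hM2 _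
  exact hcop.dvd_of_dvd_mul_right h7
end

section
/- For positive integers s, l, n, the identity l·H({s}^l; n) = ∑_{k=1}^l (-1)^{k-1} H(ks; n) · H({s}^{l-k}; n) holds, where H({s}^j; n) denotes the multiple harmonic sum with j equal exponents s. -/
open Finset

lemma haux_replicate_eq (s n : ℕ) :
    ∀ d m l, n - m = d →
      Haux (List.replicate l s) m n
        = ∑ A ∈ (Finset.Ioc m n).powersetCard l, ∏ i ∈ A, (1 / (i : ℚ) ^ s) := by
  intro d
  induction d with
  | zero =>
    intro m l h
    have he : Finset.Ioc m n = ∅ := by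
      rw [Finset.Ioc_eq_empty_iff]; omega
    cases l with
    | zero => simp [he, Haux]
    | succ l =>
      rw [Finset.powersetCard_eq_empty.mpr (by simp; omega)]
      simp [he, List.replicate_succ, Haux]
  | succ d ih =>
    intro m l h
    have hnm : m + 1 ∉ Finset.Ioc (m + 1) n := by simp
    have hIoc : Finset.Ioc m n = insert (m + 1) (Finset.Ioc (m + 1) n) := by
      ext k; simp only [Finset.mem_Ioc, Finset.mem_insert]; omega
    have h1 : n - (m + 1) = d := by omega
    cases l with
    | zero => simp [Haux]
    | succ l =>
      rw [List.replicate_succ]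
      show (∑ k ∈ Finset.Ioc m n, (1 / (k : ℚ) ^ s) * Haux (List.replicate l s) k n) = _
      rw [hIoc, Finset.sum_insert hnm]
      have h2 : (∑ k ∈ Finset.Ioc (m + 1) n, (1 / (k : ℚ) ^ s) * Haux (List.replicate l s) k n)
          = Haux (List.replicate (l + 1) s) (m + 1) n := by
        rw [List.replicate_succ]; rfl
      rw [h2, ih (m + 1) (l + 1) h1, ih (m + 1) l h1,
        Finset.powersetCard_succ_insert hnm]
      rw [Finset.sum_union ?hd, Finset.sum_image ?hinj]
      case hd =>
        rw [Finset.disjoint_left]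
        intro A hA hA'
        simp only [Finset.mem_powersetCard] at hA
        simp only [Finset.mem_image] at hA'
        obtain ⟨B, _, rfl⟩ := hA'
        exact hnm (hA.1 (Finset.mem_insert_self _ _))
      case hinj =>
        intro A hA B hB hAB
        simp only [Finset.mem_coe, Finset.mem_powersetCard] at hA hB
        have hA1 : m + 1 ∉ A := fun hc => hnm (hA.1 hc)
        have hB1 : m + 1 ∉ B := fun hc => hnm (hB.1 hc)
        rw [← Finset.erase_insert hA1, hAB, Finset.erase_insert hB1]
      rw [Finset.mul_sum]
      rw [add_comm]
      congr 1
      apply Finset.sum_congr rfl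
      intro A hA
      simp only [Finset.mem_powersetCard] at hA
      have hA1 : m + 1 ∉ A := fun hc => hnm (hA.1 hc)
      rw [Finset.prod_insert hA1]

/-- The embedding `Fin n ↪ ℕ`, `i ↦ i + 1`. -/
def embN (n : ℕ) : Fin n ↪ ℕ :=
  ⟨fun i => (i : ℕ) + 1, fun a b hab => Fin.ext (by simpa using hab)⟩

lemma embN_apply (n : ℕ) (i : Fin n) : embN n i = (i : ℕ) + 1 := rfl

lemma map_univ_embN (n : ℕ) : (Finset.univ : Finset (Fin n)).map (embN n) = Finset.Ioc 0 n := by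
  ext k
  simp only [Finset.mem_map, Finset.mem_univ, true_and, Finset.mem_Ioc, embN,
    Function.Embedding.coeFn_mk]
  constructor
  · rintro ⟨i, rfl⟩; have := i.isLt; show 0 < (i : ℕ) + 1 ∧ (i : ℕ) + 1 ≤ n; omega
  · rintro ⟨h1, h2⟩; exact ⟨⟨k - 1, by omega⟩, show k - 1 + 1 = k by omega⟩

lemma aeval_esymm_eq (s n l : ℕ) :
    (MvPolynomial.aeval fun i : Fin n => 1 / ((i : ℕ) + 1 : ℚ) ^ s)
      (MvPolynomial.esymm (Fin n) ℚ l) = H (List.replicate l s) n := by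
  rw [MvPolynomial.aeval_esymm_eq_multiset_esymm]
  rw [H, haux_replicate_eq s n (n - 0) 0 l rfl]
  rw [← map_univ_embN n]
  rw [← Finset.esymm_map_val (fun i : ℕ => 1 / (i : ℚ) ^ s)]
  rw [Finset.map_val, Multiset.map_map]
  congr 1
  apply Multiset.map_congr rfl
  intro i _
  simp only [Function.comp, embN_apply]
  push_cast
  ring

lemma aeval_psum_eq (s n k : ℕ) :
    (MvPolynomial.aeval fun i : Fin n => 1 / ((i : ℕ) + 1 : ℚ) ^ s)
      (MvPolynomial.psum (Fin n) ℚ k) = H [k * s] n := by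
  rw [MvPolynomial.psum, map_sum]
  have hH : H [k * s] n = ∑ j ∈ Finset.Ioc 0 n, 1 / (j : ℚ) ^ (k * s) := by
    rw [H]
    show (∑ j ∈ Finset.Ioc 0 n, (1 / (j : ℚ) ^ (k * s)) * Haux [] j n) = _
    simp [Haux]
  rw [hH, ← map_univ_embN n, Finset.sum_map]
  apply Finset.sum_congr rfl
  intro i _
  simp only [map_pow, MvPolynomial.aeval_X, embN_apply]
  rw [div_pow, one_pow, ← pow_mul, mul_comm s k]
  push_cast
  ring

/-- Recursion for homogeneous multiple harmonic sums:
l·H({s}^l; n) = ∑_{k=1}^l (−1)^(k−1) H(ks; n)·H({s}^{l−k}; n). -/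
theorem homogeneous_recursion (s l n : ℕ) (hs : 1 ≤ s) (hl : 1 ≤ l) (hn : 1 ≤ n) :
    (l : ℚ) * H (List.replicate l s) n =
      ∑ k ∈ Finset.Icc 1 l,
        (-1 : ℚ) ^ (k - 1) * H [k * s] n * H (List.replicate (l - k) s) n := by
  have newton := congrArg (MvPolynomial.aeval fun i : Fin n => 1 / ((i : ℕ) + 1 : ℚ) ^ s)
    (MvPolynomial.mul_esymm_eq_sum (Fin n) ℚ l)
  simp only [map_mul, map_sum, map_pow, map_neg, map_one, map_natCast,
    aeval_esymm_eq s n, aeval_psum_eq s n] at newton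
  rw [newton, Finset.mul_sum]
  apply Finset.sum_nbij' (i := fun a => a.2) (j := fun k => (l - k, k))
  · intro a ha
    simp only [Finset.mem_filter, Finset.HasAntidiagonal.mem_antidiagonal] at ha
    simp only [Finset.mem_Icc]; omega
  · intro k hk
    simp only [Finset.mem_Icc] at hk
    simp only [Finset.mem_filter, Finset.HasAntidiagonal.mem_antidiagonal]; omega
  · intro a ha
    simp only [Finset.mem_filter, Finset.HasAntidiagonal.mem_antidiagonal] at ha
    have : l - a.2 = a.1 := by omega
    simp [this]
  · intro k hk; rfl
  · intro a ha
    simp only [Finset.mem_filter, Finset.HasAntidiagonal.mem_antidiagonal] at ha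
    obtain ⟨h1, h2⟩ := ha
    have hla : l - a.2 = a.1 := by omega
    have hsign : (-1 : ℚ) ^ (l + 1) * (-1 : ℚ) ^ a.1 = (-1 : ℚ) ^ (a.2 - 1) := by
      rw [← pow_add]
      have he : l + 1 + a.1 = (a.2 - 1) + 2 * (a.1 + 1) := by omega
      rw [he, pow_add, pow_mul]
      norm_num
    rw [hla, ← hsign]
    ring
end

section
/- Let p be an odd prime and let s = (s_1,…,s_l) be a tuple of positive integers with weight |s| = s_1+⋯+s_l. Then H(s_1,…,s_l; p−1) ≡ (−1)^{|s|} H(s_l,…,s_1; p−1) mod p (the difference has positive p-adic valuation). -/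
/-! ### ZMod-level sums -/

/-- Increasing-chain sum in `ZMod p`. -/
def Gz (p : ℕ) : List ℕ → ℕ → ℕ → ZMod p
  | [], _, _ => 1
  | a :: t, m, n => ∑ k ∈ Finset.Ioc m n, ((k : ZMod p)⁻¹) ^ a * Gz p t k n

/-- Decreasing-chain sum in `ZMod p` (indices in `[m, n)`, strictly decreasing). -/
def Bz (p : ℕ) : List ℕ → ℕ → ℕ → ZMod p
  | [], _, _ => 1
  | a :: t, m, n => ∑ k ∈ Finset.Ico m n, ((k : ZMod p)⁻¹) ^ a * Bz p t m k

lemma Bz_append (p : ℕ) (a : ℕ) :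
    ∀ (l : List ℕ) (m n : ℕ),
      Bz p (l ++ [a]) m n
        = ∑ j ∈ Finset.Ico m n, ((j : ZMod p)⁻¹) ^ a * Bz p l (j + 1) n := by
  intro l
  induction l with
  | nil => intro m n; simp [Bz]
  | cons b l ih =>
    intro m n
    show (∑ k ∈ Finset.Ico m n, ((k : ZMod p)⁻¹) ^ b * Bz p (l ++ [a]) m k)
        = ∑ j ∈ Finset.Ico m n, ((j : ZMod p)⁻¹) ^ a *
            ∑ k ∈ Finset.Ico (j + 1) n, ((k : ZMod p)⁻¹) ^ b * Bz p l (j + 1) k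
    simp only [ih, Finset.mul_sum]
    rw [Finset.sum_comm' (s' := fun j => Finset.Ico (j + 1) n)
      (t' := Finset.Ico m n)]
    · apply Finset.sum_congr rfl; intro j _
      apply Finset.sum_congr rfl; intro k _
      ring
    · intro k j
      simp only [Finset.mem_Ico]
      omega

lemma Gz_eq_Bz (p : ℕ) :
    ∀ (s : List ℕ) (m n : ℕ), Gz p s m n = Bz p s.reverse (m + 1) (n + 1) := by
  intro s
  induction s with
  | nil => intro m n; simp [Gz, Bz]
  | cons a t ih =>
    intro m n
    rw [List.reverse_cons, Bz_append, Finset.Ico_add_one_add_one_eq_Ioc]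
    show (∑ k ∈ Finset.Ioc m n, ((k : ZMod p)⁻¹) ^ a * Gz p t k n) = _
    apply Finset.sum_congr rfl
    intro k _
    rw [ih]

lemma Bz_reflect (p : ℕ) [Fact p.Prime] :
    ∀ (s : List ℕ) (m n : ℕ), n ≤ p →
      Bz p s (p - n) (p - m) = (-1 : ZMod p) ^ s.sum * Gz p s m n := by
  intro s
  induction s with
  | nil => intro m n _; simp [Gz, Bz]
  | cons a t ih =>
    intro m n hn
    show (∑ k ∈ Finset.Ico (p - n) (p - m), ((k : ZMod p)⁻¹) ^ a * Bz p t (p - n) k)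
        = (-1 : ZMod p) ^ (a + t.sum) *
            ∑ j ∈ Finset.Ioc m n, ((j : ZMod p)⁻¹) ^ a * Gz p t j n
    rw [Finset.mul_sum]
    refine Finset.sum_nbij' (fun k => p - k) (fun j => p - j) ?_ ?_ ?_ ?_ ?_
    · intro k hk
      simp only [Finset.mem_Ico] at hk
      simp only [Finset.mem_Ioc]
      omega
    · intro j hj
      simp only [Finset.mem_Ioc] at hj
      simp only [Finset.mem_Ico]
      omega
    · intro k hk
      simp only [Finset.mem_Ico] at hk
      omega
    · intro j hj
      simp only [Finset.mem_Ioc] at hj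
      omega
    · intro k hk
      simp only [Finset.mem_Ico] at hk
      have h2 : ((k : ZMod p)) = -((p - k : ℕ) : ZMod p) := by
        have hadd : k + (p - k) = p := by omega
        have hc : ((k : ZMod p)) + ((p - k : ℕ) : ZMod p) = (p : ZMod p) := by
          rw [← Nat.cast_add, hadd]
        rw [ZMod.natCast_self] at hc
        linear_combination hc
      have hb : Bz p t (p - n) k = (-1 : ZMod p) ^ t.sum * Gz p t (p - k) n := by
        have := ih (p - k) n hn
        rwa [show p - (p - k) = k by omega] at this
      rw [hb, h2, inv_neg, neg_pow, pow_add]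
      ring

lemma Gz_reverse (p : ℕ) [Fact p.Prime] (s : List ℕ) :
    Gz p s 0 (p - 1) = (-1 : ZMod p) ^ s.sum * Gz p s.reverse 0 (p - 1) := by
  have hp1 : 1 ≤ p := (Fact.out : p.Prime).one_lt.le
  have h1 : Bz p s 1 p = (-1 : ZMod p) ^ s.sum * Gz p s 0 (p - 1) := by
    have := Bz_reflect p s 0 (p - 1) (by omega)
    rw [Nat.sub_zero] at this
    rw [show p - (p - 1) = 1 by omega] at this
    exact this
  have h2 : Gz p s.reverse 0 (p - 1) = Bz p s 1 p := by
    rw [Gz_eq_Bz p s.reverse 0 (p - 1), List.reverse_reverse,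
      show p - 1 + 1 = p by omega]
  have hsq : ((-1 : ZMod p) ^ s.sum) * ((-1 : ZMod p) ^ s.sum) = 1 := by
    rw [← pow_add]
    exact Even.neg_one_pow ⟨s.sum, (two_mul s.sum).symm ▸ (two_mul s.sum)⟩
  rw [h2, h1, ← mul_assoc, hsq, one_mul]

/-! ### Bridge ℚ → ℤ_[p] → ZMod p -/

lemma padic_norm_sum_le_one (p : ℕ) [Fact p.Prime] (s : Finset ℕ) (f : ℕ → ℚ_[p])
    (h : ∀ i ∈ s, ‖f i‖ ≤ 1) : ‖∑ i ∈ s, f i‖ ≤ 1 := by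
  classical
  induction s using Finset.induction_on with
  | empty => simp
  | insert _ _ hx ih =>
    rename_i a t
    rw [Finset.sum_insert hx]
    refine le_trans (Padic.nonarchimedean _ _) (max_le ?_ ?_)
    · exact h a (Finset.mem_insert_self a t)
    · exact ih fun i hi => h i (Finset.mem_insert_of_mem hi)

lemma padic_norm_nat_eq_one (p : ℕ) [Fact p.Prime] (k : ℕ) (h0 : 0 < k) (hk : k < p) :
    ‖((k : ℚ_[p]))‖ = 1 := by
  have h1 : ‖(((k : ℤ) : ℚ_[p]))‖ ≤ 1 := Padic.norm_int_le_one _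
  have h2 : ¬ ‖(((k : ℤ) : ℚ_[p]))‖ < 1 := by
    rw [Padic.norm_intCast_lt_one_iff]
    intro hdvd
    rw [Int.natCast_dvd_natCast] at hdvd
    exact absurd (Nat.le_of_dvd h0 hdvd) (by omega)
  push_cast at h1 h2 ⊢
  exact le_antisymm h1 (not_lt.mp h2)

lemma Haux_norm_le (p : ℕ) [Fact p.Prime] :
    ∀ (s : List ℕ) (m n : ℕ), n < p → ‖((Haux s m n : ℚ) : ℚ_[p])‖ ≤ 1 := by
  intro s
  induction s with
  | nil => intro m n _; simp [Haux]
  | cons a t ih =>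
    intro m n hn
    show ‖((((∑ k ∈ Finset.Ioc m n, (1 / (k : ℚ) ^ a) * Haux t k n) : ℚ)) : ℚ_[p])‖ ≤ 1
    rw [Rat.cast_sum]
    apply padic_norm_sum_le_one
    intro k hk
    simp only [Finset.mem_Ioc] at hk
    rw [Rat.cast_mul]
    rw [norm_mul]
    have h1 : ‖((1 / (k : ℚ) ^ a : ℚ) : ℚ_[p])‖ = 1 := by
      push_cast
      rw [norm_div, norm_one, norm_pow, padic_norm_nat_eq_one p k (by omega) (by omega)]
      simp
    rw [h1, one_mul]
    exact ih k n hn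

/-- The `1/k` element of `ℤ_[p]` (junk value `0` if not `p`-integral). -/
noncomputable def uK (p : ℕ) [Fact p.Prime] (k : ℕ) : ℤ_[p] :=
  if h : ‖(((k : ℚ)⁻¹ : ℚ) : ℚ_[p])‖ ≤ 1 then ⟨_, h⟩ else 0

/-- `ℤ_[p]`-level multiple harmonic sum. -/
noncomputable def HZ (p : ℕ) [Fact p.Prime] : List ℕ → ℕ → ℕ → ℤ_[p]
  | [], _, _ => 1
  | a :: t, m, n => ∑ k ∈ Finset.Ioc m n, (uK p k) ^ a * HZ p t k n

lemma uK_norm (p : ℕ) [Fact p.Prime] (k : ℕ) (h0 : 0 < k) (hk : k < p) :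
    ‖(((k : ℚ)⁻¹ : ℚ) : ℚ_[p])‖ ≤ 1 := by
  push_cast
  rw [norm_inv, padic_norm_nat_eq_one p k h0 hk]
  simp

lemma uK_coe (p : ℕ) [Fact p.Prime] (k : ℕ) (h0 : 0 < k) (hk : k < p) :
    ((uK p k : ℤ_[p]) : ℚ_[p]) = ((k : ℚ_[p]))⁻¹ := by
  rw [show uK p k = ⟨_, uK_norm p k h0 hk⟩ from dif_pos (uK_norm p k h0 hk)]
  push_cast
  rfl

lemma padicInt_coe_sum (p : ℕ) [Fact p.Prime] {ι : Type*} (s : Finset ι) (f : ι → ℤ_[p]) :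
    ((∑ i ∈ s, f i : ℤ_[p]) : ℚ_[p]) = ∑ i ∈ s, ((f i : ℤ_[p]) : ℚ_[p]) :=
  map_sum PadicInt.Coe.ringHom f s

lemma HZ_coe (p : ℕ) [Fact p.Prime] :
    ∀ (s : List ℕ) (m n : ℕ), n < p →
      ((HZ p s m n : ℤ_[p]) : ℚ_[p]) = ((Haux s m n : ℚ) : ℚ_[p]) := by
  intro s
  induction s with
  | nil => intro m n _; simp [HZ, Haux]
  | cons a t ih =>
    intro m n hn
    show (((∑ k ∈ Finset.Ioc m n, (uK p k) ^ a * HZ p t k n : ℤ_[p])) : ℚ_[p])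
        = ((((∑ k ∈ Finset.Ioc m n, (1 / (k : ℚ) ^ a) * Haux t k n) : ℚ)) : ℚ_[p])
    rw [Rat.cast_sum, padicInt_coe_sum]
    apply Finset.sum_congr rfl
    intro k hk
    simp only [Finset.mem_Ioc] at hk
    rw [PadicInt.coe_mul, PadicInt.coe_pow, uK_coe p k (by omega) (by omega), ih k n hn]
    rw [Rat.cast_mul]
    congr 1
    push_cast
    rw [one_div, inv_pow]

lemma uK_toZMod (p : ℕ) [Fact p.Prime] (k : ℕ) (h0 : 0 < k) (hk : k < p) :
    PadicInt.toZMod (uK p k) = ((k : ZMod p))⁻¹ := by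
  have hk0 : ((k : ℚ_[p])) ≠ 0 := Nat.cast_ne_zero.mpr (by omega)
  have hmul : (uK p k) * (k : ℤ_[p]) = 1 := by
    apply Subtype.coe_injective
    show ((uK p k * (k : ℤ_[p]) : ℤ_[p]) : ℚ_[p]) = ((1 : ℤ_[p]) : ℚ_[p])
    rw [PadicInt.coe_mul, PadicInt.coe_one, PadicInt.coe_natCast,
      uK_coe p k h0 hk, inv_mul_cancel₀ hk0]
  have := congrArg PadicInt.toZMod hmul
  rw [map_mul, map_one, map_natCast] at this
  exact eq_inv_of_mul_eq_one_left (by rw [mul_comm] at this; rw [mul_comm]; exact this)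

lemma HZ_toZMod (p : ℕ) [Fact p.Prime] :
    ∀ (s : List ℕ) (m n : ℕ), n < p →
      PadicInt.toZMod (HZ p s m n) = Gz p s m n := by
  intro s
  induction s with
  | nil => intro m n _; simp [HZ, Gz]
  | cons a t ih =>
    intro m n hn
    show PadicInt.toZMod (∑ k ∈ Finset.Ioc m n, (uK p k) ^ a * HZ p t k n)
        = ∑ k ∈ Finset.Ioc m n, ((k : ZMod p)⁻¹) ^ a * Gz p t k n
    rw [map_sum]
    apply Finset.sum_congr rfl
    intro k hk
    simp only [Finset.mem_Ioc] at hk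
    rw [map_mul, map_pow, uK_toZMod p k (by omega) (by omega), ih k n hn]

/-- Reversal congruence: H(s; p−1) ≡ (−1)^{|s|} H(s̄; p−1) (mod p) for an odd prime p. -/
theorem H_reverse_cong (p : ℕ) (hp : p.Prime) (hodd : Odd p)
    (s : List ℕ) (hpos : ∀ i ∈ s, 0 < i) :
    (p : ℤ) ∣ (H s (p - 1) - (-1 : ℚ) ^ s.sum * H s.reverse (p - 1)).num := by
  haveI : Fact p.Prime := ⟨hp⟩
  have hp1 : 1 ≤ p := hp.one_lt.le
  have hlt : p - 1 < p := by omega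
  set q : ℚ := H s (p - 1) - (-1 : ℚ) ^ s.sum * H s.reverse (p - 1) with hq
  set z : ℤ_[p] := HZ p s 0 (p - 1) - (-1 : ℤ_[p]) ^ s.sum * HZ p s.reverse 0 (p - 1) with hz
  have hcoe : ((z : ℤ_[p]) : ℚ_[p]) = ((q : ℚ) : ℚ_[p]) := by
    rw [hz, hq]
    push_cast
    rw [HZ_coe p s 0 (p - 1) hlt, HZ_coe p s.reverse 0 (p - 1) hlt]
    rfl
  have hzero : PadicInt.toZMod z = 0 := by
    rw [hz, map_sub, map_mul, map_pow, map_neg, map_one,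
      HZ_toZMod p s 0 (p - 1) hlt, HZ_toZMod p s.reverse 0 (p - 1) hlt,
      Gz_reverse p s, sub_self]
  have hdvd : (p : ℤ_[p]) ∣ z := by
    rw [← PadicInt.norm_lt_one_iff_dvd]
    have : z ∈ RingHom.ker (PadicInt.toZMod : ℤ_[p] →+* ZMod p) := hzero
    rw [PadicInt.ker_toZMod, PadicInt.maximalIdeal_eq_span_p,
      Ideal.mem_span_singleton] at this
    rw [PadicInt.norm_lt_one_iff_dvd]
    exact this
  have hznorm : ‖((q : ℚ) : ℚ_[p])‖ < 1 := by
    rw [← hcoe, PadicInt.padic_norm_e_of_padicInt]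
    rw [PadicInt.norm_lt_one_iff_dvd]
    exact hdvd
  have hnum : ‖((q.num : ℤ) : ℚ_[p])‖ < 1 := by
    have hqn : ((q.num : ℚ)) = q * (q.den : ℚ) := by
      rw [mul_comm]
      exact_mod_cast (Rat.den_mul_eq_num q).symm
    have : ((q.num : ℤ) : ℚ_[p]) = ((q : ℚ) : ℚ_[p]) * ((q.den : ℤ) : ℚ_[p]) := by
      push_cast
      exact_mod_cast congrArg (fun x : ℚ => (x : ℚ_[p])) hqn
    rw [this, norm_mul]
    calc ‖((q : ℚ) : ℚ_[p])‖ * ‖((q.den : ℤ) : ℚ_[p])‖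
        ≤ ‖((q : ℚ) : ℚ_[p])‖ * 1 :=
          mul_le_mul_of_nonneg_left (Padic.norm_int_le_one _) (norm_nonneg _)
      _ = ‖((q : ℚ) : ℚ_[p])‖ := mul_one _
      _ < 1 := hznorm
  rwa [Padic.norm_intCast_lt_one_iff] at hnum
end

section
/- Let p be an odd prime and s = (s_1,…,s_l) a palindromic tuple of positive integers (s_i = s_{l+1−i} for all i) with odd weight. Then H(s; p−1) ≡ 0 mod p. -/
section Aux

open Finset

variable {p : ℕ} [hp : Fact p.Prime]

lemma norm_nat_unit {k : ℕ} (h1 : 0 < k) (h2 : k < p) : ‖(k : ℚ_[p])‖ = 1 := by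
  have hle : ‖(k : ℚ_[p])‖ ≤ 1 := by
    have := Padic.norm_int_le_one (p := p) (k : ℤ)
    push_cast at this
    exact this
  rcases lt_or_eq_of_le hle with h | h
  · exfalso
    have hd : (p : ℤ) ∣ (k : ℤ) := by
      apply Padic.norm_intCast_lt_one_iff.mp
      push_cast
      exact h
    have : p ∣ k := by exact_mod_cast hd
    have := Nat.le_of_dvd h1 this
    omega
  · exact h

lemma normA : ∀ (t : List ℕ) (m n : ℕ), n < p → ‖((Haux t m n : ℚ) : ℚ_[p])‖ ≤ 1
  | [], m, n, _ => by simp [Haux]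
  | a :: t, m, n, h => by
    rw [Haux]
    push_cast
    refine IsUltrametricDist.norm_sum_le_of_forall_le_of_nonneg zero_le_one (fun k hk => ?_)
    rw [mem_Ioc] at hk
    rw [norm_mul]
    have hk1 : ‖(k : ℚ_[p])‖ = 1 := norm_nat_unit (by omega) (by omega)
    have h1 : ‖(1 / (k : ℚ_[p]) ^ a)‖ = 1 := by
      rw [one_div, norm_inv, norm_pow, hk1, one_pow, inv_one]
    rw [h1, one_mul]
    exact normA t k n h

lemma pow_sub_pow_norm_le (x y : ℚ_[p]) {C : ℝ} (hx : ‖x‖ ≤ 1) (hy : ‖y‖ ≤ 1)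
    (hC : 0 ≤ C) (hxy : ‖x - y‖ ≤ C) : ∀ a : ℕ, ‖x ^ a - y ^ a‖ ≤ C
  | 0 => by simpa using hC
  | (a + 1) => by
    have hid : x ^ (a + 1) - y ^ (a + 1) = x ^ a * (x - y) + (x ^ a - y ^ a) * y := by ring
    rw [hid]
    refine le_trans (Padic.nonarchimedean _ _) (max_le ?_ ?_)
    · rw [norm_mul]
      calc ‖x ^ a‖ * ‖x - y‖ ≤ 1 * C := by
            exact mul_le_mul (by rw [norm_pow]; exact pow_le_one₀ (norm_nonneg _) hx) hxy
              (norm_nonneg _) zero_le_one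
        _ = C := one_mul C
    · rw [norm_mul]
      calc ‖x ^ a - y ^ a‖ * ‖y‖ ≤ C * 1 :=
            mul_le_mul (pow_sub_pow_norm_le x y hx hy hC hxy a) hy (norm_nonneg _) hC
        _ = C := mul_one C

lemma inv_pow_sub_norm_le (x y : ℚ_[p]) (hx : ‖x‖ = 1) (hy : ‖y‖ = 1)
    (hxy : ‖x - y‖ ≤ ‖(p : ℚ_[p])‖) (a : ℕ) :
    ‖(x ^ a)⁻¹ - (y ^ a)⁻¹‖ ≤ ‖(p : ℚ_[p])‖ := by
  have hx0 : x ≠ 0 := by intro h; rw [h, norm_zero] at hx; norm_num at hx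
  have hy0 : y ≠ 0 := by intro h; rw [h, norm_zero] at hy; norm_num at hy
  have key : (x ^ a)⁻¹ - (y ^ a)⁻¹ = (y ^ a - x ^ a) * (x ^ a)⁻¹ * (y ^ a)⁻¹ := by
    field_simp
  rw [key, norm_mul, norm_mul, norm_inv, norm_inv, norm_pow, norm_pow, hx, hy]
  simp only [one_pow, inv_one, mul_one]
  rw [norm_sub_rev]
  exact pow_sub_pow_norm_le x y (le_of_eq hx) (le_of_eq hy) (norm_nonneg _) hxy a

lemma haux_append (a : ℕ) : ∀ (t : List ℕ) (m n : ℕ),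
    Haux (t ++ [a]) m n = ∑ k ∈ Finset.Ioc m n, Haux t m (k - 1) * (1 / (k : ℚ) ^ a)
  | [], m, n => by
    simp [Haux, mul_comm]
  | b :: t, m, n => by
    rw [List.cons_append, Haux]
    simp only [haux_append a t, Finset.mul_sum]
    rw [Finset.sum_comm' (t' := Finset.Ioc m n) (s' := fun k => Finset.Ioc m (k - 1))
      (by intro j k; simp only [mem_Ioc]; omega)]
    simp only [Haux, Finset.sum_mul]
    exact Finset.sum_congr rfl fun k _ => Finset.sum_congr rfl fun j _ => by ring

lemma keyB : ∀ (t : List ℕ) (m n : ℕ), n ≤ p - 1 →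
    ‖((Haux t m n : ℚ) : ℚ_[p]) -
      (-1 : ℚ_[p]) ^ t.sum * ((Haux t.reverse ((p - 1) - n) ((p - 1) - m) : ℚ) : ℚ_[p])‖
      ≤ ‖(p : ℚ_[p])‖
  | [], m, n, _ => by simp [Haux]
  | a :: t, m, n, hn => by
    have hp2 : 2 ≤ p := hp.out.two_le
    rw [List.reverse_cons, haux_append a, Haux]
    rw [show ∑ k ∈ Finset.Ioc ((p-1) - n) ((p-1) - m),
          Haux t.reverse ((p-1) - n) (k - 1) * (1 / (k : ℚ) ^ a)
        = ∑ k ∈ Finset.Ioc m n,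
          Haux t.reverse ((p-1) - n) ((p-1) - k) * (1 / ((p - k : ℕ) : ℚ) ^ a) from
      (Finset.sum_nbij' (fun k => p - k) (fun k => p - k)
        (by intro k hk; simp only [Finset.mem_Ioc] at *; omega)
        (by intro k hk; simp only [Finset.mem_Ioc] at *; omega)
        (by intro k hk; simp only [Finset.mem_Ioc] at *; omega)
        (by intro k hk; simp only [Finset.mem_Ioc] at *; omega)
        (by intro k hk; simp only [Finset.mem_Ioc] at hk
            congr 2 <;> omega)).symm]
    push_cast
    rw [Finset.mul_sum, ← Finset.sum_sub_distrib]
    refine IsUltrametricDist.norm_sum_le_of_forall_le_of_nonneg (norm_nonneg _) (fun k hk => ?_)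
    rw [Finset.mem_Ioc] at hk
    have hkp : k < p := by omega
    have hk1 : 1 ≤ k := by omega
    set x : ℚ_[p] := (k : ℚ_[p]) with hxdef
    set w : ℚ_[p] := ((p - k : ℕ) : ℚ_[p]) with hwdef
    have hxw : x + w = (p : ℚ_[p]) := by
      rw [hxdef, hwdef]
      push_cast [Nat.cast_sub (le_of_lt hkp)]
      ring
    have hxnorm : ‖x‖ = 1 := norm_nat_unit hk1 hkp
    have hwnorm : ‖w‖ = 1 := norm_nat_unit (by omega) (by omega)
    set X : ℚ_[p] := ((Haux t k n : ℚ) : ℚ_[p]) with hXdef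
    set Y : ℚ_[p] := ((Haux t.reverse ((p-1) - n) ((p-1) - k) : ℚ) : ℚ_[p]) with hYdef
    set σ : ℚ_[p] := (-1 : ℚ_[p]) ^ t.sum with hσdef
    set ε : ℚ_[p] := (-1 : ℚ_[p]) ^ a with hεdef
    have hXY : ‖X - σ * Y‖ ≤ ‖(p : ℚ_[p])‖ := keyB t k n hn
    have hYle : ‖Y‖ ≤ 1 := normA t.reverse ((p-1) - n) ((p-1) - k) (by omega)
    have hσ : ‖σ‖ = 1 := by rw [hσdef, norm_pow, norm_neg, norm_one, one_pow]
    have hεv : ε * (w ^ a)⁻¹ = ((-w) ^ a)⁻¹ := by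
      rcases Nat.even_or_odd a with h | h <;>
        simp [hεdef, h.neg_one_pow, h.neg_pow, inv_neg]
    have huv : ‖(x ^ a)⁻¹ - ε * (w ^ a)⁻¹‖ ≤ ‖(p : ℚ_[p])‖ := by
      rw [hεv]
      refine inv_pow_sub_norm_le x (-w) hxnorm (by rw [norm_neg]; exact hwnorm) ?_ a
      rw [sub_neg_eq_add, hxw]
    have hsign : ((-1 : ℚ_[p])) ^ (a :: t).sum = ε * σ := by
      rw [List.sum_cons, pow_add]
    have hid : 1 / x ^ a * X - (-1 : ℚ_[p]) ^ (a :: t).sum * (Y * (1 / w ^ a))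
        = (x ^ a)⁻¹ * (X - σ * Y) + (σ * Y) * ((x ^ a)⁻¹ - ε * (w ^ a)⁻¹) := by
      rw [hsign]; ring
    rw [hid]
    refine le_trans (Padic.nonarchimedean _ _) (max_le ?_ ?_)
    · rw [norm_mul, norm_inv, norm_pow, hxnorm, one_pow, inv_one, one_mul]
      exact hXY
    · rw [norm_mul]
      calc ‖σ * Y‖ * ‖(x ^ a)⁻¹ - ε * (w ^ a)⁻¹‖ ≤ 1 * ‖(p : ℚ_[p])‖ := by
            refine mul_le_mul ?_ huv (norm_nonneg _) zero_le_one
            rw [norm_mul, hσ, one_mul]; exact hYle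
        _ = ‖(p : ℚ_[p])‖ := one_mul _

end Aux

/-- A palindromic tuple of odd weight gives H(s; p−1) ≡ 0 (mod p). -/
theorem H_palindrome_odd_weight (p : ℕ) (hp : p.Prime) (hodd : Odd p)
    (s : List ℕ) (hpos : ∀ i ∈ s, 0 < i) (hpal : s.reverse = s) (hw : Odd s.sum) :
    (p : ℤ) ∣ (H s (p - 1)).num := by
  haveI : Fact p.Prime := ⟨hp⟩
  have hp2 : 2 ≤ p := hp.two_le
  have hp3 : 3 ≤ p := by
    rcases hodd with ⟨j, hj⟩
    omega
  set q : ℚ := H s (p - 1) with hqdef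
  have h1 := keyB (p := p) s 0 (p - 1) le_rfl
  rw [hpal, Nat.sub_self, Nat.sub_zero, hw.neg_one_pow] at h1
  rw [show ((Haux s 0 (p-1) : ℚ) : ℚ_[p]) - (-1 : ℚ_[p]) * ((Haux s 0 (p-1) : ℚ) : ℚ_[p])
      = (2 : ℚ_[p]) * ((Haux s 0 (p-1) : ℚ) : ℚ_[p]) from by ring] at h1
  rw [norm_mul] at h1
  have h2 : ‖(2 : ℚ_[p])‖ = 1 := by
    have := norm_nat_unit (p := p) (k := 2) (by norm_num) (by omega)
    push_cast at this
    exact this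
  rw [h2, one_mul] at h1
  have hq1 : ‖(q : ℚ_[p])‖ ≤ ‖(p : ℚ_[p])‖ := h1
  have hnum : ((q.num : ℚ) : ℚ_[p]) = (q : ℚ_[p]) * ((q.den : ℚ) : ℚ_[p]) := by
    rw [← Rat.cast_mul]
    congr 1
    exact_mod_cast (Rat.mul_den_eq_num q).symm
  have hden : ‖((q.den : ℚ) : ℚ_[p])‖ ≤ 1 := by
    have := Padic.norm_int_le_one (p := p) (q.den : ℤ)
    push_cast at this ⊢
    exact this
  have hlt : ‖((q.num : ℤ) : ℚ_[p])‖ < 1 := by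
    have : ‖((q.num : ℚ) : ℚ_[p])‖ ≤ ‖(p : ℚ_[p])‖ := by
      rw [hnum, norm_mul]
      calc ‖(q : ℚ_[p])‖ * ‖((q.den : ℚ) : ℚ_[p])‖ ≤ ‖(p : ℚ_[p])‖ * 1 :=
            mul_le_mul hq1 hden (norm_nonneg _) (norm_nonneg _)
        _ = ‖(p : ℚ_[p])‖ := mul_one _
    calc ‖((q.num : ℤ) : ℚ_[p])‖ = ‖((q.num : ℚ) : ℚ_[p])‖ := by push_cast; rfl
      _ ≤ ‖(p : ℚ_[p])‖ := this
      _ < 1 := Padic.norm_p_lt_one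
  exact Padic.norm_intCast_lt_one_iff.mp hlt
end

section
/- Let p be an odd prime and s = (s_1,…,s_l) a palindromic tuple of positive integers with odd weight. Then S(s; p−1) ≡ 0 mod p, where S(s_1,…,s_l; n) = ∑_{1 ≤ k_1 ≤ ⋯ ≤ k_l ≤ n} k_1^{-s_1}⋯k_l^{-s_l}. -/
/-- Helper for the non-strict sums, with inclusive lower bound. -/
def Saux : List ℕ → ℕ → ℕ → ℚ
  | [], _, _ => 1
  | a :: t, m, n => ∑ k ∈ Finset.Icc m n, (1 / (k : ℚ) ^ a) * Saux t k n

/-- `S(s₁,…,s_l; n) = ∑_{1 ≤ k₁ ≤ ⋯ ≤ k_l ≤ n} k₁^{-s₁}⋯k_l^{-s_l}`. -/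
def S (s : List ℕ) (n : ℕ) : ℚ := Saux s 1 n

/-- Mod-p analogue of `Saux`, peeling off the smallest index. -/
def Taux (p : ℕ) : List ℕ → ℕ → ℕ → ZMod p
  | [], _, _ => 1
  | a :: t, m, n => ∑ k ∈ Finset.Icc m n, ((k : ZMod p)⁻¹) ^ a * Taux p t k n

/-- Mod-p sum peeling off the largest index. -/
def Vaux (p : ℕ) : List ℕ → ℕ → ℕ → ZMod p
  | [], _, _ => 1
  | a :: t, m, n => ∑ k ∈ Finset.Icc m n, ((k : ZMod p)⁻¹) ^ a * Vaux p t m k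

/-- p-adic integer analogue of `Saux`. -/
noncomputable def Raux (p : ℕ) [Fact p.Prime] : List ℕ → ℕ → ℕ → ℤ_[p]
  | [], _, _ => 1
  | a :: t, m, n => ∑ k ∈ Finset.Icc m n, (((k : ℤ_[p]) ^ a)).inv * Raux p t k n

lemma Taux_append (p : ℕ) (s : List ℕ) (b : ℕ) : ∀ m n : ℕ,
    Taux p (s ++ [b]) m n
      = ∑ j ∈ Finset.Icc m n, Taux p s m j * ((j : ZMod p)⁻¹) ^ b := by
  induction s with
  | nil =>
    intro m n
    simp [Taux, mul_comm]
  | cons a t ih =>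
    intro m n
    show (∑ k ∈ Finset.Icc m n, ((k : ZMod p)⁻¹) ^ a * Taux p (t ++ [b]) k n) = _
    have : ∀ k ∈ Finset.Icc m n, ((k : ZMod p)⁻¹) ^ a * Taux p (t ++ [b]) k n
        = ∑ j ∈ Finset.Icc k n, ((k : ZMod p)⁻¹) ^ a * Taux p t k j * ((j : ZMod p)⁻¹) ^ b := by
      intro k hk
      rw [ih k n, Finset.mul_sum]
      exact Finset.sum_congr rfl fun j hj => by ring
    rw [Finset.sum_congr rfl this]
    rw [Finset.sum_comm' (s := Finset.Icc m n) (t := fun k => Finset.Icc k n)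
      (t' := Finset.Icc m n) (s' := fun j => Finset.Icc m j)
      (by intro k j; simp only [Finset.mem_Icc]; omega)]
    apply Finset.sum_congr rfl
    intro j hj
    show _ = Taux p (a :: t) m j * ((j : ZMod p)⁻¹) ^ b
    rw [show Taux p (a :: t) m j = ∑ k ∈ Finset.Icc m j, ((k : ZMod p)⁻¹) ^ a * Taux p t k j
      from rfl, Finset.sum_mul]

lemma Taux_reverse (p : ℕ) (s : List ℕ) : ∀ m n : ℕ,
    Taux p s.reverse m n = Vaux p s m n := by
  induction s with
  | nil => intro m n; rfl
  | cons a t ih =>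
    intro m n
    rw [List.reverse_cons, Taux_append]
    show _ = ∑ k ∈ Finset.Icc m n, ((k : ZMod p)⁻¹) ^ a * Vaux p t m k
    exact Finset.sum_congr rfl fun j hj => by rw [ih, mul_comm]

lemma Taux_reflect (p : ℕ) [Fact p.Prime] (s : List ℕ) : ∀ m n : ℕ, 1 ≤ m → n ≤ p - 1 →
    Taux p s m n = (-1 : ZMod p) ^ s.sum * Vaux p s (p - n) (p - m) := by
  induction s with
  | nil => intro m n _ _; simp [Taux, Vaux]
  | cons a t ih =>
    intro m n hm hn
    show (∑ k ∈ Finset.Icc m n, ((k : ZMod p)⁻¹) ^ a * Taux p t k n) = _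
    have key : ∀ k ∈ Finset.Icc m n, ((k : ZMod p)⁻¹) ^ a * Taux p t k n
        = (-1 : ZMod p) ^ (a + t.sum) *
          ((((p - k : ℕ) : ZMod p)⁻¹) ^ a * Vaux p t (p - n) (p - k)) := by
      intro k hk
      simp only [Finset.mem_Icc] at hk
      have hk1 : 1 ≤ k := le_trans hm hk.1
      have hkp : k ≤ p - 1 := le_trans hk.2 hn
      have hcast : ((p - k : ℕ) : ZMod p) = - (k : ZMod p) := by
        have : ((p - k : ℕ) : ZMod p) = (p : ZMod p) - (k : ZMod p) := by
          push_cast [Nat.cast_sub (by omega : k ≤ p)]; ring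
        rw [this, ZMod.natCast_self, zero_sub]
      rw [hcast, inv_neg, neg_pow, ih k n hk1 hn, pow_add]
      ring_nf
      rw [show ((-1 : ZMod p)) ^ (a * 2) = 1 by rw [mul_comm a 2, pow_mul, neg_one_sq, one_pow], mul_one]
    rw [Finset.sum_congr rfl key, ← Finset.mul_sum, List.sum_cons]
    congr 1
    -- reindex k ↦ p - k
    rw [show Vaux p (a :: t) (p - n) (p - m)
        = ∑ j ∈ Finset.Icc (p - n) (p - m), ((j : ZMod p)⁻¹) ^ a * Vaux p t (p - n) j
      from rfl]
    have hp2 : 2 ≤ p := (Fact.out : p.Prime).two_le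
    refine Finset.sum_nbij' (fun k => p - k) (fun j => p - j) ?_ ?_ ?_ ?_ ?_
    · intro k hk; simp only [Finset.mem_Icc] at hk ⊢; omega
    · intro j hj; simp only [Finset.mem_Icc] at hj ⊢; omega
    · intro k hk; simp only [Finset.mem_Icc] at hk; show p - (p - k) = k; omega
    · intro j hj; simp only [Finset.mem_Icc] at hj; show p - (p - j) = j; omega
    · intro k hk; rfl

/-- The key vanishing mod p. -/
lemma Taux_zero (p : ℕ) (hp : p.Prime) (hodd : Odd p) (s : List ℕ)
    (hpal : s.reverse = s) (hw : Odd s.sum) :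
    Taux p s 1 (p - 1) = 0 := by
  haveI : Fact p.Prime := ⟨hp⟩
  have hp3 : 3 ≤ p := by
    rcases hp.two_le.lt_or_eq with h | h
    · omega
    · exfalso; rw [← h] at hodd; exact (Nat.not_odd_iff_even.mpr (by decide)) hodd
  have h1 := Taux_reflect p s 1 (p - 1) le_rfl le_rfl
  rw [show p - (p - 1) = 1 by omega] at h1
  have h2 : Vaux p s 1 (p - 1) = Taux p s 1 (p - 1) := by
    rw [← Taux_reverse, hpal]
  rw [h2, hw.neg_one_pow, neg_one_mul] at h1
  have h3 : (2 : ZMod p) * Taux p s 1 (p - 1) = 0 := by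
    have := eq_neg_iff_add_eq_zero.mp h1
    rw [two_mul]; exact this
  have h2ne : (2 : ZMod p) ≠ 0 := by
    have : ((2 : ℕ) : ZMod p) ≠ 0 := by
      rw [Ne, ZMod.natCast_eq_zero_iff]
      intro hdvd
      have := Nat.le_of_dvd (by norm_num) hdvd
      omega
    simpa using this
  rcases mul_eq_zero.mp h3 with h | h
  · exact absurd h h2ne
  · exact h

lemma padicIntCoe_sum (p : ℕ) [Fact p.Prime] (s : Finset ℕ) (f : ℕ → ℤ_[p]) :
    ((∑ k ∈ s, f k : ℤ_[p]) : ℚ_[p]) = ∑ k ∈ s, (f k : ℚ_[p]) :=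
  map_sum PadicInt.Coe.ringHom f s

lemma norm_natCast_eq_one (p : ℕ) [Fact p.Prime] {k : ℕ} (h1 : 1 ≤ k) (h2 : k ≤ p - 1) :
    ‖((k : ℕ) : ℤ_[p])‖ = 1 := by
  have hle : ‖((k : ℕ) : ℤ_[p])‖ ≤ 1 := PadicInt.norm_le_one _
  rcases lt_or_eq_of_le hle with h | h
  · exfalso
    rw [show (((k : ℕ) : ℤ_[p])) = (((k : ℤ) : ℤ_[p])) by push_cast; ring] at h
    rw [PadicInt.norm_int_lt_one_iff_dvd] at h
    have := Int.le_of_dvd (by exact_mod_cast h1) h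
    have hp2 := (Fact.out : p.Prime).two_le
    omega
  · exact h

lemma Raux_coe (p : ℕ) [Fact p.Prime] (s : List ℕ) : ∀ m n : ℕ, 1 ≤ m → n ≤ p - 1 →
    ((Raux p s m n : ℤ_[p]) : ℚ_[p]) = ((Saux s m n : ℚ) : ℚ_[p]) := by
  induction s with
  | nil =>
    intro m n _ _
    show ((1 : ℤ_[p]) : ℚ_[p]) = ((Saux [] m n : ℚ) : ℚ_[p])
    rw [show Saux [] m n = 1 from rfl]
    simp
  | cons a t ih =>
    intro m n hm hn
    show ((∑ k ∈ Finset.Icc m n, (((k : ℤ_[p]) ^ a)).inv * Raux p t k n : ℤ_[p]) : ℚ_[p]) = _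
    rw [show ((Saux (a :: t) m n : ℚ) : ℚ_[p])
        = ∑ k ∈ Finset.Icc m n, (1 / (k : ℚ_[p]) ^ a) * ((Saux t k n : ℚ) : ℚ_[p]) by
      rw [show Saux (a :: t) m n = ∑ k ∈ Finset.Icc m n, (1 / (k : ℚ) ^ a) * Saux t k n
        from rfl]
      push_cast
      ring]
    rw [padicIntCoe_sum]
    apply Finset.sum_congr rfl
    intro k hk
    simp only [Finset.mem_Icc] at hk
    have hk1 : 1 ≤ k := le_trans hm hk.1
    have hkp : k ≤ p - 1 := le_trans hk.2 hn
    have hnorm : ‖((k : ℕ) : ℤ_[p]) ^ a‖ = 1 := by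
      rw [norm_pow, norm_natCast_eq_one p hk1 hkp, one_pow]
    have hmul : ((k : ℤ_[p]) ^ a) * (((k : ℤ_[p]) ^ a)).inv = 1 := PadicInt.mul_inv hnorm
    have hmul' : ((k : ℚ_[p]) ^ a) * (((((k : ℤ_[p]) ^ a)).inv : ℤ_[p]) : ℚ_[p]) = 1 := by
      have := congrArg (PadicInt.Coe.ringHom : ℤ_[p] →+* ℚ_[p]) hmul
      simp only [map_mul, map_pow, map_natCast, map_one] at this
      exact this
    have hinv : ((((((k : ℤ_[p]) ^ a)).inv : ℤ_[p])) : ℚ_[p]) = 1 / (k : ℚ_[p]) ^ a := by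
      rw [eq_div_iff ?_, mul_comm]
      · exact hmul'
      · intro h0
        rw [h0, zero_mul] at hmul'
        exact zero_ne_one hmul'
    rw [PadicInt.coe_mul, ih k n hk1 hn, hinv]

lemma Raux_toZMod (p : ℕ) [Fact p.Prime] (s : List ℕ) : ∀ m n : ℕ, 1 ≤ m → n ≤ p - 1 →
    PadicInt.toZMod (Raux p s m n) = Taux p s m n := by
  induction s with
  | nil =>
    intro m n _ _
    show PadicInt.toZMod (1 : ℤ_[p]) = (1 : ZMod p)
    simp
  | cons a t ih =>
    intro m n hm hn
    show PadicInt.toZMod (∑ k ∈ Finset.Icc m n, (((k : ℤ_[p]) ^ a)).inv * Raux p t k n) = _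
    rw [map_sum]
    apply Finset.sum_congr rfl
    intro k hk
    simp only [Finset.mem_Icc] at hk
    have hk1 : 1 ≤ k := le_trans hm hk.1
    have hkp : k ≤ p - 1 := le_trans hk.2 hn
    have hnorm : ‖((k : ℕ) : ℤ_[p]) ^ a‖ = 1 := by
      rw [norm_pow, norm_natCast_eq_one p hk1 hkp, one_pow]
    have hmul : (((k : ℤ_[p]) ^ a)).inv * ((k : ℤ_[p]) ^ a) = 1 := PadicInt.inv_mul hnorm
    have := congrArg (PadicInt.toZMod : ℤ_[p] →+* ZMod p) hmul
    rw [map_mul, map_one, map_pow, map_natCast] at this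
    have hinv : PadicInt.toZMod ((((k : ℤ_[p]) ^ a)).inv) = ((k : ZMod p)⁻¹) ^ a :=
      (eq_inv_of_mul_eq_one_left this).trans (inv_pow _ _).symm
    rw [map_mul, hinv, ih k n hk1 hn]

/-- A palindromic tuple of odd weight gives S(s; p−1) ≡ 0 (mod p). -/
theorem S_palindrome_odd_weight (p : ℕ) (hp : p.Prime) (hodd : Odd p)
    (s : List ℕ) (hpos : ∀ i ∈ s, 0 < i) (hpal : s.reverse = s) (hw : Odd s.sum) :
    (p : ℤ) ∣ (S s (p - 1)).num := by
  haveI : Fact p.Prime := ⟨hp⟩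
  set q : ℚ := S s (p - 1) with hq
  have hq' : q = Saux s 1 (p - 1) := rfl
  set z : ℤ_[p] := Raux p s 1 (p - 1) with hz
  have h1 : ((z : ℤ_[p]) : ℚ_[p]) = ((q : ℚ) : ℚ_[p]) := by
    rw [hq', hz]; exact Raux_coe p s 1 (p - 1) le_rfl le_rfl
  have h2 : PadicInt.toZMod z = 0 := by
    rw [hz, Raux_toZMod p s 1 (p - 1) le_rfl le_rfl]
    exact Taux_zero p hp hodd s hpal hw
  have h3 : ‖z‖ < 1 := by
    rw [PadicInt.norm_lt_one_iff_dvd]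
    have : z ∈ RingHom.ker (PadicInt.toZMod : ℤ_[p] →+* ZMod p) := by
      rw [RingHom.mem_ker]; exact h2
    rw [PadicInt.ker_toZMod, PadicInt.maximalIdeal_eq_span_p, Ideal.mem_span_singleton] at this
    exact this
  have h4 : ‖((q : ℚ) : ℚ_[p])‖ < 1 := by
    rw [← h1]
    rwa [PadicInt.norm_def] at h3
  -- now deduce p ∣ q.num
  have hden : ((q.den : ℚ_[p])) ≠ 0 ∨ True := Or.inr trivial
  have hnum : ((q.num : ℚ_[p])) = ((q : ℚ) : ℚ_[p]) * ((q.den : ℤ) : ℚ_[p]) := by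
    have : ((q.num : ℚ)) = q * (q.den : ℚ) := by
      rw [mul_comm, Rat.den_mul_eq_num (q := q)]
    calc ((q.num : ℚ_[p])) = (((q.num : ℚ) : ℚ_[p])) := by push_cast; ring
      _ = (((q * (q.den : ℚ) : ℚ) : ℚ_[p])) := by rw [← this]
      _ = ((q : ℚ) : ℚ_[p]) * ((q.den : ℤ) : ℚ_[p]) := by push_cast; ring
  have h5 : ‖((q.num : ℚ_[p]))‖ < 1 := by
    rw [hnum, norm_mul]
    calc ‖((q : ℚ) : ℚ_[p])‖ * ‖(((q.den : ℤ)) : ℚ_[p])‖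
        ≤ ‖((q : ℚ) : ℚ_[p])‖ * 1 :=
          mul_le_mul_of_nonneg_left (Padic.norm_int_le_one _) (norm_nonneg _)
      _ = ‖((q : ℚ) : ℚ_[p])‖ := mul_one _
      _ < 1 := h4
  rwa [Padic.norm_intCast_lt_one_iff] at h5
end

section
/- Let p ≥ 5 be a prime. Then H(1,2; p−1) ≡ B_{p−3} mod p, i.e., the multiple harmonic sum ∑_{1 ≤ j < k ≤ p−1} 1/(j·k²) is congruent modulo p to the Bernoulli number B_{p−3}. -/
lemma range_eq_insert_Ioc {p : ℕ} (hp : 0 < p) :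
    Finset.range p = insert 0 (Finset.Ioc 0 (p-1)) := by
  ext x; simp only [Finset.mem_range, Finset.mem_insert, Finset.mem_Ioc]; omega

lemma zmod_sum_pow (p : ℕ) [Fact p.Prime] (m : ℕ) (hm : m ≠ 0) :
    (∑ k ∈ Finset.range p, (k : ZMod p) ^ m) = if (p - 1) ∣ m then -1 else 0 := by
  classical
  have hcard : Fintype.card (ZMod p) = p := ZMod.card p
  have h1 : (∑ k ∈ Finset.range p, (k : ZMod p) ^ m) = ∑ x : ZMod p, x ^ m := by
    rw [← Fin.sum_univ_eq_sum_range (fun k => ((k : ℕ) : ZMod p) ^ m) p]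
    apply Fintype.sum_bijective (fun i : Fin p => ((i : ℕ) : ZMod p))
    · rw [Fintype.bijective_iff_injective_and_card]
      constructor
      · intro a b hab
        have := congrArg ZMod.val hab
        rwa [ZMod.val_cast_of_lt a.2, ZMod.val_cast_of_lt b.2, Fin.val_inj] at this
      · simp [hcard]
    · intro i; rfl
  have h0 : (0 : ZMod p) ^ m = 0 := zero_pow hm
  have h2 : ∑ x : ZMod p, x ^ m = ∑ x : (ZMod p)ˣ, ((x : ZMod p)) ^ m := by
    rw [← Finset.sum_erase_add Finset.univ _ (Finset.mem_univ (0 : ZMod p)), h0, add_zero]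
    refine Finset.sum_bij' (fun (b : ZMod p) (hb : b ∈ Finset.univ.erase 0) =>
        Units.mk0 b (Finset.ne_of_mem_erase hb)) (fun (x : (ZMod p)ˣ) _ => (x : ZMod p))
        (fun a ha => Finset.mem_univ _)
        (fun x _ => Finset.mem_erase.mpr ⟨Units.ne_zero x, Finset.mem_univ _⟩)
        (fun a ha => rfl) (fun x _ => Units.ext rfl) (fun a ha => rfl)
  rw [h1, h2]
  have h3 := FiniteField.sum_pow_units (ZMod p) m
  rw [hcard] at h3
  rw [← h3]

lemma int_sum_pow_dvd (p : ℕ) [Fact p.Prime] (m : ℕ) (hm : m ≠ 0) (hnd : ¬ (p - 1) ∣ m) :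
    (p : ℤ) ∣ ∑ k ∈ Finset.range p, (k : ℤ) ^ m := by
  rw [← ZMod.intCast_zmod_eq_zero_iff_dvd]
  push_cast
  rw [zmod_sum_pow p m hm, if_neg hnd]

lemma norm_int_le_inv (p : ℕ) [Fact p.Prime] {z : ℤ} (h : (p : ℤ) ∣ z) :
    ‖(z : ℚ_[p])‖ ≤ ((p : ℝ))⁻¹ := by
  have := (Padic.norm_int_le_pow_iff_dvd (p := p) z 1).mpr (by simpa using h)
  simpa using this

lemma norm_nat_le_one (p : ℕ) [Fact p.Prime] (n : ℕ) : ‖(n : ℚ_[p])‖ ≤ 1 := by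
  have := Padic.norm_int_le_one (p := p) (n : ℤ)
  simpa using this

lemma norm_nat_eq_one (p : ℕ) [Fact p.Prime] {k : ℕ} (h : ¬ p ∣ k) : ‖(k : ℚ_[p])‖ = 1 := by
  have h1 : ‖((k : ℤ) : ℚ_[p])‖ ≤ 1 := Padic.norm_int_le_one _
  have h2 : ¬ ‖((k : ℤ) : ℚ_[p])‖ < 1 := by
    rw [Padic.norm_intCast_lt_one_iff]
    exact_mod_cast h
  push_cast at h1 h2
  linarith [lt_or_eq_of_le h1]

lemma Ioc_pow_sum_eq {R : Type*} [Semiring R] {p m : ℕ} (hp : 0 < p) (hm : m ≠ 0) :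
    ∑ k ∈ Finset.Ioc 0 (p - 1), (k : R) ^ m = ∑ k ∈ Finset.range p, (k : R) ^ m := by
  rw [range_eq_insert_Ioc hp, Finset.sum_insert (by simp)]
  simp [zero_pow hm]

lemma fermat_norm (p : ℕ) [Fact p.Prime] {k : ℕ} (h : ¬ p ∣ k) :
    ‖1 - (k : ℚ_[p]) ^ (p - 1)‖ ≤ ((p : ℝ))⁻¹ := by
  have hz : (p : ℤ) ∣ (1 - (k : ℤ) ^ (p - 1)) := by
    rw [← ZMod.intCast_zmod_eq_zero_iff_dvd]
    push_cast
    rw [ZMod.pow_card_sub_one_eq_one (by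
      rw [Ne, ZMod.natCast_eq_zero_iff]; exact h)]
    ring
  have := norm_int_le_inv p hz
  push_cast at this
  exact this

lemma padic_norm_sub_le {p : ℕ} [Fact p.Prime] {x y : ℚ_[p]} {C : ℝ}
    (h1 : ‖x‖ ≤ C) (h2 : ‖y‖ ≤ C) : ‖x - y‖ ≤ C := by
  have := Padic.nonarchimedean x (-y)
  rw [← sub_eq_add_neg, norm_neg] at this
  exact this.trans (max_le h1 h2)

lemma padic_norm_add_le {p : ℕ} [Fact p.Prime] {x y : ℚ_[p]} {C : ℝ}
    (h1 : ‖x‖ ≤ C) (h2 : ‖y‖ ≤ C) : ‖x + y‖ ≤ C :=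
  (Padic.nonarchimedean x y).trans (max_le h1 h2)

lemma bernoulli_padic_norm_le (p : ℕ) [hp : Fact p.Prime] :
    ∀ m : ℕ, m ≤ p - 2 → ‖((bernoulli m : ℚ) : ℚ_[p])‖ ≤ 1 := by
  have hp2 : 2 ≤ p := hp.1.two_le
  intro m
  induction m using Nat.strong_induction_on with
  | _ m ih =>
    intro hm
    rcases Nat.eq_zero_or_pos m with rfl | hm0
    · simp
    have hm1 : (m + 1 : ℚ) ≠ 0 := by positivity
    have hfa := sum_range_pow p m
    rw [Finset.sum_range_succ] at hfa
    have hch : (m + 1).choose m = m + 1 := Nat.choose_succ_self_right m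
    have he1 : m + 1 - m = 1 := by omega
    rw [hch, he1, pow_one] at hfa
    have hkey : (p : ℚ) * bernoulli m =
        (∑ k ∈ Finset.range p, (k : ℚ) ^ m) -
          ∑ i ∈ Finset.range m,
            bernoulli i * ((m + 1).choose i) * (p : ℚ) ^ (m + 1 - i) / (m + 1) := by
      rw [hfa]
      push_cast
      field_simp
      ring
    have hcast := congrArg (fun q : ℚ => (q : ℚ_[p])) hkey
    push_cast at hcast
    have hn1 : ‖∑ k ∈ Finset.range p, (k : ℚ_[p]) ^ m‖ ≤ ((p : ℝ))⁻¹ := by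
      have hicast : (∑ k ∈ Finset.range p, (k : ℚ_[p]) ^ m) =
          (((∑ k ∈ Finset.range p, (k : ℤ) ^ m : ℤ)) : ℚ_[p]) := by push_cast; rfl
      rw [hicast]
      apply norm_int_le_inv
      apply int_sum_pow_dvd p m (by omega)
      intro hdvd
      have := Nat.le_of_dvd hm0 hdvd
      omega
    have hn2 : ‖∑ i ∈ Finset.range m,
        ((bernoulli i : ℚ) : ℚ_[p]) * ((m + 1).choose i : ℚ_[p]) *
          (p : ℚ_[p]) ^ (m + 1 - i) / ((m : ℚ_[p]) + 1)‖ ≤ ((p : ℝ))⁻¹ := by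
      apply IsUltrametricDist.norm_sum_le_of_forall_le_of_nonneg (by positivity)
      intro i hi
      rw [Finset.mem_range] at hi
      rw [norm_div, norm_mul, norm_mul, norm_pow]
      have hb : ‖((bernoulli i : ℚ) : ℚ_[p])‖ ≤ 1 := ih i hi (by omega)
      have hc : ‖(((m + 1).choose i : ℕ) : ℚ_[p])‖ ≤ 1 := norm_nat_le_one p _
      have hpp : ‖(p : ℚ_[p])‖ ^ (m + 1 - i) ≤ ((p : ℝ))⁻¹ := by
        rw [Padic.norm_p]
        calc ((p : ℝ)⁻¹) ^ (m + 1 - i) ≤ ((p : ℝ)⁻¹) ^ 1 := by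
              apply pow_le_pow_of_le_one (by positivity)
              · apply inv_le_one_of_one_le₀; exact_mod_cast hp.1.one_le
              · omega
          _ = (p : ℝ)⁻¹ := pow_one _
      have hd : ‖((m : ℚ_[p]) + 1)‖ = 1 := by
        have : ((m : ℚ_[p]) + 1) = (((m + 1 : ℕ)) : ℚ_[p]) := by push_cast; ring
        rw [this]
        apply norm_nat_eq_one
        intro hdvd
        have := Nat.le_of_dvd (by omega) hdvd
        omega
      rw [hd, div_one]
      calc ‖((bernoulli i : ℚ) : ℚ_[p])‖ * ‖(((m+1).choose i : ℕ) : ℚ_[p])‖ * ‖(p : ℚ_[p])‖ ^ (m+1-i)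
          ≤ 1 * 1 * ((p : ℝ))⁻¹ := by
            apply mul_le_mul (mul_le_mul hb hc (norm_nonneg _) (by linarith)) hpp
              (by positivity) (by norm_num)
        _ = ((p : ℝ))⁻¹ := by ring
    have hfin : ‖(p : ℚ_[p]) * ((bernoulli m : ℚ) : ℚ_[p])‖ ≤ ((p : ℝ))⁻¹ := by
      rw [hcast]
      exact padic_norm_sub_le hn1 hn2
    rw [norm_mul, Padic.norm_p] at hfin
    have hppos : (0 : ℝ) < (p : ℝ)⁻¹ := by
      have : (0:ℝ) < (p:ℝ) := by exact_mod_cast hp.1.pos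
      positivity
    exact le_of_mul_le_mul_left (by rw [mul_one]; exact hfin) hppos

lemma choose_zmod_one (p : ℕ) [hp : Fact p.Prime] (h5 : 5 ≤ p) :
    (((p - 1).choose (p - 3) : ℕ) : ZMod p) = 1 := by
  have hsym : (p - 1).choose (p - 3) = (p - 1).choose 2 := by
    have := Nat.choose_symm (show 2 ≤ p - 1 by omega)
    rw [show p - 1 - 2 = p - 3 by omega] at this
    exact this
  rw [hsym]
  have h2 : 2 * ((p - 1).choose 2) = (p - 1) * (p - 2) := by
    rw [Nat.choose_two_right]
    rw [show p - 1 - 1 = p - 2 by omega]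
    apply Nat.mul_div_cancel'
    have : Even ((p - 2) * (p - 2 + 1)) := Nat.even_mul_succ_self _
    rw [show p - 2 + 1 = p - 1 by omega, mul_comm] at this
    exact this.two_dvd
  have hcast := congrArg (fun n : ℕ => (n : ZMod p)) h2
  push_cast at hcast
  have hp1 : ((p - 1 : ℕ) : ZMod p) = -1 := by
    rw [Nat.cast_sub (by omega), ZMod.natCast_self]; simp
  have hp2 : ((p - 2 : ℕ) : ZMod p) = -2 := by
    rw [Nat.cast_sub (by omega), ZMod.natCast_self]; simp
  rw [hp1, hp2] at hcast
  have h2ne : (2 : ZMod p) ≠ 0 := by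
    rw [show (2 : ZMod p) = ((2 : ℕ) : ZMod p) by push_cast; ring, Ne,
      ZMod.natCast_eq_zero_iff]
    intro hdvd
    have := Nat.le_of_dvd (by omega) hdvd
    omega
  apply mul_left_cancel₀ h2ne
  rw [hcast]; ring

lemma main_term_dvd (p : ℕ) [hp : Fact p.Prime] (h5 : 5 ≤ p) :
    (p : ℤ) ∣ ((p - 1).choose (p - 3) : ℤ) * (∑ k ∈ Finset.Ioc 0 (p - 1), (k : ℤ) ^ (p - 1))
      - ((p - 1 : ℕ) : ℤ) := by
  rw [← ZMod.intCast_zmod_eq_zero_iff_dvd]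
  push_cast
  have hT : (∑ k ∈ Finset.Ioc 0 (p - 1), ((k : ℕ) : ZMod p) ^ (p - 1)) = -1 := by
    have hone : ∀ k ∈ Finset.Ioc 0 (p - 1), ((k : ℕ) : ZMod p) ^ (p - 1) = 1 := by
      intro k hk
      rw [Finset.mem_Ioc] at hk
      apply ZMod.pow_card_sub_one_eq_one
      rw [Ne, ZMod.natCast_eq_zero_iff]
      intro hdvd
      have := Nat.le_of_dvd hk.1 hdvd
      omega
    rw [Finset.sum_congr rfl hone, Finset.sum_const, Nat.card_Ioc, nsmul_eq_mul, mul_one]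
    rw [Nat.sub_zero, Nat.cast_sub (by omega), ZMod.natCast_self]; simp
  rw [hT, choose_zmod_one p h5]
  rw [Nat.cast_sub (by omega), ZMod.natCast_self]
  simp

/-- For a prime p ≥ 5, H(1,2; p−1) ≡ B_{p−3} (mod p). -/
theorem H12_cong_bernoulli (p : ℕ) (hp : p.Prime) (h5 : 5 ≤ p) :
    (p : ℤ) ∣ (H [1, 2] (p - 1) - bernoulli (p - 3)).num := by
  haveI : Fact p.Prime := ⟨hp⟩
  have hppos : (0:ℝ) < (p:ℝ) := by exact_mod_cast hp.pos
  have hε0 : (0:ℝ) ≤ (p:ℝ)⁻¹ := by positivity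
  have hε1 : (p:ℝ)⁻¹ ≤ 1 := by
    rw [inv_le_one_iff₀]; right; exact_mod_cast hp.one_le
  -- Reduce to a p-adic norm bound
  suffices hnorm : ‖((H [1, 2] (p - 1) - bernoulli (p - 3) : ℚ) : ℚ_[p])‖ ≤ ((p : ℝ))⁻¹ by
    set q : ℚ := H [1, 2] (p - 1) - bernoulli (p - 3) with hq
    have hd : ((q.den : ℕ) : ℚ) ≠ 0 := by
      exact_mod_cast q.den_ne_zero
    have h0 : (q.num : ℚ) = q * (q.den : ℚ) := by
      calc (q.num : ℚ) = (q.num : ℚ) / q.den * q.den := by rw [div_mul_cancel₀ _ hd]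
        _ = q * (q.den : ℚ) := by rw [Rat.num_div_den q]
    have hnum : ((q.num : ℤ) : ℚ_[p]) = (q : ℚ_[p]) * ((q.den : ℕ) : ℚ_[p]) := by
      have := congrArg (fun x : ℚ => (x : ℚ_[p])) h0
      push_cast at this ⊢
      exact this
    have hfin : ‖((q.num : ℤ) : ℚ_[p])‖ ≤ (p : ℝ)⁻¹ := by
      rw [hnum, norm_mul]
      calc ‖(q : ℚ_[p])‖ * ‖((q.den : ℕ) : ℚ_[p])‖ ≤ (p:ℝ)⁻¹ * 1 :=
            mul_le_mul hnorm (norm_nat_le_one p _) (norm_nonneg _) hε0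
        _ = (p:ℝ)⁻¹ := mul_one _
    have hdvd := (Padic.norm_int_le_pow_iff_dvd (p := p) q.num 1).mp (by simpa using hfin)
    simpa using hdvd
  -- basic facts about indices
  have hkdvd : ∀ k ∈ Finset.Ioc 0 (p-1), ¬ p ∣ k := by
    intro k hk
    rw [Finset.mem_Ioc] at hk
    intro hdvd
    have := Nat.le_of_dvd hk.1 hdvd
    omega
  have hknorm : ∀ k ∈ Finset.Ioc 0 (p-1), ‖(k : ℚ_[p])‖ = 1 := fun k hk =>
    norm_nat_eq_one p (hkdvd k hk)
  have hkne : ∀ k ∈ Finset.Ioc 0 (p-1), (k : ℚ_[p]) ≠ 0 := by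
    intro k hk
    rw [← norm_ne_zero_iff, hknorm k hk]
    norm_num
  -- termwise congruences
  have key1 : ∀ k ∈ Finset.Ioc 0 (p-1), ‖1/(k:ℚ_[p]) - (k:ℚ_[p])^(p-2)‖ ≤ (p:ℝ)⁻¹ := by
    intro k hk
    have hne := hkne k hk
    have hid : 1/(k:ℚ_[p]) - (k:ℚ_[p])^(p-2) = (1/(k:ℚ_[p])) * (1 - (k:ℚ_[p])^(p-1)) := by
      rw [show p - 1 = (p-2)+1 by omega, pow_succ]
      field_simp
    rw [hid, norm_mul, one_div, norm_inv, hknorm k hk, inv_one, one_mul]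
    exact fermat_norm p (hkdvd k hk)
  have key2 : ∀ k ∈ Finset.Ioc 0 (p-1), ‖1/(k:ℚ_[p])^2 - (k:ℚ_[p])^(p-3)‖ ≤ (p:ℝ)⁻¹ := by
    intro k hk
    have hne := hkne k hk
    have hid : 1/(k:ℚ_[p])^2 - (k:ℚ_[p])^(p-3) = (1/(k:ℚ_[p])^2) * (1 - (k:ℚ_[p])^(p-1)) := by
      rw [show p - 1 = (p-3)+2 by omega, pow_add]
      field_simp
    rw [hid, norm_mul, one_div, norm_inv, norm_pow, hknorm k hk, one_pow, inv_one, one_mul]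
    exact fermat_norm p (hkdvd k hk)
  -- the cast of H
  have hH : ((H [1, 2] (p - 1) : ℚ) : ℚ_[p]) =
      ∑ j ∈ Finset.Ioc 0 (p-1), (1/(j:ℚ_[p])) * ∑ k ∈ Finset.Ioc j (p-1), 1/(k:ℚ_[p])^2 := by
    have h1 : H [1,2] (p-1) = ∑ j ∈ Finset.Ioc 0 (p-1), (1/(j:ℚ)) *
        ∑ k ∈ Finset.Ioc j (p-1), 1/(k:ℚ)^2 := by
      simp [H, Haux]
    rw [h1]
    push_cast
    rfl
  -- the approximating double power sum
  set B : ℚ_[p] := ∑ j ∈ Finset.Ioc 0 (p-1), (j:ℚ_[p])^(p-2) *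
      ∑ k ∈ Finset.Ioc j (p-1), (k:ℚ_[p])^(p-3) with hBdef
  have hsubset : ∀ j ∈ Finset.Ioc 0 (p-1), Finset.Ioc j (p-1) ⊆ Finset.Ioc 0 (p-1) := by
    intro j hj
    apply Finset.Ioc_subset_Ioc_left
    exact Nat.zero_le j
  have claimAB : ‖((H [1, 2] (p - 1) : ℚ) : ℚ_[p]) - B‖ ≤ (p:ℝ)⁻¹ := by
    rw [hH, hBdef, ← Finset.sum_sub_distrib]
    apply IsUltrametricDist.norm_sum_le_of_forall_le_of_nonneg hε0
    intro j hj
    have hYle : ‖∑ k ∈ Finset.Ioc j (p-1), (k:ℚ_[p])^(p-3)‖ ≤ 1 := by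
      apply IsUltrametricDist.norm_sum_le_of_forall_le_of_nonneg zero_le_one
      intro k hk
      rw [norm_pow, hknorm k (hsubset j hj hk), one_pow]
    have hid : (1/(j:ℚ_[p])) * (∑ k ∈ Finset.Ioc j (p-1), 1/(k:ℚ_[p])^2) -
        (j:ℚ_[p])^(p-2) * ∑ k ∈ Finset.Ioc j (p-1), (k:ℚ_[p])^(p-3) =
        (1/(j:ℚ_[p])) * ((∑ k ∈ Finset.Ioc j (p-1), 1/(k:ℚ_[p])^2) -
          ∑ k ∈ Finset.Ioc j (p-1), (k:ℚ_[p])^(p-3)) +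
        (1/(j:ℚ_[p]) - (j:ℚ_[p])^(p-2)) * ∑ k ∈ Finset.Ioc j (p-1), (k:ℚ_[p])^(p-3) := by
      ring
    rw [hid]
    apply padic_norm_add_le
    · rw [norm_mul, one_div, norm_inv, hknorm j hj, inv_one, one_mul,
        ← Finset.sum_sub_distrib]
      apply IsUltrametricDist.norm_sum_le_of_forall_le_of_nonneg hε0
      intro k hk
      exact key2 k (hsubset j hj hk)
    · rw [norm_mul]
      calc ‖1/(j:ℚ_[p]) - (j:ℚ_[p])^(p-2)‖ * ‖∑ k ∈ Finset.Ioc j (p-1), (k:ℚ_[p])^(p-3)‖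
          ≤ (p:ℝ)⁻¹ * 1 := mul_le_mul (key1 j hj) hYle (norm_nonneg _) hε0
        _ = (p:ℝ)⁻¹ := mul_one _
  -- Bernoulli expansion of B
  have hDdvd : ¬ p ∣ (p - 1) := by
    intro h
    have := Nat.le_of_dvd (by omega) h
    omega
  have hDnorm : ‖(((p-1:ℕ)) : ℚ_[p])‖ = 1 := norm_nat_eq_one p hDdvd
  have hDne0 : (((p-1:ℕ)) : ℚ_[p]) ≠ 0 := by
    rw [← norm_ne_zero_iff, hDnorm]; norm_num
  have hfaul : ∀ k : ℕ, (∑ j ∈ Finset.range k, (j:ℚ_[p])^(p-2)) =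
      ∑ i ∈ Finset.range (p-1), ((bernoulli i : ℚ) : ℚ_[p]) * (((p-1).choose i : ℕ) : ℚ_[p]) *
        (k:ℚ_[p])^(p-1-i) / (((p-1:ℕ)) : ℚ_[p]) := by
    intro k
    have h1 := sum_range_pow k (p-2)
    rw [show p - 2 + 1 = p - 1 by omega] at h1
    have h2 := congrArg (fun q : ℚ => (q : ℚ_[p])) h1
    push_cast at h2
    rw [h2]
    apply Finset.sum_congr rfl
    intro i hi
    have hden : ((p-2:ℕ) : ℚ_[p]) + 1 = ((p-1:ℕ) : ℚ_[p]) := by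
      rw [Nat.cast_sub (show 2 ≤ p by omega), Nat.cast_sub (show 1 ≤ p by omega)]
      ring
    rw [hden]
  have claimB : B = ∑ i ∈ Finset.range (p-1),
      (((bernoulli i : ℚ) : ℚ_[p]) * (((p-1).choose i : ℕ) : ℚ_[p]) / (((p-1:ℕ)) : ℚ_[p])) *
        ∑ k ∈ Finset.Ioc 0 (p-1), (k:ℚ_[p])^((p-3) + (p-1-i)) := by
    rw [hBdef]
    have e1 : ∀ j ∈ Finset.Ioc 0 (p-1), (j:ℚ_[p])^(p-2) *
        (∑ k ∈ Finset.Ioc j (p-1), (k:ℚ_[p])^(p-3))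
        = ∑ k ∈ Finset.Ioc j (p-1), (j:ℚ_[p])^(p-2) * (k:ℚ_[p])^(p-3) :=
      fun j _ => Finset.mul_sum _ _ _
    rw [Finset.sum_congr rfl e1]
    rw [Finset.sum_comm' (s := Finset.Ioc 0 (p-1)) (t := fun j => Finset.Ioc j (p-1))
      (t' := Finset.Ioc 0 (p-1)) (s' := fun k => Finset.Ioo 0 k)
      (by intro j k; simp only [Finset.mem_Ioc, Finset.mem_Ioo]; omega)]
    have e2 : ∀ k ∈ Finset.Ioc 0 (p-1),
        (∑ j ∈ Finset.Ioo 0 k, (j:ℚ_[p])^(p-2) * (k:ℚ_[p])^(p-3))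
        = ∑ i ∈ Finset.range (p-1),
            (((bernoulli i : ℚ) : ℚ_[p]) * (((p-1).choose i : ℕ) : ℚ_[p]) / (((p-1:ℕ)) : ℚ_[p])) *
              (k:ℚ_[p])^((p-3) + (p-1-i)) := by
      intro k hk
      rw [Finset.mem_Ioc] at hk
      have hr : Finset.range k = insert 0 (Finset.Ioo 0 k) := by
        ext x; simp only [Finset.mem_range, Finset.mem_insert, Finset.mem_Ioo]; omega
      calc ∑ j ∈ Finset.Ioo 0 k, (j:ℚ_[p])^(p-2) * (k:ℚ_[p])^(p-3)
          = (∑ j ∈ Finset.range k, (j:ℚ_[p])^(p-2)) * (k:ℚ_[p])^(p-3) := by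
            rw [Finset.sum_mul, hr, Finset.sum_insert (by simp), Nat.cast_zero,
              zero_pow (show p - 2 ≠ 0 by omega), zero_mul, zero_add]
        _ = _ := by
            rw [hfaul k, Finset.sum_mul]
            apply Finset.sum_congr rfl
            intro i hi
            rw [pow_add]
            ring
    rw [Finset.sum_congr rfl e2, Finset.sum_comm]
    apply Finset.sum_congr rfl
    intro i _
    rw [Finset.mul_sum]
  -- bound for the non-main terms
  have hbound_i : ∀ i ∈ (Finset.range (p-1)).erase (p-3),
      ‖(((bernoulli i : ℚ) : ℚ_[p]) * (((p-1).choose i : ℕ) : ℚ_[p]) / (((p-1:ℕ)) : ℚ_[p])) *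
        ∑ k ∈ Finset.Ioc 0 (p-1), (k:ℚ_[p])^((p-3) + (p-1-i))‖ ≤ (p:ℝ)⁻¹ := by
    intro i hi
    obtain ⟨hne3, hilt⟩ := Finset.mem_erase.mp hi
    rw [Finset.mem_range] at hilt
    have hm0 : (p-3) + (p-1-i) ≠ 0 := by omega
    have hTnorm : ‖∑ k ∈ Finset.Ioc 0 (p-1), (k:ℚ_[p])^((p-3)+(p-1-i))‖ ≤ (p:ℝ)⁻¹ := by
      have hic : (∑ k ∈ Finset.Ioc 0 (p-1), (k:ℚ_[p])^((p-3)+(p-1-i))) =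
          (((∑ k ∈ Finset.range p, (k:ℤ)^((p-3)+(p-1-i)) : ℤ)) : ℚ_[p]) := by
        rw [← Ioc_pow_sum_eq (R := ℤ) (show 0 < p by omega) hm0]
        push_cast
        rfl
      rw [hic]
      apply norm_int_le_inv
      apply int_sum_pow_dvd p _ hm0
      rintro ⟨c, hc⟩
      rcases c with _ | _ | c
      · omega
      · omega
      · have h2 : (p-1) * 2 ≤ (p-1) * (c+2) := Nat.mul_le_mul_left _ (by omega)
        rw [← hc] at h2
        omega
    rw [norm_mul, norm_div, norm_mul, hDnorm, div_one]
    have hb : ‖((bernoulli i : ℚ) : ℚ_[p])‖ ≤ 1 := bernoulli_padic_norm_le p i (by omega)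
    calc ‖((bernoulli i : ℚ) : ℚ_[p])‖ * ‖(((p-1).choose i : ℕ) : ℚ_[p])‖ *
          ‖∑ k ∈ Finset.Ioc 0 (p-1), (k:ℚ_[p])^((p-3)+(p-1-i))‖
        ≤ 1 * 1 * (p:ℝ)⁻¹ := by
          apply mul_le_mul (mul_le_mul hb (norm_nat_le_one p _) (norm_nonneg _) zero_le_one)
            hTnorm (norm_nonneg _) (by norm_num)
      _ = (p:ℝ)⁻¹ := by ring
  -- the main term
  have hmain : ‖(((bernoulli (p-3) : ℚ) : ℚ_[p]) * (((p-1).choose (p-3) : ℕ) : ℚ_[p]) /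
        (((p-1:ℕ)) : ℚ_[p])) *
      (∑ k ∈ Finset.Ioc 0 (p-1), (k:ℚ_[p])^((p-3) + (p-1-(p-3)))) -
      ((bernoulli (p-3) : ℚ) : ℚ_[p])‖ ≤ (p:ℝ)⁻¹ := by
    rw [show (p-3) + (p-1-(p-3)) = p-1 by omega]
    have hgen : ∀ (a C T D : ℚ_[p]), D ≠ 0 → a * C / D * T - a = a * (C * T - D) / D := by
      intro a C T D hD
      field_simp
    have hid := hgen ((bernoulli (p-3) : ℚ) : ℚ_[p]) (((p-1).choose (p-3) : ℕ) : ℚ_[p])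
      (∑ k ∈ Finset.Ioc 0 (p-1), (k:ℚ_[p])^(p-1)) (((p-1:ℕ)) : ℚ_[p]) hDne0
    rw [hid, norm_div, hDnorm, div_one, norm_mul]
    have hz : ‖(((p-1).choose (p-3) : ℕ) : ℚ_[p]) * (∑ k ∈ Finset.Ioc 0 (p-1), (k:ℚ_[p])^(p-1)) -
        (((p-1:ℕ)) : ℚ_[p])‖ ≤ (p:ℝ)⁻¹ := by
      have hic : (((p-1).choose (p-3) : ℕ) : ℚ_[p]) *
            (∑ k ∈ Finset.Ioc 0 (p-1), (k:ℚ_[p])^(p-1)) - (((p-1:ℕ)) : ℚ_[p]) =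
          ((((p - 1).choose (p - 3) : ℤ) * (∑ k ∈ Finset.Ioc 0 (p - 1), (k : ℤ) ^ (p - 1))
            - ((p - 1 : ℕ) : ℤ) : ℤ) : ℚ_[p]) := by
        push_cast
        rfl
      rw [hic]
      exact norm_int_le_inv p (main_term_dvd p h5)
    calc ‖((bernoulli (p-3) : ℚ) : ℚ_[p])‖ * ‖(((p-1).choose (p-3) : ℕ) : ℚ_[p]) *
          (∑ k ∈ Finset.Ioc 0 (p-1), (k:ℚ_[p])^(p-1)) - (((p-1:ℕ)) : ℚ_[p])‖
        ≤ 1 * (p:ℝ)⁻¹ :=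
          mul_le_mul (bernoulli_padic_norm_le p _ (by omega)) hz (norm_nonneg _) zero_le_one
      _ = (p:ℝ)⁻¹ := one_mul _
  -- conclude
  have hsplit : ((H [1, 2] (p - 1) - bernoulli (p - 3) : ℚ) : ℚ_[p]) =
      (((H [1, 2] (p - 1) : ℚ) : ℚ_[p]) - B) + (B - ((bernoulli (p-3) : ℚ) : ℚ_[p])) := by
    push_cast
    ring
  rw [hsplit]
  apply padic_norm_add_le claimAB
  rw [claimB, ← Finset.sum_erase_add _ _ (Finset.mem_range.mpr (show p-3 < p-1 by omega)),
    add_sub_assoc]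
  exact padic_norm_add_le
    (IsUltrametricDist.norm_sum_le_of_forall_le_of_nonneg hε0 hbound_i) hmain
end

section
/- For every prime p ≥ 7, ∑_{a=0}^{p−3} B_a · B_{p−3−a} ≡ 0 mod p, where B_k are the Bernoulli numbers. -/
set_option linter.unusedSectionVars false

open PowerSeries Finset

noncomputable section

namespace BernoulliConvAux

abbrev R := Polynomial ℚ

def xx : R := Polynomial.X
def yy : R := 1 - Polynomial.X

def bb (a : R) : PowerSeries R := rescale a (bernoulliPowerSeries R)
def ee (a : R) : PowerSeries R := rescale a (exp R)

lemma bb_mul_ee (a : R) : bb a * (ee a - 1) = C a * X := by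
  have : bb a * (ee a - 1) = rescale a (bernoulliPowerSeries R * (exp R - 1)) := by
    rw [map_mul, map_sub, map_one]; rfl
  rw [this, bernoulliPowerSeries_mul_exp_sub_one, rescale_X]

lemma ee_ne_one (a : R) (ha : a ≠ 0) : ee a - 1 ≠ 0 := by
  intro h
  apply ha
  have := congrArg (coeff 1) h
  simpa [ee, coeff_rescale, coeff_exp, Polynomial.algebraMap_eq] using this

lemma ee_mul_ee : ee xx * ee yy = exp R := by
  rw [ee, ee, exp_mul_exp_eq_exp_add]
  have : xx + yy = 1 := by simp [xx, yy]
  rw [this, rescale_one]; rfl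

lemma ps_identity :
    X * (bb xx * bb yy)
      = X * (bernoulliPowerSeries R *
          (C yy * bb xx + C xx * bb yy + C (xx * yy) * X)) := by
  have hd : (ee xx - 1) * ((ee yy - 1) * (exp R - 1)) ≠ 0 := by
    refine mul_ne_zero (ee_ne_one xx ?_) (mul_ne_zero (ee_ne_one yy ?_) ?_)
    · exact Polynomial.X_ne_zero
    · intro h
      have := congrArg (Polynomial.eval 0) h
      simp [yy] at this
    · intro h
      have := congrArg (coeff 1) h
      simpa [coeff_exp, Polynomial.algebraMap_eq] using this
  apply mul_left_cancel₀ hd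
  have h1 := bb_mul_ee xx
  have h2 := bb_mul_ee yy
  have h3 := bernoulliPowerSeries_mul_exp_sub_one R
  have h4 := ee_mul_ee
  calc (ee xx - 1) * ((ee yy - 1) * (exp R - 1)) * (X * (bb xx * bb yy))
      = (X * (exp R - 1)) * ((bb xx * (ee xx - 1)) * (bb yy * (ee yy - 1))) := by ring
    _ = (X * (exp R - 1)) * ((C xx * X) * (C yy * X)) := by rw [h1, h2]
    _ = (C xx * X) * (C yy * X) * X * (ee xx * ee yy - 1) := by rw [h4]; ring
    _ = (bernoulliPowerSeries R * (exp R - 1)) *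
          ((C yy * X) * ((bb xx * (ee xx - 1)) * (ee yy - 1))
           + (C xx * X) * ((bb yy * (ee yy - 1)) * (ee xx - 1))
           + C xx * C yy * X * X * ((ee xx - 1) * (ee yy - 1))) := by
        rw [h1, h2, h3]; ring
    _ = (ee xx - 1) * ((ee yy - 1) * (exp R - 1)) *
          (X * (bernoulliPowerSeries R *
            (C yy * bb xx + C xx * bb yy + C (xx * yy) * X))) := by
        rw [map_mul]; ring





lemma coeff_bb (a : R) (k : ℕ) :
    coeff k (bb a) = a ^ k * Polynomial.C (bernoulli k / k.factorial) := by
  simp [bb, coeff_rescale, bernoulliPowerSeries, Polynomial.algebraMap_eq]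

lemma coeff_identity (N : ℕ) :
    ∑ ij ∈ antidiagonal N,
        (xx ^ ij.1 * Polynomial.C ((bernoulli ij.1 : ℚ) / ij.1.factorial)) *
          (yy ^ ij.2 * Polynomial.C ((bernoulli ij.2 : ℚ) / ij.2.factorial))
      = ∑ ij ∈ antidiagonal N,
          Polynomial.C ((bernoulli ij.1 : ℚ) / ij.1.factorial) *
            (yy * (xx ^ ij.2 * Polynomial.C ((bernoulli ij.2 : ℚ) / ij.2.factorial))
             + xx * (yy ^ ij.2 * Polynomial.C ((bernoulli ij.2 : ℚ) / ij.2.factorial))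
             + xx * yy * (if ij.2 = 1 then 1 else 0)) := by
  have h := congrArg (coeff (N + 1)) ps_identity
  rw [coeff_succ_X_mul, coeff_succ_X_mul, coeff_mul, coeff_mul] at h
  calc _ = ∑ ij ∈ antidiagonal N, coeff ij.1 (bb xx) * coeff ij.2 (bb yy) := by
        refine Finset.sum_congr rfl fun ij _ => ?_
        rw [coeff_bb, coeff_bb]
    _ = _ := by
        rw [h]
        refine Finset.sum_congr rfl fun ij _ => ?_
        have hb : coeff ij.1 (bernoulliPowerSeries R)
            = Polynomial.C ((bernoulli ij.1 : ℚ) / ij.1.factorial) := by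
          simp [bernoulliPowerSeries, Polynomial.algebraMap_eq]
        rw [map_add, map_add, coeff_C_mul, coeff_C_mul, coeff_C_mul, coeff_bb, coeff_bb,
          coeff_X, hb]

def L : Polynomial ℚ →ₗ[ℚ] ℚ :=
  Polynomial.lsum (fun n => LinearMap.toSpanSingleton ℚ ℚ (1 / (n + 1)))

lemma L_monomial (n : ℕ) (c : ℚ) : L (Polynomial.monomial n c) = c / (n + 1) := by
  simp [L, Polynomial.lsum_apply, Polynomial.sum_monomial_index,
    LinearMap.toSpanSingleton_apply, smul_eq_mul]
  ring

lemma L_Xpow (k : ℕ) : L (Polynomial.X ^ k) = 1 / (k + 1) := by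
  rw [← Polynomial.monomial_one_right_eq_X_pow]
  exact L_monomial k 1

lemma Lval (j k : ℕ) :
    L (Polynomial.X ^ k * (1 - Polynomial.X) ^ j)
      = (k.factorial * j.factorial : ℚ) / (k + j + 1).factorial := by
  induction j generalizing k with
  | zero =>
    simp only [pow_zero, mul_one, L_Xpow, Nat.add_zero, Nat.factorial, Nat.factorial_succ]
    have h1 : (k.factorial : ℚ) ≠ 0 := by exact_mod_cast (Nat.factorial_ne_zero _)
    push_cast
    field_simp
  | succ j ih =>
    have e : Polynomial.X ^ k * (1 - Polynomial.X) ^ (j + 1)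
        = Polynomial.X ^ k * (1 - Polynomial.X) ^ j
          - Polynomial.X ^ (k + 1) * ((1 : Polynomial ℚ) - Polynomial.X) ^ j := by ring
    rw [e, map_sub, ih k, ih (k + 1)]
    have e1 : k + (j + 1) + 1 = (k + j + 1) + 1 := by omega
    have e2 : k + 1 + j + 1 = (k + j + 1) + 1 := by omega
    rw [e1, e2, Nat.factorial_succ (k + j + 1), Nat.factorial_succ j, Nat.factorial_succ k]
    have h1 : ((k + j + 1).factorial : ℚ) ≠ 0 := by
      exact_mod_cast (Nat.factorial_ne_zero _)
    have h2 : ((k + j + 1 + 1 : ℕ) : ℚ) ≠ 0 := by positivity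
    push_cast
    field_simp
    ring






theorem key_identity (n : ℕ) :
    ((n : ℚ) + 3) * ∑ k ∈ range (n + 2), bernoulli k * bernoulli (n + 1 - k)
      = 2 * ∑ m ∈ range (n + 2), ((n + 3).choose m : ℚ) * (bernoulli m * bernoulli (n + 1 - m))
        + ((n : ℚ) + 1) * ((n : ℚ) + 2) * ((n : ℚ) + 3) / 6 * bernoulli n := by
  have hcast : ∀ m : ℕ, ((m.factorial : ℚ)) ≠ 0 := fun m => by
    exact_mod_cast m.factorial_ne_zero
  -- apply L to the coefficient identity at N = n+1
  have h := congrArg L (coeff_identity (n + 1))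
  rw [map_sum, map_sum] at h
  -- compute LHS of h
  have hL : ∀ ij ∈ antidiagonal (n + 1),
      L ((xx ^ ij.1 * Polynomial.C ((bernoulli ij.1 : ℚ) / ij.1.factorial)) *
          (yy ^ ij.2 * Polynomial.C ((bernoulli ij.2 : ℚ) / ij.2.factorial)))
        = bernoulli ij.1 * bernoulli ij.2 / (n + 2).factorial := by
    rintro ⟨i, j⟩ hij
    rw [Finset.HasAntidiagonal.mem_antidiagonal] at hij
    have e : (xx ^ i * Polynomial.C ((bernoulli i : ℚ) / i.factorial)) *
          (yy ^ j * Polynomial.C ((bernoulli j : ℚ) / j.factorial))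
        = ((bernoulli i : ℚ) / i.factorial * ((bernoulli j : ℚ) / j.factorial)) •
            (Polynomial.X ^ i * (1 - Polynomial.X) ^ j) := by
      rw [Polynomial.smul_eq_C_mul, map_mul]
      simp only [xx, yy]
      ring
    rw [e, map_smul, Lval, smul_eq_mul]
    have hij2 : i + j + 1 = n + 2 := by omega
    rw [hij2]
    field_simp
  rw [Finset.sum_congr rfl hL] at h
  -- compute RHS of h
  have hR : ∀ ij ∈ antidiagonal (n + 1),
      L (Polynomial.C ((bernoulli ij.1 : ℚ) / ij.1.factorial) *
            (yy * (xx ^ ij.2 * Polynomial.C ((bernoulli ij.2 : ℚ) / ij.2.factorial))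
             + xx * (yy ^ ij.2 * Polynomial.C ((bernoulli ij.2 : ℚ) / ij.2.factorial))
             + xx * yy * (if ij.2 = 1 then 1 else 0)))
        = 2 * (bernoulli ij.1 * bernoulli ij.2) / (ij.1.factorial * (ij.2 + 2).factorial)
          + (bernoulli ij.1 / ij.1.factorial) * (if ij.2 = 1 then (1:ℚ)/6 else 0) := by
    rintro ⟨m, s⟩ hij
    have e : Polynomial.C ((bernoulli m : ℚ) / m.factorial) *
            (yy * (xx ^ s * Polynomial.C ((bernoulli s : ℚ) / s.factorial))
             + xx * (yy ^ s * Polynomial.C ((bernoulli s : ℚ) / s.factorial))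
             + xx * yy * (if s = 1 then 1 else 0))
        = ((bernoulli m : ℚ) / m.factorial * ((bernoulli s : ℚ) / s.factorial)) •
              (Polynomial.X ^ s * (1 - Polynomial.X) ^ 1)
          + ((bernoulli m : ℚ) / m.factorial * ((bernoulli s : ℚ) / s.factorial)) •
              (Polynomial.X ^ 1 * (1 - Polynomial.X) ^ s)
          + (if s = 1 then ((bernoulli m : ℚ) / m.factorial) else 0) •
              (Polynomial.X ^ 1 * (1 - Polynomial.X) ^ 1) := by
      simp only [Polynomial.smul_eq_C_mul, map_mul, apply_ite Polynomial.C, map_zero, map_one,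
        xx, yy, map_div₀]
      split <;> ring
    rw [e, map_add, map_add, map_smul, map_smul, map_smul, Lval, Lval, Lval, smul_eq_mul,
      smul_eq_mul, smul_eq_mul]
    have e1 : s + 1 + 1 = s + 2 := by omega
    have e2 : (1 : ℕ) + s + 1 = s + 2 := by omega
    rw [e1, e2]
    simp only [Nat.factorial_one, Nat.factorial_two]
    split
    · next hs =>
        subst hs
        norm_num [Nat.factorial]
        field_simp
        ring
    · field_simp
      ring
  rw [Finset.sum_congr rfl hR] at h
  rw [Finset.sum_add_distrib] at h
  -- evaluate the delta term
  have hdelta : ∑ ij ∈ antidiagonal (n + 1),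
      (bernoulli ij.1 / ij.1.factorial) * (if ij.2 = 1 then (1:ℚ)/6 else 0)
        = bernoulli n / n.factorial * (1/6) := by
    rw [Finset.sum_eq_single (n, 1)]
    · simp
    · rintro ⟨m, s⟩ hms hne
      rw [Finset.HasAntidiagonal.mem_antidiagonal] at hms
      have : s ≠ 1 := by
        intro hs
        apply hne
        subst hs
        have : m = n := by omega
        subst this
        rfl
      simp [this]
    · intro hni
      exact absurd (by rw [Finset.HasAntidiagonal.mem_antidiagonal]) hni
  rw [hdelta] at h
  -- multiply h by (n+3)!
  have h2 := congrArg (fun z : ℚ => ((n + 3).factorial : ℚ) * z) h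
  simp only [mul_add, Finset.mul_sum] at h2
  have hfac3 : ((n + 3).factorial : ℚ) = ((n:ℚ) + 3) * (n + 2).factorial := by
    rw [show n + 3 = (n + 2) + 1 from rfl, Nat.factorial_succ]
    push_cast
    ring
  have hfacn : ((n + 3).factorial : ℚ)
      = ((n:ℚ) + 1) * ((n:ℚ) + 2) * ((n:ℚ) + 3) * n.factorial := by
    rw [show n + 3 = (n + 2) + 1 from rfl, Nat.factorial_succ,
      show n + 2 = (n + 1) + 1 from rfl, Nat.factorial_succ, Nat.factorial_succ]
    push_cast
    ring
  -- left side
  have hleft : ∀ ij ∈ antidiagonal (n + 1),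
      ((n + 3).factorial : ℚ) * (bernoulli ij.1 * bernoulli ij.2 / (n + 2).factorial)
        = ((n:ℚ) + 3) * (bernoulli ij.1 * bernoulli ij.2) := by
    intro ij _
    rw [hfac3]
    field_simp
  rw [Finset.sum_congr rfl hleft] at h2
  -- right side main terms
  have hright : ∀ ij ∈ antidiagonal (n + 1),
      ((n + 3).factorial : ℚ) * (2 * (bernoulli ij.1 * bernoulli ij.2) /
          (ij.1.factorial * (ij.2 + 2).factorial))
        = 2 * (((n + 3).choose ij.1 : ℚ) * (bernoulli ij.1 * bernoulli ij.2)) := by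
    rintro ⟨m, s⟩ hms
    rw [Finset.HasAntidiagonal.mem_antidiagonal] at hms
    have hm3 : m ≤ n + 3 := by omega
    have hchoose := Nat.choose_mul_factorial_mul_factorial hm3
    have hsub : n + 3 - m = s + 2 := by omega
    rw [hsub] at hchoose
    have hcQ : ((n + 3).factorial : ℚ)
        = ((n + 3).choose m : ℚ) * m.factorial * (s + 2).factorial := by
      exact_mod_cast congrArg (fun z : ℕ => (z : ℚ)) hchoose.symm
    rw [hcQ]
    field_simp
  rw [Finset.sum_congr rfl hright] at h2
  -- delta term
  have hd2 : ((n + 3).factorial : ℚ) * (bernoulli n / n.factorial * (1/6))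
      = ((n : ℚ) + 1) * ((n : ℚ) + 2) * ((n : ℚ) + 3) / 6 * bernoulli n := by
    rw [hfacn]
    field_simp
  rw [hd2] at h2
  -- convert antidiagonal sums to range sums
  rw [Finset.Nat.sum_antidiagonal_eq_sum_range_succ_mk] at h2
  rw [Finset.Nat.sum_antidiagonal_eq_sum_range_succ_mk
    (fun ij => 2 * (((n + 3).choose ij.1 : ℚ) * (bernoulli ij.1 * bernoulli ij.2)))] at h2
  rw [← Finset.mul_sum, ← Finset.mul_sum] at h2
  exact h2

section NumberTheory


def pint (p : ℕ) (q : ℚ) : Prop := ∃ a b : ℤ, ¬ (p:ℤ) ∣ b ∧ q = a / b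

variable {p : ℕ} (hp : p.Prime)

lemma pnd1 (hp : p.Prime) : ¬ (p:ℤ) ∣ 1 := by
  intro h
  have h1 : p ∣ 1 := by exact_mod_cast h
  have := hp.one_lt
  have := Nat.dvd_one.mp h1
  omega

lemma pint_int (hp : p.Prime) (a : ℤ) : pint p (a : ℚ) := ⟨a, 1, by
  refine ⟨pnd1 hp, by simp⟩⟩

lemma bnz {b : ℤ} (hb : ¬ (p:ℤ) ∣ b) : (b : ℚ) ≠ 0 := by
  intro h
  exact hb (by simp [show b = 0 by exact_mod_cast h])

include hp

lemma pint_add {q r : ℚ} (hq : pint p q) (hr : pint p r) : pint p (q + r) := by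
  obtain ⟨a, b, hb, rfl⟩ := hq
  obtain ⟨c, d, hd, rfl⟩ := hr
  refine ⟨a * d + c * b, b * d, ?_, ?_⟩
  · intro h
    rcases (Int.Prime.dvd_mul' hp h) with h | h
    · exact hb h
    · exact hd h
  · have hb' := bnz hb
    have hd' := bnz hd
    field_simp
    push_cast
    ring

lemma pint_mul {q r : ℚ} (hq : pint p q) (hr : pint p r) : pint p (q * r) := by
  obtain ⟨a, b, hb, rfl⟩ := hq
  obtain ⟨c, d, hd, rfl⟩ := hr
  refine ⟨a * c, b * d, ?_, ?_⟩
  · intro h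
    rcases (Int.Prime.dvd_mul' hp h) with h | h
    · exact hb h
    · exact hd h
  · have hb' := bnz hb
    have hd' := bnz hd
    field_simp
    push_cast
    ring

lemma pint_div {q : ℚ} (hq : pint p q) {c : ℤ} (hc : ¬ (p:ℤ) ∣ c) : pint p (q / c) := by
  obtain ⟨a, b, hb, rfl⟩ := hq
  refine ⟨a, b * c, ?_, ?_⟩
  · intro h
    rcases (Int.Prime.dvd_mul' hp h) with h | h
    · exact hb h
    · exact hc h
  · push_cast
    rw [div_div]

lemma pint_sum {s : Finset ℕ} {f : ℕ → ℚ} (h : ∀ i ∈ s, pint p (f i)) :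
    pint p (∑ i ∈ s, f i) := by
  classical
  induction s using Finset.induction with
  | empty => exact ⟨0, 1, pnd1 hp, by simp⟩
  | insert _ _ hx ih =>
    rw [Finset.sum_insert hx]
    exact pint_add hp (h _ (mem_insert_self _ _)) (ih fun i hi => h i (mem_insert_of_mem hi))

lemma pint_num {q : ℚ} {w : ℚ} (hw : pint p w) (h : q = (p : ℚ) * w) : (p:ℤ) ∣ q.num := by
  obtain ⟨a, b, hb, rfl⟩ := hw
  have hb' := bnz hb
  have hd : ((q.den : ℚ)) ≠ 0 := by
    exact_mod_cast q.den_nz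
  have hq : ((q.num : ℚ)) = q * (q.den : ℚ) := by
    nth_rewrite 2 [← Rat.num_div_den q]
    field_simp
  have h2 : (q.num : ℚ) * b = (p : ℚ) * a * ((q.den : ℚ)) := by
    rw [hq, h]
    field_simp
  have h3 : q.num * b = (p : ℤ) * a * q.den := by exact_mod_cast h2
  have h4 : (p:ℤ) ∣ q.num * b := ⟨a * q.den, by rw [h3]; ring⟩
  rcases (Int.Prime.dvd_mul' hp h4) with h | h
  · exact h
  · exact absurd h hb

omit hp in
lemma bern_odd_zero {n : ℕ} (hodd : Odd n) (h1 : 1 < n) : bernoulli n = 0 := by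
  rw [bernoulli_eq_bernoulli'_of_ne_one (by omega)]
  exact bernoulli'_eq_zero_of_odd hodd h1

lemma pint_neg {q : ℚ} (hq : pint p q) : pint p (-q) := by
  obtain ⟨a, b, hb, rfl⟩ := hq
  exact ⟨-a, b, hb, by push_cast; ring⟩

lemma pint_bernoulli : ∀ m : ℕ, m + 1 < p → pint p (bernoulli m) := by
  intro m
  induction m using Nat.strong_induction_on with
  | _ m ih =>
    intro hm
    rcases Nat.eq_zero_or_pos m with rfl | hmpos
    · simpa using pint_int hp 1
    · have hs := sum_bernoulli (m + 1)
      rw [if_neg (by omega), Finset.sum_range_succ, Nat.choose_succ_self_right] at hs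
      have hB : bernoulli m
          = (-∑ k ∈ range m, ((m + 1).choose k : ℚ) * bernoulli k) / (((m + 1 : ℕ) : ℤ) : ℚ) := by
        have hne : (((m + 1 : ℕ) : ℤ) : ℚ) ≠ 0 := by positivity
        field_simp
        push_cast at hs ⊢
        linarith
      rw [hB]
      apply pint_div hp
      · apply pint_neg hp
        apply pint_sum hp
        intro k hk
        rw [mem_range] at hk
        have : (((m + 1).choose k : ℚ)) = ((((m + 1).choose k : ℕ) : ℤ) : ℚ) := by push_cast; rfl
        rw [this]
        exact pint_mul hp (pint_int hp _) (ih k hk (by omega))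
      · intro hdvd
        have : p ∣ m + 1 := by exact_mod_cast hdvd
        have := Nat.le_of_dvd (by omega) this
        omega

lemma choose_cong : ∀ k, k < p → (p : ℤ) ∣ ((p - 1).choose k : ℤ) - (-1) ^ k := by
  intro k
  induction k with
  | zero => simp
  | succ k ih =>
    intro hk
    have ihk := ih (by omega)
    have hps : p.choose (k + 1) = (p - 1).choose k + (p - 1).choose (k + 1) := by
      have h1 : p - 1 + 1 = p := by have := hp.one_lt; omega
      rw [← h1]
      exact Nat.choose_succ_succ' _ _
    have hdvd : (p : ℤ) ∣ (p.choose (k + 1) : ℤ) :=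
      Int.natCast_dvd_natCast.mpr (hp.dvd_choose_self (by omega) (by omega))
    have he : ((p - 1).choose (k + 1) : ℤ) - (-1) ^ (k + 1)
        = ((p.choose (k + 1) : ℤ)) - (((p - 1).choose k : ℤ) - (-1) ^ k) := by
      have hc : (p.choose (k + 1) : ℤ)
          = ((p - 1).choose k : ℤ) + ((p - 1).choose (k + 1) : ℤ) := by exact_mod_cast hps
      rw [hc, pow_succ]
      ring
    rw [he]
    exact dvd_sub hdvd ihk

omit hp in
theorem main (p : ℕ) (hp : p.Prime) (h7 : 7 ≤ p) :
    (p : ℤ) ∣ (∑ a ∈ Finset.range (p - 2), bernoulli a * bernoulli (p - 3 - a)).num := by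
  obtain ⟨m, rfl⟩ : ∃ m, p = m + 7 := ⟨p - 7, by omega⟩
  have hodd : Odd (m + 7) := hp.odd_of_ne_two (by omega)
  have hm3odd : Odd (m + 3) := by
    rcases hodd with ⟨t, ht⟩
    exact ⟨t - 2, by omega⟩
  -- normalize indices in the goal
  have e1 : m + 7 - 2 = m + 5 := by omega
  have e2 : ∀ a : ℕ, m + 7 - 3 - a = m + 4 - a := fun a => by omega
  simp only [e1, e2]
  set X : ℚ := ∑ a ∈ Finset.range (m + 5), bernoulli a * bernoulli (m + 4 - a) with hXdef
  -- key identity at n = m + 3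
  have hk := key_identity (m + 3)
  have e3 : m + 3 + 2 = m + 5 := by omega
  have e4 : ∀ k : ℕ, m + 3 + 1 - k = m + 4 - k := fun k => by omega
  have e5 : m + 3 + 3 = m + 6 := by omega
  have hbz : bernoulli (m + 3) = 0 := bern_odd_zero hm3odd (by omega)
  rw [e3, e5, hbz] at hk
  simp only [e4] at hk
  push_cast at hk
  -- hk : (m + 3 + 3 : ℚ) * X = 2 * ∑ choose * BB + stuff * 0
  have hk2 : ((m : ℚ) + 6) * X
      = 2 * ∑ k ∈ Finset.range (m + 5), ((m + 6).choose k : ℚ) *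
          (bernoulli k * bernoulli (m + 4 - k)) := by
    rw [hXdef]
    linarith [hk]
  -- 3X as a combination
  have h3X : 3 * X = ∑ k ∈ Finset.range (m + 5),
      (((m : ℚ) + 9) - 2 * ((m + 6).choose k : ℚ)) * (bernoulli k * bernoulli (m + 4 - k)) := by
    have hsplit : ∑ k ∈ Finset.range (m + 5),
        (((m : ℚ) + 9) - 2 * ((m + 6).choose k : ℚ)) * (bernoulli k * bernoulli (m + 4 - k))
        = ((m : ℚ) + 9) * X
          - 2 * ∑ k ∈ Finset.range (m + 5), ((m + 6).choose k : ℚ) *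
              (bernoulli k * bernoulli (m + 4 - k)) := by
      rw [hXdef, Finset.mul_sum, Finset.mul_sum, ← Finset.sum_sub_distrib]
      refine Finset.sum_congr rfl fun k _ => by ring
    rw [hsplit]
    linarith [hk2]
  -- integer quotients
  set d : ℕ → ℤ := fun k => ((m : ℤ) + 9 - 2 * ((m + 6).choose k : ℤ)) / ((m : ℤ) + 7) with hd
  have hterm : ∀ k ∈ Finset.range (m + 5),
      (((m : ℚ) + 9) - 2 * ((m + 6).choose k : ℚ)) * (bernoulli k * bernoulli (m + 4 - k))
        = ((m : ℚ) + 7) * (((d k : ℤ) : ℚ) * (bernoulli k * bernoulli (m + 4 - k))) := by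
    intro k hkr
    rw [Finset.mem_range] at hkr
    rcases Nat.even_or_odd k with he | ho
    · have hc := choose_cong hp k (by omega)
      have e6 : m + 7 - 1 = m + 6 := by omega
      rw [e6, he.neg_one_pow] at hc
      have hdvd : ((m : ℤ) + 7) ∣ ((m : ℤ) + 9 - 2 * ((m + 6).choose k : ℤ)) := by
        have hrw : (m : ℤ) + 9 - 2 * ((m + 6).choose k : ℤ)
            = ((m : ℤ) + 7) - 2 * (((m + 6).choose k : ℤ) - 1) := by ring
        rw [hrw]
        have hc' : ((m : ℤ) + 7) ∣ (((m + 6).choose k : ℤ) - 1) := by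
          have : ((m + 7 : ℕ) : ℤ) = (m : ℤ) + 7 := by push_cast; ring
          rwa [this] at hc
        exact dvd_sub ⟨1, by ring⟩ (hc'.mul_left 2)
      have hmul : ((m : ℤ) + 7) * d k = (m : ℤ) + 9 - 2 * ((m + 6).choose k : ℤ) := by
        rw [hd]
        exact Int.mul_ediv_cancel' hdvd
      have hmulQ : ((m : ℚ) + 7) * ((d k : ℤ) : ℚ)
          = (m : ℚ) + 9 - 2 * ((m + 6).choose k : ℚ) := by exact_mod_cast hmul
      rw [← hmulQ]
      ring
    · have hz : bernoulli k * bernoulli (m + 4 - k) = 0 := by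
        rcases eq_or_ne k 1 with rfl | hk1
        · have e7 : m + 4 - 1 = m + 3 := by omega
          rw [e7, hbz, mul_zero]
        · have hk3 : 1 < k := by
            rcases ho with ⟨t, ht⟩
            omega
          rw [bern_odd_zero ho hk3, zero_mul]
      rw [hz, mul_zero, mul_zero, mul_zero]
  rw [Finset.sum_congr rfl hterm, ← Finset.mul_sum] at h3X
  set w : ℚ := ∑ k ∈ Finset.range (m + 5),
      ((d k : ℤ) : ℚ) * (bernoulli k * bernoulli (m + 4 - k)) with hw
  have hXw : X = ((m + 7 : ℕ) : ℚ) * (w / 3) := by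
    push_cast
    linarith [h3X]
  have hpintw : pint (m + 7) (w / ((3 : ℤ) : ℚ)) := by
    apply pint_div hp
    · apply pint_sum hp
      intro k hkr
      rw [Finset.mem_range] at hkr
      refine pint_mul hp (pint_int hp _) (pint_mul hp ?_ ?_)
      · exact pint_bernoulli hp k (by omega)
      · exact pint_bernoulli hp (m + 4 - k) (by omega)
    · intro hdvd
      have : (m + 7 : ℕ) ∣ 3 := by
        have h3 : ((3 : ℕ) : ℤ) = (3 : ℤ) := by norm_num
        exact_mod_cast hdvd
      have := Nat.le_of_dvd (by omega) this
      omega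
  exact pint_num hp hpintw (by exact_mod_cast hXw)

end NumberTheory

end BernoulliConvAux

end

/-- For every prime p ≥ 7, ∑_{a=0}^{p−3} B_a·B_{p−3−a} ≡ 0 (mod p). -/
theorem bernoulli_conv_p3 (p : ℕ) (hp : p.Prime) (h7 : 7 ≤ p) :
    (p : ℤ) ∣ (∑ a ∈ Finset.range (p - 2), bernoulli a * bernoulli (p - 3 - a)).num :=
  BernoulliConvAux.main p hp h7
end

section
/- For every prime p ≥ 7, ∑_{a=0}^{p−3} a · B_a · B_{p−3−a} ≡ 0 mod p. -/
open Finset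

namespace BWC

/-- power sum `σ_k = ∑_{i=0}^{p-1} i^k` as a rational. -/
def sg (p k : ℕ) : ℚ := ∑ i ∈ Finset.range p, (i:ℚ)^k

/-- `x` has `p`-adic norm at most `p^{-k}` ("divisible by `p^k`"). -/
def NB (p : ℕ) [Fact p.Prime] (k : ℕ) (x : ℚ) : Prop :=
  ‖((x:ℚ) : ℚ_[p])‖ ≤ (p:ℝ)^(-(k:ℤ))

variable {p : ℕ} [hpf : Fact p.Prime]

lemma nb0_iff {x : ℚ} : NB p 0 x ↔ ‖((x:ℚ) : ℚ_[p])‖ ≤ 1 := by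
  simp [NB]

lemma nb_zero (k : ℕ) : NB p k 0 := by
  simp only [NB, Rat.cast_zero, norm_zero]
  positivity

lemma nb_add {k : ℕ} {x y : ℚ} (hx : NB p k x) (hy : NB p k y) : NB p k (x + y) := by
  unfold NB at *
  rw [Rat.cast_add]
  exact le_trans (Padic.nonarchimedean _ _) (max_le hx hy)

lemma nb_neg {k : ℕ} {x : ℚ} (hx : NB p k x) : NB p k (-x) := by
  unfold NB at *; rw [Rat.cast_neg, norm_neg]; exact hx

lemma nb_sub {k : ℕ} {x y : ℚ} (hx : NB p k x) (hy : NB p k y) : NB p k (x - y) := by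
  rw [sub_eq_add_neg]; exact nb_add hx (nb_neg hy)

lemma nb_of_eq {k : ℕ} {x y : ℚ} (h : x = y) (hx : NB p k x) : NB p k y := h ▸ hx

/-- "transitivity": if `x ≡ y` and `y ≡ z` then `x ≡ z` (mod p^k). -/
lemma nb_trans {k : ℕ} {x y z : ℚ} (h1 : NB p k (x - y)) (h2 : NB p k (y - z)) :
    NB p k (x - z) := by
  have := nb_add h1 h2; rw [sub_add_sub_cancel] at this; exact this

lemma nb_mul {j k : ℕ} {x y : ℚ} (hx : NB p j x) (hy : NB p k y) : NB p (j + k) (x * y) := by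
  unfold NB at *
  rw [Rat.cast_mul, norm_mul]
  have : (p:ℝ)^(-((j+k : ℕ):ℤ)) = (p:ℝ)^(-(j:ℤ)) * (p:ℝ)^(-(k:ℤ)) := by
    rw [← zpow_add₀ (by exact_mod_cast hpf.out.ne_zero : (p:ℝ) ≠ 0)]
    push_cast; ring_nf
  rw [this]
  exact mul_le_mul hx hy (norm_nonneg _) (zpow_nonneg (by positivity) _)

lemma nb_mul' {k : ℕ} {x y : ℚ} (hx : NB p k x) (hy : NB p 0 y) : NB p k (x * y) := by
  have := nb_mul hx hy; simpa using this

lemma nb_mul'' {k : ℕ} {x y : ℚ} (hx : NB p 0 x) (hy : NB p k y) : NB p k (x * y) := by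
  have := nb_mul hx hy; simpa using this

lemma nb_sum {k : ℕ} {ι : Type*} {s : Finset ι} {f : ι → ℚ}
    (h : ∀ i ∈ s, NB p k (f i)) : NB p k (∑ i ∈ s, f i) := by
  unfold NB at *
  rw [Rat.cast_sum]
  exact IsUltrametricDist.norm_sum_le_of_forall_le_of_nonneg (by positivity) h

lemma nb_natCast (m : ℕ) : NB p 0 (m : ℚ) := by
  rw [nb0_iff, Rat.cast_natCast]
  exact_mod_cast Padic.norm_int_le_one (m : ℤ)

lemma nb_intCast (m : ℤ) : NB p 0 (m : ℚ) := by
  rw [nb0_iff, Rat.cast_intCast]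
  exact Padic.norm_int_le_one m

lemma nb_one : NB p 0 (1 : ℚ) := by simpa using nb_natCast (p := p) 1

lemma norm_natCast_eq_one {k : ℕ} (h0 : k ≠ 0) (hk : k < p) : ‖((k : ℚ) : ℚ_[p])‖ = 1 := by
  have h1 : ‖((k : ℤ) : ℚ_[p])‖ ≤ 1 := Padic.norm_int_le_one _
  have h2 : ¬ ‖((k : ℤ) : ℚ_[p])‖ < 1 := by
    rw [Padic.norm_intCast_lt_one_iff]
    intro hdvd
    have hp := Int.le_of_dvd (by exact_mod_cast Nat.pos_of_ne_zero h0) hdvd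
    have : (p:ℤ) ≤ k := hp
    omega
  have h3 : ‖((k : ℤ) : ℚ_[p])‖ = 1 := le_antisymm h1 (not_lt.mp h2)
  rw [Rat.cast_natCast]
  exact_mod_cast h3

/-- division by a unit (a nonzero natural `< p`) preserves norm bounds. -/
lemma nb_div_nat {k : ℕ} {x : ℚ} {m : ℕ} (hx : NB p k x) (h0 : m ≠ 0) (hm : m < p) :
    NB p k (x / m) := by
  unfold NB at *
  rw [Rat.cast_div, norm_div, norm_natCast_eq_one h0 hm, div_one]
  exact hx

lemma nb_inv_nat {m : ℕ} (h0 : m ≠ 0) (hm : m < p) : NB p 0 ((m : ℚ)⁻¹) := by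
  have := nb_div_nat (p := p) (k := 0) (x := 1) nb_one h0 hm
  simpa [one_div] using this

lemma nb_p_pow (k : ℕ) : NB p k ((p:ℚ)^k) := by
  unfold NB
  rw [Rat.cast_pow, Rat.cast_natCast, ← zpow_natCast, Padic.norm_p_zpow]

lemma nb_int_dvd {z : ℤ} (h : (p:ℤ) ∣ z) : NB p 1 ((z:ℚ)) := by
  obtain ⟨w, rfl⟩ := h
  have : (((p:ℤ) * w : ℤ) : ℚ) = (p:ℚ)^1 * (w:ℚ) := by push_cast; ring
  rw [this]
  exact nb_mul' (nb_p_pow 1) (nb_intCast w)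

/-- mod p^k bounds are downward monotone in k -/
lemma nb_of_le {j k : ℕ} {x : ℚ} (h : j ≤ k) (hx : NB p k x) : NB p j x := by
  unfold NB at *
  refine hx.trans ?_
  have hp1 : (1:ℝ) ≤ (p:ℝ) := by exact_mod_cast hpf.out.one_lt.le
  exact zpow_le_zpow_right₀ hp1 (by omega)

lemma bern_odd_zero {m : ℕ} (h : Odd m) (h1 : 1 < m) : bernoulli m = 0 := by
  rw [bernoulli_eq_bernoulli'_of_ne_one (by omega), bernoulli'_eq_zero_of_odd h h1]

/-- p-integrality of Bernoulli numbers `B_m` for `m ≤ p-2`. -/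
lemma bern_int : ∀ m, m ≤ p - 2 → NB p 0 (bernoulli m) := by
  intro m
  induction m using Nat.strong_induction_on with
  | _ m ih =>
    intro hm
    rcases Nat.eq_zero_or_pos m with h0 | h1
    · subst h0
      rw [bernoulli_zero]; exact nb_one
    · have hs := sum_bernoulli (m+1)
      rw [if_neg (by omega), Finset.sum_range_succ, Nat.choose_succ_self_right] at hs
      have hmQ : ((m:ℚ) + 1) ≠ 0 := by positivity
      have hb : bernoulli m =
          (-(∑ k ∈ Finset.range m, ((m+1).choose k : ℚ) * bernoulli k)) / ((m+1 : ℕ) : ℚ) := by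
        push_cast
        push_cast at hs
        field_simp
        linarith
      rw [hb]
      refine nb_div_nat ?_ (by omega) (by have := hpf.out.two_le; omega)
      refine nb_neg (nb_sum ?_)
      intro k hk
      rw [Finset.mem_range] at hk
      exact nb_mul'' (nb_natCast _) (ih k hk (by omega))

/-- The full-precision dictionary:
`σ_m ≡ p B_m + p² m B_{m-1} / 2 (mod p³)` for `1 ≤ m ≤ p-2`. -/
lemma dict3 {m : ℕ} (h1 : 1 ≤ m) (h2 : m ≤ p - 2) :
    NB p 3 (sg p m - (p:ℚ) * bernoulli m - (p:ℚ)^2 * m * bernoulli (m-1) / 2) := by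
  have hp2 := hpf.out.two_le
  obtain ⟨m', rfl⟩ : ∃ m', m = m' + 1 := ⟨m - 1, by omega⟩
  have hF := sum_range_pow p (m' + 1)
  rw [show m' + 1 + 1 = m' + 2 from rfl] at hF
  rw [Finset.sum_range_succ, Finset.sum_range_succ] at hF
  -- the j = m'+1 term is p * B_{m'+1}; the j = m' term is p^2 (m'+1) B_{m'} / 2
  have hch1 : ((m'+2).choose (m'+1) : ℚ) = ((m':ℚ) + 2) := by
    rw [Nat.choose_succ_self_right]; push_cast; ring
  have hch2 : ((m'+2).choose m' : ℚ) = ((m':ℚ)+2) * ((m':ℚ)+1) / 2 := by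
    have h := Nat.choose_symm (show 2 ≤ m'+2 by omega)
    simp only [Nat.add_sub_cancel] at h
    rw [h, Nat.cast_choose_two]
    push_cast; ring
  have hm2 : ((m':ℚ) + 2) ≠ 0 := by positivity
  have hterm1 : bernoulli (m'+1) * ((m'+2).choose (m'+1) : ℚ) * (p:ℚ) ^ (m'+2 - (m'+1)) / ((m'+2 : ℕ):ℚ)
      = (p:ℚ) * bernoulli (m'+1) := by
    rw [hch1, show m'+2 - (m'+1) = 1 from by omega]
    push_cast
    field_simp
  have hterm2 : bernoulli m' * ((m'+2).choose m' : ℚ) * (p:ℚ) ^ (m'+2 - m') / ((m'+2:ℕ):ℚ)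
      = (p:ℚ)^2 * ((m'+1:ℕ):ℚ) * bernoulli ((m'+1) - 1) / 2 := by
    rw [hch2, show m'+2 - m' = 2 from by omega, show (m'+1) - 1 = m' from by omega]
    push_cast
    field_simp
  have key : sg p (m'+1) - (p:ℚ) * bernoulli (m'+1) - (p:ℚ)^2 * ((m'+1:ℕ):ℚ) * bernoulli ((m'+1)-1) / 2
      = ∑ j ∈ Finset.range m', bernoulli j * ((m'+2).choose j : ℚ) * (p:ℚ) ^ (m'+2 - j) / ((m'+2:ℕ):ℚ) := by
    simp only [show ((m'+1:ℕ):ℚ)+1 = ((m'+2:ℕ):ℚ) by push_cast; ring] at hF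
    rw [sg, hF, ← hterm1, ← hterm2]
    ring
  rw [key]
  refine nb_sum ?_
  intro j hj
  rw [Finset.mem_range] at hj
  -- each term: B_j * C * p^(m'+2-j) / (m'+2) with m'+2-j ≥ 3
  obtain ⟨e, he⟩ : ∃ e, m'+2-j = e + 3 := ⟨m'+2-j-3, by omega⟩
  have : bernoulli j * ((m'+2).choose j : ℚ) * (p:ℚ) ^ (m'+2 - j) / ((m'+2:ℕ):ℚ)
      = ((p:ℚ)^3 * ((p:ℚ)^e * (bernoulli j * ((m'+2).choose j : ℚ)))) / ((m'+2:ℕ):ℚ) := by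
    rw [he, pow_add]
    ring
  rw [this]
  refine nb_div_nat ?_ (by omega) (by omega)
  refine nb_mul' (nb_p_pow 3) ?_
  refine nb_mul'' ?_ (nb_mul'' (bern_int j (by omega)) (nb_natCast _))
  exact nb_of_le (Nat.zero_le _) (nb_p_pow (p := p) e)

lemma sg_zero : sg p 0 = p := by simp [sg]

lemma dict2 {m : ℕ} (hp3 : 2 < p) (h2 : m ≤ p - 2) :
    NB p 2 (sg p m - (p:ℚ) * bernoulli m) := by
  rcases Nat.eq_zero_or_pos m with h0 | h1
  · subst h0
    rw [sg_zero, bernoulli_zero]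
    simpa using nb_zero (p := p) 2
  · have h3 := dict3 h1 h2
    have hz : NB p 2 ((p:ℚ)^2 * m * bernoulli (m-1) / 2) := by
      have : (p:ℚ)^2 * m * bernoulli (m-1) / 2
          = (p:ℚ)^2 * ((m:ℚ) * bernoulli (m-1) / ((2:ℕ):ℚ)) := by
        push_cast; ring
      rw [this]
      refine nb_mul' (nb_p_pow 2) ?_
      refine nb_div_nat ?_ (by omega) hp3
      exact nb_mul'' (nb_natCast m) (bern_int (m-1) (by omega))
    have := nb_add (nb_of_le (by omega) h3) hz
    exact nb_of_eq (by ring) this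

lemma dict1 {m : ℕ} (hp3 : 2 < p) (h2 : m ≤ p - 2) : NB p 1 (sg p m) := by
  have h2' := dict2 hp3 h2
  have hb : NB p 1 ((p:ℚ) * bernoulli m) := by
    have := nb_mul' (nb_p_pow (p := p) 1) (bern_int m h2)
    simpa using this
  have := nb_add (nb_of_le (by omega) h2') hb
  exact nb_of_eq (by ring) this

/-- double counting of `(∑_{i<N} i^r)(∑_{j<N} j^s)`. -/
lemma dc (r s : ℕ) : ∀ N : ℕ, (∑ i ∈ range N, (i:ℚ)^r) * (∑ j ∈ range N, (j:ℚ)^s)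
    = ∑ j ∈ range N, ((∑ i ∈ range j, (i:ℚ)^r) * (j:ℚ)^s
        + (∑ i ∈ range j, (i:ℚ)^s) * (j:ℚ)^r + (j:ℚ)^(r+s)) := by
  intro N
  induction N with
  | zero => simp
  | succ N ih =>
    simp only [Finset.sum_range_succ]
    rw [← ih, pow_add]
    ring

/-- Faulhaber evaluation of `A(r,s) = ∑_{j<p} (∑_{i<j} i^r) j^s`. -/
lemma Afa (r s : ℕ) : ∑ j ∈ range p, (∑ i ∈ range j, (i:ℚ)^r) * (j:ℚ)^s
    = ∑ l ∈ range (r+1), bernoulli l * ((r+1).choose l : ℚ) * sg p (r+1-l+s) / ((r+1:ℕ):ℚ) := by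
  have h1 : ∀ j : ℕ, (∑ i ∈ range j, (i:ℚ)^r) * (j:ℚ)^s
      = ∑ l ∈ range (r+1), bernoulli l * ((r+1).choose l : ℚ) * (j:ℚ)^(r+1-l+s) / ((r+1:ℕ):ℚ) := by
    intro j
    rw [sum_range_pow j r, Finset.sum_mul]
    refine Finset.sum_congr rfl fun l hl => ?_
    rw [Finset.mem_range] at hl
    rw [pow_add]
    push_cast
    ring
  simp only [h1]
  rw [Finset.sum_comm]
  refine Finset.sum_congr rfl fun l hl => ?_
  rw [sg, ← Finset.sum_div, ← Finset.mul_sum]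

/-- triangle sum swap. -/
lemma swapL (n : ℕ) (g : ℕ → ℕ → ℚ) :
    ∑ a ∈ range (n+1), ∑ l ∈ range (a+1), g a l
    = ∑ l ∈ range (n+1), ∑ a ∈ Finset.Ico l (n+1), g a l := by
  have h1 : ∀ a ∈ range (n+1), ∑ l ∈ range (a+1), g a l
      = ∑ l ∈ range (n+1), if l ≤ a then g a l else 0 := by
    intro a ha
    rw [Finset.mem_range] at ha
    rw [← Finset.sum_filter]
    refine (Finset.sum_congr ?_ fun _ _ => rfl)
    ext l
    simp only [Finset.mem_range, Finset.mem_filter]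
    omega
  rw [Finset.sum_congr rfl h1, Finset.sum_comm]
  refine Finset.sum_congr rfl fun l hl => ?_
  rw [← Finset.sum_filter]
  refine (Finset.sum_congr ?_ fun _ _ => rfl)
  ext a
  simp only [Finset.mem_range, Finset.mem_filter, Finset.mem_Ico]
  omega

/-- the c-coefficients. -/
def cq (n l : ℕ) : ℚ := ∑ a ∈ Finset.Ico l (n+1), ((a+1).choose l : ℚ) / ((a+1:ℕ):ℚ)

/-- the main exact identity `(★)`. -/
lemma Dstar (n : ℕ) : ∑ a ∈ range (n+1), sg p a * sg p (n-a)
    = ((n+1:ℕ):ℚ) * sg p n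
      + 2 * ∑ l ∈ range (n+1), cq n l * bernoulli l * sg p (n+1-l) := by
  have step1 : ∀ a ∈ range (n+1), sg p a * sg p (n-a)
      = (∑ j ∈ range p, (∑ i ∈ range j, (i:ℚ)^a) * (j:ℚ)^(n-a))
        + (∑ j ∈ range p, (∑ i ∈ range j, (i:ℚ)^(n-a)) * (j:ℚ)^a) + sg p n := by
    intro a ha
    rw [Finset.mem_range] at ha
    rw [sg, sg, dc a (n-a) p, Finset.sum_add_distrib, Finset.sum_add_distrib]
    rw [show a + (n-a) = n from by omega, sg]
  rw [Finset.sum_congr rfl step1]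
  rw [Finset.sum_add_distrib, Finset.sum_add_distrib, Finset.sum_const, Finset.card_range]
  have refl1 : ∑ a ∈ range (n+1), ∑ j ∈ range p, (∑ i ∈ range j, (i:ℚ)^(n-a)) * (j:ℚ)^a
      = ∑ a ∈ range (n+1), ∑ j ∈ range p, (∑ i ∈ range j, (i:ℚ)^a) * (j:ℚ)^(n-a) := by
    rw [← Finset.sum_range_reflect]
    refine Finset.sum_congr rfl fun a ha => ?_
    rw [Finset.mem_range] at ha
    rw [show n + 1 - 1 - a = n - a from by omega, show n - (n-a) = a from by omega]
  rw [refl1]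
  have hAfa : ∀ a ∈ range (n+1), ∑ j ∈ range p, (∑ i ∈ range j, (i:ℚ)^a) * (j:ℚ)^(n-a)
      = ∑ l ∈ range (a+1), bernoulli l * ((a+1).choose l : ℚ) * sg p (n+1-l) / ((a+1:ℕ):ℚ) := by
    intro a ha
    rw [Finset.mem_range] at ha
    rw [Afa a (n-a)]
    refine Finset.sum_congr rfl fun l hl => ?_
    rw [Finset.mem_range] at hl
    rw [show a + 1 - l + (n-a) = n+1-l from by omega]
  rw [Finset.sum_congr rfl hAfa, swapL n (fun a l => bernoulli l * ((a+1).choose l : ℚ) * sg p (n+1-l) / ((a+1:ℕ):ℚ))]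
  have : ∀ l ∈ range (n+1), ∑ a ∈ Finset.Ico l (n+1),
      bernoulli l * ((a+1).choose l : ℚ) * sg p (n+1-l) / ((a+1:ℕ):ℚ)
      = cq n l * bernoulli l * sg p (n+1-l) := by
    intro l hl
    rw [cq, Finset.sum_mul, Finset.sum_mul]
    refine Finset.sum_congr rfl fun a ha => ?_
    ring
  rw [Finset.sum_congr rfl this]
  push_cast
  ring

omit hpf in
lemma cq_one {n : ℕ} (hn : 1 ≤ n) : cq n 1 = n := by
  rw [cq]
  have h1 : ∀ a ∈ Finset.Ico 1 (n+1), ((a+1).choose 1 : ℚ) / ((a+1:ℕ):ℚ) = 1 := by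
    intro a ha
    rw [Nat.choose_one_right]
    rw [div_self (by positivity)]
  rw [Finset.sum_congr rfl h1, Finset.sum_const, Nat.card_Ico]
  simp

omit hpf in
lemma cq_top (n : ℕ) : cq n n = 1 := by
  rw [cq, Nat.Ico_succ_singleton, Finset.sum_singleton, Nat.choose_succ_self_right]
  exact div_self (by positivity)

omit hpf in
lemma cq_closed (n l : ℕ) (h : l + 1 ≤ n) :
    cq n (l+1) = (((n+1).choose (l+1) : ℚ) - 1) / ((l+1:ℕ):ℚ) := by
  have h1 : ∀ a ∈ Finset.Ico (l+1) (n+1), ((a+1).choose (l+1) : ℚ) / ((a+1:ℕ):ℚ)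
      = (a.choose l : ℚ) / ((l+1:ℕ):ℚ) := by
    intro a ha
    have hrec := Nat.add_one_mul_choose_eq a l
    have hQ : ((a:ℚ)+1) * (a.choose l : ℚ) = ((a+1).choose (l+1) : ℚ) * ((l:ℚ)+1) := by
      exact_mod_cast congrArg (Nat.cast : ℕ → ℚ) hrec
    rw [div_eq_div_iff (by positivity) (by positivity)]
    push_cast
    linarith
  rw [cq, Finset.sum_congr rfl h1, ← Finset.sum_div]
  congr 1
  have h2 := Nat.sum_Icc_choose n l
  rw [Finset.Icc_eq_cons_Ioc (by omega), Finset.sum_cons, Nat.choose_self] at h2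
  have h3 : Finset.Ico (l+1) (n+1) = Finset.Ioc l n := by
    ext a
    simp only [Finset.mem_Ico, Finset.mem_Ioc]
    omega
  rw [h3]
  have h4 : ∑ a ∈ Finset.Ioc l n, a.choose l = (n+1).choose (l+1) - 1 := by omega
  rw [← Nat.cast_sum, h4]
  have h5 : 1 ≤ (n+1).choose (l+1) := Nat.choose_pos (by omega)
  push_cast [Nat.cast_sub h5]
  ring

lemma choose_mod : ∀ l, l ≤ p - 2 → ((p-2).choose l : ZMod p) = (-1)^l * ((l : ZMod p)+1) := by
  have hp2 := hpf.out.two_le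
  intro l
  induction l with
  | zero => intro _; simp
  | succ l ih =>
    intro hl
    have hrec := Nat.choose_succ_right_eq (p-2) l
    have hZ : ((p-2).choose (l+1) : ZMod p) * ((l+1 : ℕ) : ZMod p)
        = ((p-2).choose l : ZMod p) * ((p-2-l : ℕ) : ZMod p) := by
      exact_mod_cast congrArg (Nat.cast : ℕ → ZMod p) hrec
    have hsub : ((p-2-l : ℕ) : ZMod p) = -((l : ZMod p)+2) := by
      have h1 : (p-2-l) + (l+2) = p := by omega
      have h2 := congrArg (Nat.cast : ℕ → ZMod p) h1
      push_cast [ZMod.natCast_self] at h2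
      linear_combination h2
    rw [ih (by omega), hsub] at hZ
    have hu : ((l+1 : ℕ) : ZMod p) ≠ 0 := by
      rw [Ne, ZMod.natCast_eq_zero_iff]
      intro hd
      have := Nat.le_of_dvd (by omega) hd
      omega
    refine mul_right_cancel₀ hu ?_
    rw [hZ]
    push_cast
    ring

lemma fermat_dvd {k : ℕ} (h0 : k ≠ 0) (hk : k < p) : (p:ℤ) ∣ ((k:ℤ)^(p-1) - 1) := by
  have hne : ((k : ZMod p)) ≠ 0 := by
    rw [Ne, ZMod.natCast_eq_zero_iff]
    intro hd
    have := Nat.le_of_dvd (by omega) hd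
    omega
  have h1 : ((k : ZMod p))^(p-1) = 1 := ZMod.pow_card_sub_one_eq_one hne
  rw [← ZMod.intCast_zmod_eq_zero_iff_dvd]
  push_cast
  rw [h1]
  ring

/-- `cq (p-3) l ≡ 1 (mod p)` for even `l` with `2 ≤ l ≤ p-3`. -/
lemma cq_cong_even (hp7 : 7 ≤ p) {l : ℕ} (hl2 : 2 ≤ l) (hle : l ≤ p - 3) (hev : Even l) :
    NB p 1 (cq (p-3) l - 1) := by
  obtain ⟨l', rfl⟩ : ∃ l', l = l' + 1 := ⟨l - 1, by omega⟩
  have hC : ((p-2).choose (l'+1) : ZMod p) = ((l'+1 : ℕ) : ZMod p) + 1 := by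
    rw [choose_mod (l'+1) (by omega), (hev.neg_one_pow)]
    push_cast
    ring
  have hdvd : (p:ℤ) ∣ (((p-2).choose (l'+1) : ℤ) - (1 + (l'+1))) := by
    rw [← ZMod.intCast_zmod_eq_zero_iff_dvd]
    push_cast at hC ⊢
    linear_combination hC
  have key : cq (p-3) (l'+1) - 1
      = ((((p-2).choose (l'+1) : ℤ) - (1 + (l'+1)) : ℤ) : ℚ) / ((l'+1 : ℕ) : ℚ) := by
    rw [cq_closed (p-3) l' (by omega), show p - 3 + 1 = p - 2 from by omega]
    push_cast
    field_simp
    ring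
  rw [key]
  exact nb_div_nat (nb_int_dvd hdvd) (by omega) (by omega)

lemma norm_natCast_eq_one' {k : ℕ} (h : ¬ p ∣ k) : ‖((k : ℚ) : ℚ_[p])‖ = 1 := by
  have h1 : ‖((k : ℤ) : ℚ_[p])‖ ≤ 1 := Padic.norm_int_le_one _
  have h2 : ¬ ‖((k : ℤ) : ℚ_[p])‖ < 1 := by
    rw [Padic.norm_intCast_lt_one_iff]
    exact fun hd => h (by exact_mod_cast hd)
  rw [Rat.cast_natCast]
  exact_mod_cast le_antisymm h1 (not_lt.mp h2)

lemma nb_p_mul_bern {m : ℕ} (hm : m ≤ p - 2) : NB p 1 ((p:ℚ) * bernoulli m) := by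
  have := nb_mul' (nb_p_pow (p := p) 1) (bern_int m hm)
  simpa using this

/-- `H_{p-2} = ∑_{a=0}^{p-3} 1/(a+1) ≡ 1 (mod p)`. -/
lemma cq0_cong (hp7 : 7 ≤ p) : NB p 1 (cq (p-3) 0 - 1) := by
  have hprime := hpf.out
  have hodd : p % 2 = 1 := Nat.odd_iff.mp (hprime.odd_of_ne_two (by omega))
  obtain ⟨q, hpq⟩ : ∃ q, p = q + 2 := ⟨p - 2, by omega⟩
  have hq5 : 5 ≤ q := by omega
  -- cq (p-3) 0 as a sum of reciprocals
  have hIco : Finset.Ico 0 (p-3+1) = Finset.range q := by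
    rw [show p - 3 + 1 = q from by omega, Nat.Ico_zero_eq_range]
  have hcq : cq (p-3) 0 = ∑ a ∈ Finset.range q, ((a+1:ℕ):ℚ)⁻¹ := by
    rw [cq, hIco]
    refine Finset.sum_congr rfl fun a ha => ?_
    rw [Nat.choose_zero_right]
    push_cast
    rw [one_div]
  -- W = ∑_{a<q} (a+1)^(p-2)
  set W : ℚ := ∑ a ∈ Finset.range q, ((a+1:ℕ):ℚ)^(p-2) with hW
  -- step A : cq - W ≡ 0 (mod p)
  have hA : NB p 1 (cq (p-3) 0 - W) := by
    rw [hcq, hW, ← Finset.sum_sub_distrib]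
    refine nb_sum ?_
    intro a ha
    rw [Finset.mem_range] at ha
    have hne : ((a+1:ℕ):ℚ) ≠ 0 := by positivity
    have key : ((a+1:ℕ):ℚ)⁻¹ - ((a+1:ℕ):ℚ)^(p-2)
        = ((1 - ((a+1:ℕ):ℤ)^(p-1) : ℤ) : ℚ) / ((a+1:ℕ):ℚ) := by
      rw [show p - 1 = (p-2) + 1 from by omega]
      push_cast
      field_simp
      ring
    rw [key]
    refine nb_div_nat (nb_int_dvd ?_) (by omega) (by omega)
    have h5 := (dvd_neg).mpr (fermat_dvd (p := p) (k := a+1) (by omega) (by omega))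
    rw [neg_sub] at h5
    exact h5
  -- step B : W ≡ 1 (mod p)
  have hsg : W = sg p (p-2) - ((p-1:ℕ):ℚ)^(p-2) := by
    simp only [hW, show p - 2 = q from by omega, show p - 1 = q + 1 from by omega]
    rw [sg, show p = (q+1)+1 from by omega, Finset.sum_range_succ, Finset.sum_range_succ']
    push_cast [zero_pow (show q ≠ 0 from by omega)]
    ring
  have hB : NB p 1 (W - 1) := by
    have h1 : NB p 1 (sg p (p-2)) := dict1 (by omega) (by omega)
    have h2 : NB p 1 ((((p-1:ℕ):ℤ)^(p-2) + 1 : ℤ) : ℚ) := by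
      refine nb_int_dvd ?_
      rw [← ZMod.intCast_zmod_eq_zero_iff_dvd]
      push_cast
      have hm1 : (((p-1:ℕ)) : ZMod p) = -1 := by
        have h3 := congrArg (Nat.cast : ℕ → ZMod p) (show (p-1) + 1 = p from by omega)
        push_cast [ZMod.natCast_self] at h3
        linear_combination h3
      rw [hm1, (show Odd (p-2) from ⟨p/2 - 1, by omega⟩).neg_one_pow]
      ring
    have h3 := nb_sub h1 h2
    refine nb_of_eq ?_ h3
    rw [hsg]
    push_cast
    ring
  have := nb_trans hA hB
  simpa using this

omit hpf in
lemma refl_ST (n : ℕ) : 2 * (∑ a ∈ range (n+1), (a:ℚ) * bernoulli a * bernoulli (n-a))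
    = (n:ℚ) * ∑ a ∈ range (n+1), bernoulli a * bernoulli (n-a) := by
  have h := Finset.sum_range_reflect (fun a => (a:ℚ) * bernoulli a * bernoulli (n-a)) (n+1)
  simp only [Nat.add_sub_cancel] at h
  rw [two_mul, Finset.mul_sum]
  nth_rewrite 1 [← h]
  rw [← Finset.sum_add_distrib]
  refine Finset.sum_congr rfl fun a ha => ?_
  rw [Finset.mem_range] at ha
  rw [show n - (n - a) = a from by omega]
  rw [Nat.cast_sub (by omega : a ≤ n)]
  ring

omit hpf in
lemma split3 {n : ℕ} (h4 : 4 ≤ n) (f : ℕ → ℚ) :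
    ∑ l ∈ range (n+1), f l = f 0 + f 1 + (∑ i ∈ range (n-2), f (i+2)) + f n := by
  obtain ⟨m, rfl⟩ : ∃ m, n = m + 2 := ⟨n-2, by omega⟩
  rw [Finset.sum_range_succ, Finset.sum_range_succ', Finset.sum_range_succ']
  simp only [Nat.add_sub_cancel]
  ring

omit hpf in
lemma sum_coeff {n : ℕ} (h4 : 4 ≤ n) (hodd : bernoulli (n-1) = 0) :
    ∑ i ∈ range (n-2), ((i:ℚ)+4) * bernoulli (i+2) * bernoulli (n-(i+2))
    = (∑ a ∈ range (n+1), (a:ℚ) * bernoulli a * bernoulli (n-a))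
      + 2 * (∑ a ∈ range (n+1), bernoulli a * bernoulli (n-a))
      - ((n:ℚ)+4) * bernoulli n := by
  have key : ∑ l ∈ range (n+1), ((l:ℚ)+2) * bernoulli l * bernoulli (n-l)
      = (∑ a ∈ range (n+1), (a:ℚ) * bernoulli a * bernoulli (n-a))
        + 2 * (∑ a ∈ range (n+1), bernoulli a * bernoulli (n-a)) := by
    rw [Finset.mul_sum, ← Finset.sum_add_distrib]
    refine Finset.sum_congr rfl fun a ha => ?_
    ring
  rw [← key, split3 h4 (fun l => ((l:ℚ)+2) * bernoulli l * bernoulli (n-l))]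
  rw [bernoulli_zero, bernoulli_one, Nat.sub_zero, Nat.sub_self, hodd, bernoulli_zero]
  have : ∀ i ∈ range (n-2), ((i:ℚ)+2+2) * bernoulli (i+2) * bernoulli (n-(i+2))
      = ((i:ℚ)+4) * bernoulli (i+2) * bernoulli (n-(i+2)) := by
    intro i hi
    ring
  push_cast
  rw [Finset.sum_congr rfl this]
  ring

lemma nb_cancel_sq {x : ℚ} (h : NB p 3 ((p:ℚ)^2 * x)) : NB p 1 x := by
  unfold NB at *
  rw [Rat.cast_mul, norm_mul, Rat.cast_pow, Rat.cast_natCast] at h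
  have hn : ‖((p : ℚ_[p]))^2‖ = (p:ℝ)^(-2:ℤ) := by
    rw [← zpow_natCast, Padic.norm_p_zpow]
    norm_num
  rw [hn] at h
  have hp0 : (0:ℝ) < (p:ℝ) := by
    have := hpf.out.two_le; positivity
  have h2 : (p:ℝ)^(-2:ℤ) * ‖(x : ℚ_[p])‖ ≤ (p:ℝ)^(-2:ℤ) * (p:ℝ)^(-(1:ℕ):ℤ) := by
    calc (p:ℝ)^(-2:ℤ) * ‖(x : ℚ_[p])‖ ≤ (p:ℝ)^(-(3:ℕ):ℤ) := h
    _ = (p:ℝ)^(-2:ℤ) * (p:ℝ)^(-(1:ℕ):ℤ) := by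
        rw [← zpow_add₀ (ne_of_gt hp0)]
        norm_num
  exact le_of_mul_le_mul_left h2 (zpow_pos hp0 _)

lemma main_cong (hp7 : 7 ≤ p) :
    NB p 1 ((∑ a ∈ range (p-3+1), (a:ℚ) * bernoulli a * bernoulli (p-3-a))
      + 3 * ∑ a ∈ range (p-3+1), bernoulli a * bernoulli (p-3-a)) := by
  have hprime := hpf.out
  have hoddp : p % 2 = 1 := Nat.odd_iff.mp (hprime.odd_of_ne_two (by omega))
  set n := p - 3 with hn
  have hn4 : 4 ≤ n := by omega
  have hp3 : 2 < p := by omega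
  set S := ∑ a ∈ range (n+1), (a:ℚ) * bernoulli a * bernoulli (n-a) with hS
  set T := ∑ a ∈ range (n+1), bernoulli a * bernoulli (n-a) with hT
  have hncast : (n:ℚ) = (p:ℚ) - 3 := by
    rw [hn, Nat.cast_sub (by omega)]
    norm_num
  have hBn1 : bernoulli (n-1) = 0 :=
    bern_odd_zero (Nat.odd_iff.mpr (by omega)) (by omega)
  have hBp2 : bernoulli (p-2) = 0 :=
    bern_odd_zero (Nat.odd_iff.mpr (by omega)) (by omega)
  have htwo : NB p 0 (2:ℚ) := nb_of_eq (by norm_num) (nb_natCast 2)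
  have hhalf : NB p 0 ((2:ℚ)⁻¹) := by
    have := nb_inv_nat (p := p) (m := 2) (by norm_num) (by omega)
    exact nb_of_eq (by norm_num) this
  -- Step 1 : D ≡ p² T (mod p³)
  have step1 : NB p 3 ((∑ a ∈ range (n+1), sg p a * sg p (n-a)) - (p:ℚ)^2 * T) := by
    rw [hT, Finset.mul_sum, ← Finset.sum_sub_distrib]
    refine nb_sum ?_
    intro a ha
    rw [Finset.mem_range] at ha
    have h1 : NB p 1 (sg p a) := dict1 hp3 (by omega)
    have h2 : NB p 2 (sg p (n-a) - (p:ℚ) * bernoulli (n-a)) := dict2 hp3 (by omega)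
    have h3 : NB p 1 ((p:ℚ) * bernoulli (n-a)) := nb_p_mul_bern (by omega)
    have h4 : NB p 2 (sg p a - (p:ℚ) * bernoulli a) := dict2 hp3 (by omega)
    have h5 := nb_add (nb_mul h1 h2) (nb_mul h3 h4)
    exact nb_of_eq (by ring) h5
  -- Step 2 : the exact identity
  have hD := Dstar (p := p) n
  have hsplit := split3 hn4 (fun l => cq n l * bernoulli l * sg p (n+1-l))
  -- Term l = 1 (exact)
  have hF1 : cq n 1 * bernoulli 1 * sg p (n+1-1) = -((n:ℚ)/2) * sg p n := by
    rw [cq_one (by omega), bernoulli_one, show n+1-1 = n from by omega]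
    ring
  -- Term l = n
  have hd1 := dict3 (p := p) (m := 1) (by omega) (by omega)
  have hd1' : NB p 3 (sg p 1 - ((p:ℚ) * (-1/2) + (p:ℚ)^2/2)) := by
    refine nb_of_eq ?_ hd1
    rw [bernoulli_one, show (1:ℕ)-1 = 0 from rfl, bernoulli_zero]
    push_cast
    ring
  have hFn : NB p 3 (cq n n * bernoulli n * sg p (n+1-n)
      - bernoulli n * ((p:ℚ) * (-1/2) + (p:ℚ)^2/2)) := by
    have h2 := nb_mul'' (bern_int n (by omega)) hd1'
    refine nb_of_eq ?_ h2
    rw [cq_top, show n+1-n = 1 from by omega]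
    ring
  -- Term l = 0
  have hcq0 : NB p 1 (cq n 0 - 1) := by rw [hn]; exact cq0_cong hp7
  have hcq0' : NB p 0 (cq n 0) :=
    nb_of_eq (by ring) (nb_add (nb_of_le (by omega) hcq0) nb_one)
  have hdp2 : NB p 3 (sg p (p-2) - (p:ℚ)^2 * ((p-2:ℕ):ℚ) * bernoulli n / 2) := by
    have h0 := dict3 (p := p) (m := p-2) (by omega) (by omega)
    refine nb_of_eq ?_ h0
    rw [hBp2, show p-2-1 = n from by omega]
    ring
  have hwp2 : ((p-2:ℕ):ℚ) = (p:ℚ) - 2 := by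
    rw [Nat.cast_sub (by omega)]
    norm_num
  have hF0 : NB p 3 (cq n 0 * bernoulli 0 * sg p (n+1-0) + (p:ℚ)^2 * bernoulli n) := by
    have piece1 : NB p 3 (cq n 0 * (sg p (p-2) - (p:ℚ)^2 * ((p-2:ℕ):ℚ) * bernoulli n / 2)) :=
      nb_mul'' hcq0' hdp2
    have hin : NB p 1 (((p-2:ℕ):ℚ) * (cq n 0 - 1) + (p:ℚ)) := by
      refine nb_add (nb_mul'' (nb_natCast _) hcq0) ?_
      exact nb_of_eq (by ring) (nb_p_pow (p := p) 1)
    have piece2 : NB p 3 ((p:ℚ)^2 * ((bernoulli n * (2:ℚ)⁻¹) * (((p-2:ℕ):ℚ) * (cq n 0 - 1) + (p:ℚ)))) := by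
      have := nb_mul (nb_p_pow (p := p) 2) (nb_mul'' (nb_mul'' (bern_int n (by omega)) hhalf) hin)
      exact nb_of_eq (by norm_num) this
    have hsum := nb_add piece1 piece2
    refine nb_of_eq ?_ hsum
    rw [show n+1-0 = p-2 from by omega, bernoulli_zero, hwp2]
    field_simp
    ring
  -- generic terms l = i+2, 2 ≤ l ≤ n-1
  have hgen : ∀ i ∈ range (n-2), NB p 3 ((cq n (i+2) * bernoulli (i+2) * sg p (n+1-(i+2)))
      + (p:ℚ)^2 * (((i:ℚ)+4) * bernoulli (i+2) * bernoulli (n-(i+2))) / 2) := by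
    intro i hi
    rw [Finset.mem_range] at hi
    rcases Nat.even_or_odd (i+2) with hev | hodd
    · -- even case
      have hB0 : bernoulli (n+1-(i+2)) = 0 := by
        refine bern_odd_zero (Nat.odd_iff.mpr ?_) (by omega)
        have h2 : (i+2) % 2 = 0 := Nat.even_iff.mp hev
        omega
      have hd := dict3 (p := p) (m := n+1-(i+2)) (by omega) (by omega)
      have hd' : NB p 3 (sg p (n+1-(i+2))
          - (p:ℚ)^2 * ((n+1-(i+2):ℕ):ℚ) * bernoulli (n-(i+2)) / 2) := by
        refine nb_of_eq ?_ hd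
        rw [hB0, show n+1-(i+2)-1 = n-(i+2) from by omega]
        ring
      have hcql : NB p 1 (cq n (i+2) - 1) := by
        rw [hn]
        refine cq_cong_even hp7 (by omega) (by omega) ?_
        exact hev
      have hcql' : NB p 0 (cq n (i+2)) :=
        nb_of_eq (by ring) (nb_add (nb_of_le (by omega) hcql) nb_one)
      have piece1 : NB p 3 (cq n (i+2) * bernoulli (i+2) * (sg p (n+1-(i+2))
          - (p:ℚ)^2 * ((n+1-(i+2):ℕ):ℚ) * bernoulli (n-(i+2)) / 2)) := by
        have h0 := nb_mul'' (nb_mul'' hcql' (bern_int (i+2) (by omega))) hd'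
        exact nb_of_eq (by ring) h0
      have piece2 : NB p 3 ((cq n (i+2) - 1)
          * ((p:ℚ)^2 * (((n+1-(i+2):ℕ):ℚ) * bernoulli (i+2) * bernoulli (n-(i+2)) / 2))) := by
        have hrest : NB p 0 (((n+1-(i+2):ℕ):ℚ) * bernoulli (i+2) * bernoulli (n-(i+2)) / 2) := by
          have h0 := nb_mul'' (nb_mul'' (nb_mul'' (nb_natCast (n+1-(i+2)))
            (bern_int (i+2) (by omega))) (bern_int (n-(i+2)) (by omega))) hhalf
          exact nb_of_eq (by rw [div_eq_mul_inv]) h0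
        have h1 := nb_mul hcql (nb_mul' (nb_p_pow (p := p) 2) hrest)
        exact nb_of_eq (by norm_num) h1
      have piece3 : NB p 3 ((p:ℚ)^3 * (bernoulli (i+2) * bernoulli (n-(i+2)) * (2:ℚ)⁻¹)) :=
        nb_mul' (nb_p_pow 3) (nb_mul'' (nb_mul'' (bern_int (i+2) (by omega))
          (bern_int (n-(i+2)) (by omega))) hhalf)
      have hw : ((n+1-(i+2):ℕ):ℚ) = (p:ℚ) - (((i:ℚ)+2) + 2) := by
        rw [show n+1-(i+2) = p - (i+4) from by omega, Nat.cast_sub (by omega)]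
        push_cast
        ring
      have hsum := nb_add (nb_add piece1 piece2) piece3
      refine nb_of_eq ?_ hsum
      rw [hw]
      push_cast
      ring
    · -- odd case : both summands vanish
      have hBl : bernoulli (i+2) = 0 := bern_odd_zero hodd (by omega)
      refine nb_of_eq ?_ (nb_zero 3)
      rw [hBl]
      ring
  -- sum the generic congruences
  have hgensum : NB p 3 ((∑ i ∈ range (n-2), cq n (i+2) * bernoulli (i+2) * sg p (n+1-(i+2)))
      + (p:ℚ)^2 * (∑ i ∈ range (n-2), ((i:ℚ)+4) * bernoulli (i+2) * bernoulli (n-(i+2))) / 2) := by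
    have h0 := nb_sum hgen
    refine nb_of_eq ?_ h0
    rw [Finset.sum_add_distrib, Finset.mul_sum, Finset.sum_div]
  -- dictionary at n
  have hdn : NB p 3 (sg p n - (p:ℚ) * bernoulli n) := by
    have h0 := dict3 (p := p) (m := n) (by omega) (by omega)
    refine nb_of_eq ?_ h0
    rw [hBn1]
    ring
  -- grand assembly at level p³
  have final3 : NB p 3 ((p:ℚ)^2 * (T + bernoulli n
      + ∑ i ∈ range (n-2), ((i:ℚ)+4) * bernoulli (i+2) * bernoulli (n-(i+2)))) := by
    have hA2 : NB p 3 (2 * (cq n 0 * bernoulli 0 * sg p (n+1-0) + (p:ℚ)^2 * bernoulli n)) :=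
      nb_mul'' htwo hF0
    have hA3 : NB p 3 (2 * (cq n n * bernoulli n * sg p (n+1-n)
        - bernoulli n * ((p:ℚ) * (-1/2) + (p:ℚ)^2/2))) := nb_mul'' htwo hFn
    have hA4 : NB p 3 (2 * ((∑ i ∈ range (n-2), cq n (i+2) * bernoulli (i+2) * sg p (n+1-(i+2)))
        + (p:ℚ)^2 * (∑ i ∈ range (n-2), ((i:ℚ)+4) * bernoulli (i+2) * bernoulli (n-(i+2))) / 2)) :=
      nb_mul'' htwo hgensum
    have total := nb_add (nb_add (nb_add (nb_add (nb_neg step1) hdn) hA2) hA4) hA3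
    refine nb_of_eq ?_ total
    rw [hD, hsplit, hF1]
    push_cast
    ring
  have final1 : NB p 1 (T + bernoulli n
      + ∑ i ∈ range (n-2), ((i:ℚ)+4) * bernoulli (i+2) * bernoulli (n-(i+2))) :=
    nb_cancel_sq final3
  -- conclude S + 3T ≡ 0 (mod p)
  have hpBn : NB p 1 ((p:ℚ) * bernoulli n) := nb_p_mul_bern (by omega)
  have goal1 := nb_add final1 hpBn
  refine nb_of_eq ?_ goal1
  rw [sum_coeff hn4 hBn1, ← hS, ← hT, hncast]
  ring

end BWC

/-- For every prime p ≥ 7, ∑_{a=0}^{p−3} a·B_a·B_{p−3−a} ≡ 0 (mod p). -/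
theorem bernoulli_weighted_conv_p3 (p : ℕ) (hp : p.Prime) (h7 : 7 ≤ p) :
    (p : ℤ) ∣
      (∑ a ∈ Finset.range (p - 2), (a : ℚ) * bernoulli a * bernoulli (p - 3 - a)).num := by
  haveI : Fact p.Prime := ⟨hp⟩
  set S := ∑ a ∈ Finset.range (p - 2), (a : ℚ) * bernoulli a * bernoulli (p - 3 - a) with hS
  have hmain := BWC.main_cong (p := p) h7
  have hrefl := BWC.refl_ST (p - 3)
  have hc : ((p-3:ℕ):ℚ) = (p:ℚ) - 3 := by
    rw [Nat.cast_sub (by omega)]; norm_num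
  have h1 : BWC.NB p 1 (((p + 3:ℕ):ℚ) * S) := by
    have h2 := BWC.nb_mul'' (BWC.nb_natCast (p := p) (p-3)) hmain
    refine BWC.nb_of_eq ?_ h2
    rw [hS, show p - 2 = (p-3)+1 from by omega]
    rw [hc] at hrefl
    push_cast [hc]
    linear_combination -3 * hrefl
  have hu : ‖(((p+3:ℕ):ℚ) : ℚ_[p])‖ = 1 := by
    refine BWC.norm_natCast_eq_one' ?_
    intro hd
    have h3 : p ∣ 3 := (Nat.dvd_add_right (dvd_refl p)).mp hd
    have := Nat.le_of_dvd (by norm_num) h3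
    omega
  have hSnorm : ‖((S:ℚ) : ℚ_[p])‖ < 1 := by
    have h4 : ‖((((p+3:ℕ):ℚ) * S : ℚ) : ℚ_[p])‖ ≤ (p:ℝ)^(-(1:ℕ):ℤ) := h1
    rw [Rat.cast_mul, norm_mul, hu, one_mul] at h4
    refine lt_of_le_of_lt h4 ?_
    have hp1 : (1:ℝ) < (p:ℝ) := by exact_mod_cast hp.one_lt
    rw [show (-(1:ℕ):ℤ) = -1 from rfl, zpow_neg_one]
    exact inv_lt_one_of_one_lt₀ hp1
  rw [← Padic.norm_intCast_lt_one_iff]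
  have hden0 : ((S.den:ℕ):ℚ) ≠ 0 := by
    exact_mod_cast S.den_nz
  have hsd : ((S.num : ℤ):ℚ) = S * ((S.den:ℕ):ℚ) := by
    have h5 := (Rat.num_div_den S).symm
    rw [eq_div_iff hden0] at h5
    exact h5.symm
  calc ‖((S.num : ℤ) : ℚ_[p])‖ = ‖((((S.num:ℤ):ℚ)) : ℚ_[p])‖ := by rw [Rat.cast_intCast]
    _ = ‖((S * ((S.den:ℕ):ℚ) : ℚ) : ℚ_[p])‖ := by rw [hsd]
    _ = ‖((S:ℚ):ℚ_[p])‖ * ‖((((S.den:ℕ):ℚ)) : ℚ_[p])‖ := by rw [Rat.cast_mul, norm_mul]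
    _ ≤ ‖((S:ℚ):ℚ_[p])‖ * 1 := by
        refine mul_le_mul_of_nonneg_left ?_ (norm_nonneg _)
        exact BWC.nb0_iff.mp (BWC.nb_natCast S.den)
    _ < 1 := by rw [mul_one]; exact hSnorm
end
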